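/- arXiv:0910.5426 — 5 statements merged into one kernel-verified Lean document; each statement's English description precedes it below -/
import Mathlib

section
/- Let c=(c1,c2):ℝ²→ℝ² be a C¹ cost field and let a=(a1,a2), b=(b1,b2) with a1≤b1 and a2≤b2. For every monotone path γ from a to b one has the Green-type identity cost(γ) = ∫_{a2}^{b2} c2(a1,s) ds + ∫_{a1}^{b1} c1(t,b2) dt − ∬_{B_γ} U(x,y) dx dy, where the first two integrals are the cost of the vertical-then-horizontal two-segment path from a to b and B_γ={(x,y): a1<x<b1, h_γ(x)<y<b2} is the region of the rectangle R_ab lying above γ. -/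
open MeasureTheory Set

/-- A monotone path in the plane: a continuous, piecewise-C¹ map
`p : [0,1] → ℝ²` whose two coordinate derivatives (given by `d`, and valid
outside a finite exceptional set `exc`) are nonnegative. -/
structure MonoPath where
  p : ℝ → ℝ × ℝ
  d : ℝ → ℝ × ℝ
  exc : Set ℝ
  exc_finite : exc.Finite
  cont : ContinuousOn p (Icc 0 1)
  deriv_fst : ∀ t ∈ Icc (0:ℝ) 1 \ exc, HasDerivAt (fun u => (p u).1) (d t).1 t
  deriv_snd : ∀ t ∈ Icc (0:ℝ) 1 \ exc, HasDerivAt (fun u => (p u).2) (d t).2 t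
  d_fst_nonneg : ∀ t ∈ Icc (0:ℝ) 1, 0 ≤ (d t).1
  d_snd_nonneg : ∀ t ∈ Icc (0:ℝ) 1, 0 ≤ (d t).2

/-- The cost of a monotone path under the cost field `c = (c1, c2)`:
`∫₀¹ (c1(γ(t)) γ₁'(t) + c2(γ(t)) γ₂'(t)) dt`. -/
noncomputable def pathCost (c : ℝ × ℝ → ℝ × ℝ) (γ : MonoPath) : ℝ :=
  ∫ t in (0:ℝ)..1, ((c (γ.p t)).1 * (γ.d t).1 + (c (γ.p t)).2 * (γ.d t).2)

/-- `γ` is a monotone path from `a` to `b`, staying in the rectangle `[a₁,b₁]×[a₂,b₂]`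
(which is `Set.Icc a b` for the product order on `ℝ × ℝ`). -/
def IsMonoPathFromTo (γ : MonoPath) (a b : ℝ × ℝ) : Prop :=
  γ.p 0 = a ∧ γ.p 1 = b ∧ ∀ t ∈ Icc (0:ℝ) 1, γ.p t ∈ Icc a b

/-- `U(x) = ∂c1/∂x2 (x) − ∂c2/∂x1 (x)`. -/
noncomputable def Ucurl (c : ℝ × ℝ → ℝ × ℝ) (x : ℝ × ℝ) : ℝ :=
  deriv (fun y => (c (x.1, y)).1) x.2 - deriv (fun s => (c (s, x.2)).2) x.1

/-- Hypograph function of a monotone path: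
`h_γ(x) = sup { γ₂(t) : t ∈ [0,1], γ₁(t) ≤ x }`. -/
noncomputable def hypoFun (γ : MonoPath) (x : ℝ) : ℝ :=
  sSup ((fun t => (γ.p t).2) '' {t | t ∈ Icc (0:ℝ) 1 ∧ (γ.p t).1 ≤ x})

/-- Hypograph region of a monotone path from `a` to `b`:
`A_γ = {(x,y) : a₁ < x < b₁, a₂ < y < h_γ(x)}`. -/
def hypoRegion (γ : MonoPath) (a b : ℝ × ℝ) : Set (ℝ × ℝ) :=
  {q | a.1 < q.1 ∧ q.1 < b.1 ∧ a.2 < q.2 ∧ q.2 < hypoFun γ q.1}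

lemma aux_deriv_nonneg {F : ℝ → ℝ} (hm : Monotone F) (t : ℝ) : 0 ≤ deriv F t := by
  by_cases hd : DifferentiableAt ℝ F t
  · have h := hd.hasDerivAt
    rw [hasDerivAt_iff_tendsto_slope] at h
    have h' : Filter.Tendsto (slope F t) (nhdsWithin t (Ioi t)) (nhds (deriv F t)) :=
      h.mono_left (nhdsWithin_mono _ (by intro x hx; exact ne_of_gt hx))
    refine ge_of_tendsto h' ?_
    filter_upwards [self_mem_nhdsWithin] with x hx
    have : 0 < x - t := sub_pos.2 hx
    rw [slope_def_field]
    exact div_nonneg (sub_nonneg.2 (hm (le_of_lt hx))) this.le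
  · simp [deriv_zero_of_not_differentiableAt hd]

lemma aux_deriv_zero_of_const {F : ℝ → ℝ} {t u : ℝ} (htu : t ≠ u)
    (hconst : ∀ v ∈ uIcc t u, F v = F t) : deriv F t = 0 := by
  by_cases hd : DifferentiableAt ℝ F t
  · have hUD : UniqueDiffWithinAt ℝ (uIcc t u) t := by
      rw [uIcc]
      exact uniqueDiffOn_Icc (min_lt_max.2 htu) t ⟨min_le_left t u, le_max_left t u⟩
    have h1 : HasDerivWithinAt F (deriv F t) (uIcc t u) t := hd.hasDerivAt.hasDerivWithinAt
    have h2 : HasDerivWithinAt F 0 (uIcc t u) t :=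
      (hasDerivWithinAt_const t (uIcc t u) (F t)).congr hconst (hconst t left_mem_uIcc)
    rw [← h1.derivWithin hUD, h2.derivWithin hUD]
  · simp [deriv_zero_of_not_differentiableAt hd]

lemma aux_integrableOn_deriv {F : ℝ → ℝ} (hm : Monotone F) :
    IntegrableOn (deriv F) (Ioo (0:ℝ) 1) := by
  have h := hm.ae_hasDerivAt
  have hae : deriv F =ᵐ[volume] fun x => (hm.stieltjesFunction.measure.rnDeriv volume x).toReal :=
    h.mono fun x hx => hx.deriv
  have hint : Integrable (fun x => (hm.stieltjesFunction.measure.rnDeriv volume x).toReal)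
      (volume.restrict (Ioo (0:ℝ) 1)) := by
    refine integrable_toReal_of_lintegral_ne_top
      ((Measure.measurable_rnDeriv _ _).aemeasurable) ?_
    have h1 : ∫⁻ x in Ioo (0:ℝ) 1, hm.stieltjesFunction.measure.rnDeriv volume x ∂volume ≤
        hm.stieltjesFunction.measure (Ioo (0:ℝ) 1) := Measure.setLIntegral_rnDeriv_le _
    exact ne_top_of_le_ne_top
      (((measure_mono Ioo_subset_Icc_self).trans_lt isCompact_Icc.measure_lt_top).ne) h1
  exact hint.congr (ae_restrict_of_ae hae.symm)

lemma aux_det (r : ℝ) :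
    ((ContinuousLinearMap.smulRight (1 : ℝ →L[ℝ] ℝ) r).prodMap
      (ContinuousLinearMap.id ℝ ℝ)).det = r := by
  have : ((ContinuousLinearMap.smulRight (1 : ℝ →L[ℝ] ℝ) r).prodMap
      (ContinuousLinearMap.id ℝ ℝ) : ℝ × ℝ →ₗ[ℝ] ℝ × ℝ) =
      LinearMap.prodMap (r • LinearMap.id) LinearMap.id := by
    ext x <;> simp
  rw [ContinuousLinearMap.det, this]
  rw [← LinearMap.det_toMatrix (Module.Basis.finTwoProd ℝ), Matrix.det_fin_two]
  simp [LinearMap.toMatrix_apply, Module.Basis.finTwoProd]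


lemma aux_gap {E : Set ℝ} (hE : E.Finite) (z : ℝ) :
    ∃ δ > 0, Ioo z (z + δ) ∩ E = ∅ := by
  by_cases h : (E ∩ Ioi z).Nonempty
  · have hfin : (E ∩ Ioi z).Finite := hE.inter_of_left _
    have hm : sInf (E ∩ Ioi z) ∈ E ∩ Ioi z := h.csInf_mem hfin
    refine ⟨sInf (E ∩ Ioi z) - z, sub_pos.2 hm.2, ?_⟩
    ext e
    simp only [mem_inter_iff, mem_Ioo, mem_empty_iff_false, iff_false, not_and]
    intro ⟨he1, he2⟩ heE
    have : sInf (E ∩ Ioi z) ≤ e := csInf_le hfin.bddBelow ⟨heE, he1⟩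
    linarith
  · refine ⟨1, one_pos, ?_⟩
    rw [not_nonempty_iff_eq_empty] at h
    ext e
    simp only [mem_inter_iff, mem_Ioo, mem_empty_iff_false, iff_false, not_and]
    intro ⟨he1, _⟩ heE
    exact absurd (Set.eq_empty_iff_forall_notMem.1 h e ⟨heE, he1⟩) (fun H => H)

lemma aux_monotoneOn {F g : ℝ → ℝ} {E : Set ℝ} (hE : E.Finite)
    (hc : ContinuousOn F (Icc 0 1))
    (hd : ∀ t ∈ Icc (0:ℝ) 1 \ E, HasDerivAt F (g t) t)
    (hg : ∀ t ∈ Icc (0:ℝ) 1, 0 ≤ g t) : MonotoneOn F (Icc (0:ℝ) 1) := by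
  intro x hx y hy hxy
  have key : Icc x y ⊆ {z | F x ≤ F z} := by
    refine IsClosed.Icc_subset_of_forall_exists_gt ?_ (by simp) ?_
    · have h1 : IsClosed (Icc x y ∩ F ⁻¹' (Ici (F x))) :=
        ContinuousOn.preimage_isClosed_of_isClosed
          (hc.mono (Icc_subset_Icc hx.1 hy.2)) isClosed_Icc isClosed_Ici
      have : {z | F x ≤ F z} ∩ Icc x y = Icc x y ∩ F ⁻¹' (Ici (F x)) := by
        ext z; simp [and_comm, mem_preimage]
      rwa [this]
    · rintro z ⟨hz1, hz2⟩ w hw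
      obtain ⟨δ, hδpos, hδ⟩ := aux_gap hE z
      set w' := min (z + δ/2) (min w y) with hw'
      have hzw' : z < w' := by
        simp only [hw', lt_min_iff]
        exact ⟨by linarith, hw, hz2.2⟩
      have hw'y : w' ≤ y := le_trans (min_le_right _ _) (min_le_right _ _)
      have hsub : Icc z w' ⊆ Icc (0:ℝ) 1 := fun v hv =>
        ⟨le_trans (le_trans hx.1 hz2.1) hv.1, le_trans hv.2 (le_trans hw'y hy.2)⟩
      have hmono : MonotoneOn F (Icc z w') := by
        have hdiff : ∀ v ∈ Ioo z w', HasDerivAt F (g v) v := by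
          intro v hv
          refine hd v ⟨hsub ⟨hv.1.le, hv.2.le⟩, ?_⟩
          intro hvE
          have : v ∈ Ioo z (z + δ) ∩ E :=
            ⟨⟨hv.1, lt_of_lt_of_le hv.2 (le_trans (min_le_left _ _) (by linarith))⟩, hvE⟩
          simp [hδ] at this
        refine monotoneOn_of_deriv_nonneg (convex_Icc z w') (hc.mono hsub) ?_ ?_
        · rw [interior_Icc]
          exact fun v hv => ((hdiff v hv).differentiableAt).differentiableWithinAt
        · rw [interior_Icc]
          intro v hv
          rw [(hdiff v hv).deriv]
          exact hg v (hsub ⟨hv.1.le, hv.2.le⟩)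
      refine ⟨w', ?_, ⟨hzw', le_trans (min_le_right _ _) (min_le_left _ _)⟩⟩
      have : F z ≤ F w' := hmono ⟨le_rfl, hzw'.le⟩ ⟨hzw'.le, le_rfl⟩ hzw'.le
      exact le_trans hz1 this
  exact key ⟨hxy, le_rfl⟩

lemma aux_key {F lo hi : ℝ → ℝ} {exc : Set ℝ} (hFc : Continuous F) (hFm : Monotone F)
    (hexc : exc.Finite)
    (hdiff : ∀ t ∈ Ioo (0:ℝ) 1 \ exc, DifferentiableAt ℝ F t)
    (hlo : Continuous lo) (hhi : Continuous hi)
    {m M : ℝ} (hm : ∀ t, m ≤ lo t) (hM : ∀ t, hi t ≤ M)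
    {P : ℝ × ℝ → ℝ} (hP : Continuous P)
    {B : Set (ℝ × ℝ)} (hB : MeasurableSet B)
    (hBsub : B ⊆ Ioo (F 0) (F 1) ×ˢ Ioo m M)
    (himg : ∀ t, t ∈ Ioo (0:ℝ) 1 → t ∉ exc → 0 < deriv F t → F 0 < F t → F t < F 1 →
      ∀ s, lo t < s → s < hi t → (F t, s) ∈ B)
    (hcov : ∀ q ∈ B, ∀ t ∈ Icc (0:ℝ) 1, F t = q.1 → lo t < q.2 ∧ q.2 < hi t) :
    ∫ t in Ioo (0:ℝ) 1, (∫ s in Ioo (lo t) (hi t), P (F t, s)) * deriv F t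
      = ∫ q in B, P q := by
  classical
  set W : ℝ × ℝ → ℝ := fun q => P (F q.1, q.2) * deriv F q.1 with hW
  set T : Set (ℝ × ℝ) := {q | q.1 ∈ Ioo (0:ℝ) 1 ∧ q.2 ∈ Ioo (lo q.1) (hi q.1)} with hTdef
  have hTmem : ∀ q : ℝ × ℝ, q ∈ T ↔ q.1 ∈ Ioo (0:ℝ) 1 ∧ q.2 ∈ Ioo (lo q.1) (hi q.1) :=
    fun q => Iff.rfl
  have hT : MeasurableSet T := by
    have h1 : MeasurableSet {q : ℝ × ℝ | q.1 ∈ Ioo (0:ℝ) 1} :=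
      measurable_fst measurableSet_Ioo
    have h2 : MeasurableSet {q : ℝ × ℝ | lo q.1 < q.2} :=
      measurableSet_lt ((hlo.comp continuous_fst).measurable) measurable_snd
    have h3 : MeasurableSet {q : ℝ × ℝ | q.2 < hi q.1} :=
      measurableSet_lt measurable_snd ((hhi.comp continuous_fst).measurable)
    have he : T = {q : ℝ × ℝ | q.1 ∈ Ioo (0:ℝ) 1} ∩ ({q | lo q.1 < q.2} ∩ {q | q.2 < hi q.1}) := by
      ext q
      simp only [hTdef, mem_setOf_eq, mem_inter_iff, mem_Ioo]
    rw [he]; exact h1.inter (h2.inter h3)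
  have hWmeas : Measurable W :=
    ((hP.comp ((hFc.comp continuous_fst).prodMk continuous_snd)).measurable).mul
      ((measurable_deriv F).comp measurable_fst)
  obtain ⟨C, hC⟩ :=
    (isCompact_Icc.prod isCompact_Icc :
      IsCompact ((Icc (F 0) (F 1)) ×ˢ (Icc m M))).exists_bound_of_continuousOn hP.continuousOn
  set C' : ℝ := max C 0 with hC'
  have hC'0 : (0:ℝ) ≤ C' := le_max_right _ _
  have hPle : ∀ q ∈ T, ‖P (F q.1, q.2)‖ ≤ C' := by
    intro q hq
    refine le_trans (hC _ ⟨⟨hFm hq.1.1.le, hFm hq.1.2.le⟩,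
      ⟨(hm q.1).trans hq.2.1.le, hq.2.2.le.trans (hM q.1)⟩⟩) (le_max_left _ _)
  have hTsub : T ⊆ Ioo (0:ℝ) 1 ×ˢ Ioo m M := fun q hq =>
    ⟨hq.1, ⟨lt_of_le_of_lt (hm q.1) hq.2.1, lt_of_lt_of_le hq.2.2 (hM q.1)⟩⟩
  have hRmeas : MeasurableSet (Ioo (0:ℝ) 1 ×ˢ Ioo m M) :=
    measurableSet_Ioo.prod measurableSet_Ioo
  have hder_int : IntegrableOn (fun q : ℝ × ℝ => C' * deriv F q.1)
      (Ioo (0:ℝ) 1 ×ˢ Ioo m M) := by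
    have h1 : (volume : Measure (ℝ × ℝ)).restrict (Ioo (0:ℝ) 1 ×ˢ Ioo m M) =
        (volume.restrict (Ioo (0:ℝ) 1)).prod (volume.restrict (Ioo m M)) := by
      rw [Measure.volume_eq_prod, Measure.prod_restrict]
    rw [IntegrableOn, h1]
    have hmeas : AEStronglyMeasurable (fun q : ℝ × ℝ => C' * deriv F q.1)
        ((volume.restrict (Ioo (0:ℝ) 1)).prod (volume.restrict (Ioo m M))) :=
      (measurable_const.mul ((measurable_deriv F).comp measurable_fst)).aestronglyMeasurable
    rw [integrable_prod_iff hmeas]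
    refine ⟨Filter.Eventually.of_forall fun t => by simpa using integrable_const (μ := volume.restrict (Ioo m M)) (C' * deriv F t), ?_⟩
    have he : (fun t => ∫ s, ‖C' * deriv F t‖ ∂(volume.restrict (Ioo m M))) =
        fun t => (volume (Ioo m M)).toReal * ‖C' * deriv F t‖ := by
      funext t
      rw [integral_const, measureReal_restrict_apply_univ, smul_eq_mul, measureReal_def]
    rw [he]
    exact (((aux_integrableOn_deriv hFm).const_mul C').norm.const_mul _)
  set D : ℝ × ℝ → ℝ := (Ioo (0:ℝ) 1 ×ˢ Ioo m M).indicator (fun q => C' * deriv F q.1) with hD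
  have hDint : Integrable D := (integrable_indicator_iff hRmeas).2 hder_int
  have hindint : Integrable (T.indicator W) := by
    refine hDint.mono' ((hWmeas.indicator hT).aestronglyMeasurable) ?_
    refine Filter.Eventually.of_forall fun q => ?_
    by_cases hq : q ∈ T
    · rw [indicator_of_mem hq, hD, indicator_of_mem (hTsub hq)]
      calc ‖W q‖ = ‖P (F q.1, q.2)‖ * ‖deriv F q.1‖ := by rw [hW]; exact norm_mul _ _
      _ ≤ C' * ‖deriv F q.1‖ :=
          mul_le_mul_of_nonneg_right (hPle q hq) (norm_nonneg _)
      _ = C' * deriv F q.1 := by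
          rw [Real.norm_eq_abs, abs_of_nonneg (aux_deriv_nonneg hFm q.1)]
    · rw [indicator_of_notMem hq, norm_zero]
      exact indicator_nonneg (fun q _ => mul_nonneg hC'0 (aux_deriv_nonneg hFm q.1)) q
  have hWint : IntegrableOn W T := (integrable_indicator_iff hT).1 hindint
  -- Fubini
  have fub : ∫ q in T, W q
      = ∫ t in Ioo (0:ℝ) 1, (∫ s in Ioo (lo t) (hi t), P (F t, s)) * deriv F t := by
    have e0 : ∫ q in T, W q = ∫ q, T.indicator W q := (integral_indicator hT).symm
    have hindint' : Integrable (T.indicator W) ((volume : Measure ℝ).prod volume) := by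
      rw [← Measure.volume_eq_prod]; exact hindint
    have e1 : ∫ q, T.indicator W q = ∫ t, ∫ s, T.indicator W (t, s) := by
      rw [Measure.volume_eq_prod]
      exact integral_prod _ hindint'
    have e2 : ∀ t : ℝ, (∫ s, T.indicator W (t, s))
        = (Ioo (0:ℝ) 1).indicator
            (fun t => (∫ s in Ioo (lo t) (hi t), P (F t, s)) * deriv F t) t := by
      intro t
      by_cases ht : t ∈ Ioo (0:ℝ) 1
      · have e3 : (fun s => T.indicator W (t, s)) =
            (Ioo (lo t) (hi t)).indicator (fun s => P (F t, s) * deriv F t) := by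
          funext s
          by_cases hs : s ∈ Ioo (lo t) (hi t)
          · rw [indicator_of_mem ((hTmem (t,s)).2 ⟨ht, hs⟩), indicator_of_mem hs]
          · rw [indicator_of_notMem (fun hmem => hs ((hTmem (t,s)).1 hmem).2),
              indicator_of_notMem hs]
        rw [e3, integral_indicator measurableSet_Ioo, indicator_of_mem ht,
          integral_mul_const]
      · have e3 : (fun s => T.indicator W (t, s)) = fun _ => (0:ℝ) :=
          funext fun s => indicator_of_notMem (fun hmem => ht ((hTmem (t,s)).1 hmem).1) _
        rw [e3, indicator_of_notMem ht, integral_zero]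
    rw [e0, e1]
    have e4 : (fun t => ∫ s, T.indicator W (t, s)) = (Ioo (0:ℝ) 1).indicator
        (fun t => (∫ s in Ioo (lo t) (hi t), P (F t, s)) * deriv F t) := funext e2
    rw [e4, integral_indicator measurableSet_Ioo]
  -- restrict to the positive-derivative part
  set Tp : Set (ℝ × ℝ) := T ∩ {q | 0 < deriv F q.1 ∧ q.1 ∉ exc} with hTp
  have hTpmeas : MeasurableSet Tp := by
    refine hT.inter (MeasurableSet.inter ?_ ?_)
    · exact measurableSet_lt measurable_const ((measurable_deriv F).comp measurable_fst)
    · exact ((hexc.measurableSet.preimage measurable_fst)).compl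
  have hexc_null : (volume : Measure (ℝ × ℝ)) (exc ×ˢ (univ : Set ℝ)) = 0 := by
    rw [Measure.volume_eq_prod, Measure.prod_prod, hexc.countable.measure_zero, zero_mul]
  have hsplit : ∫ q in T, W q = ∫ q in Tp, W q := by
    have hun : T = Tp ∪ (T \ Tp) := (union_diff_cancel inter_subset_left).symm
    have hz : ∫ q in T \ Tp, W q = 0 := by
      refine integral_eq_zero_of_ae ?_
      rw [Filter.EventuallyEq, ae_restrict_iff' (hT.diff hTpmeas)]
      filter_upwards [measure_eq_zero_iff_ae_notMem.1 hexc_null] with q hq hqT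
      by_cases hd0 : 0 < deriv F q.1
      · exact absurd ⟨hqT.1, hd0, fun hex => hq ⟨hex, trivial⟩⟩ hqT.2
      · have : deriv F q.1 = 0 := le_antisymm (not_lt.1 hd0) (aux_deriv_nonneg hFm q.1)
        simp [hW, this]
    have hadd := setIntegral_union (μ := (volume : Measure (ℝ × ℝ))) (f := W)
      (disjoint_sdiff_self_right : Disjoint Tp (T \ Tp)) (hT.diff hTpmeas)
      (hWint.mono_set inter_subset_left) (hWint.mono_set diff_subset)
    calc ∫ q in T, W q = ∫ q in Tp ∪ (T \ Tp), W q := by rw [← hun]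
    _ = (∫ q in Tp, W q) + ∫ q in T \ Tp, W q := hadd
    _ = ∫ q in Tp, W q := by rw [hz, add_zero]
  -- change of variables
  set Φ : ℝ × ℝ → ℝ × ℝ := Prod.map F id with hΦ
  set A : ℝ × ℝ → (ℝ × ℝ →L[ℝ] ℝ × ℝ) := fun q =>
    (ContinuousLinearMap.smulRight (1 : ℝ →L[ℝ] ℝ) (deriv F q.1)).prodMap
      (ContinuousLinearMap.id ℝ ℝ) with hA
  have hΦd : ∀ q ∈ Tp, HasFDerivWithinAt Φ (A q) Tp q := by
    rintro q hq
    have hdF : DifferentiableAt ℝ F q.1 := by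
      by_contra h
      have h2 : (0:ℝ) < deriv F q.1 := hq.2.1
      rw [deriv_zero_of_not_differentiableAt h] at h2
      exact lt_irrefl 0 h2
    have h1 : HasFDerivAt F (ContinuousLinearMap.smulRight (1 : ℝ →L[ℝ] ℝ) (deriv F q.1)) q.1 :=
      hdF.hasDerivAt.hasFDerivAt
    have h2 : HasFDerivAt (id : ℝ → ℝ) (ContinuousLinearMap.id ℝ ℝ) q.2 := hasFDerivAt_id _
    exact (h1.prodMap q h2).hasFDerivWithinAt
  have hΦinj : InjOn Φ Tp := by
    rintro ⟨t, s⟩ ht ⟨t', s'⟩ ht' heq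
    have h1 : F t = F t' := congrArg Prod.fst heq
    have h2 : s = s' := congrArg Prod.snd heq
    have hd1 : (0:ℝ) < deriv F t := ht.2.1
    have hd2 : (0:ℝ) < deriv F t' := ht'.2.1
    rcases lt_trichotomy t t' with h | h | h
    · exfalso
      have hconst : ∀ v ∈ uIcc t t', F v = F t := by
        intro v hv
        rw [uIcc_of_le h.le] at hv
        exact le_antisymm (h1 ▸ hFm hv.2) (hFm hv.1)
      exact (ne_of_gt hd1) (aux_deriv_zero_of_const h.ne hconst)
    · rw [h, h2]
    · exfalso
      have hconst : ∀ v ∈ uIcc t' t, F v = F t' := by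
        intro v hv
        rw [uIcc_of_le h.le] at hv
        exact le_antisymm (h1.symm ▸ hFm hv.2) (hFm hv.1)
      exact (ne_of_gt hd2) (aux_deriv_zero_of_const h.ne hconst)
  have hCoV : ∫ q in Tp, W q = ∫ q in Φ '' Tp, P q := by
    rw [integral_image_eq_integral_abs_det_fderiv_smul volume hTpmeas hΦd hΦinj P]
    refine setIntegral_congr_fun hTpmeas fun q hq => ?_
    have hd1 : (0:ℝ) < deriv F q.1 := hq.2.1
    have hdet : |(A q).det| = deriv F q.1 := by
      have : (A q).det = deriv F q.1 := aux_det (deriv F q.1)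
      rw [this, abs_of_pos hd1]
    calc W q = P (F q.1, q.2) * deriv F q.1 := rfl
    _ = |(A q).det| • P (Φ q) := by
        rw [hdet, smul_eq_mul, mul_comm]
        rfl
  -- image of Tp is a.e. equal to B
  have h1 : volume ((Φ '' Tp) \ B) = 0 := by
    have hsub : (Φ '' Tp) \ B ⊆ ({F 0, F 1} : Set ℝ) ×ˢ (univ : Set ℝ) := by
      rintro q ⟨⟨⟨t, s⟩, htp, rfl⟩, hqB⟩
      have htT : (t, s) ∈ T := htp.1
      have ht01 : t ∈ Ioo (0:ℝ) 1 := htT.1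
      have hs : s ∈ Ioo (lo t) (hi t) := htT.2
      have hd : 0 < deriv F t := htp.2.1
      have hex : t ∉ exc := htp.2.2
      refine mem_prod.2 ⟨?_, trivial⟩
      rw [mem_insert_iff, mem_singleton_iff]
      show F t = F 0 ∨ F t = F 1
      by_cases hF0 : F 0 < F t
      · by_cases hF1 : F t < F 1
        · exact absurd (himg t ht01 hex hd hF0 hF1 s hs.1 hs.2) hqB
        · exact Or.inr (le_antisymm (hFm ht01.2.le) (not_lt.1 hF1))
      · exact Or.inl (le_antisymm (not_lt.1 hF0) (hFm ht01.1.le))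
    refine measure_mono_null hsub ?_
    rw [Measure.volume_eq_prod, Measure.prod_prod,
      ((countable_singleton (F 1)).insert (F 0)).measure_zero volume, zero_mul]
  have h2 : volume (B \ (Φ '' Tp)) = 0 := by
    set bad : Set ℝ := F '' (exc ∪ {t | t ∈ Ioo (0:ℝ) 1 \ exc ∧ deriv F t = 0}) with hbad
    have hbadnull : volume bad = 0 := by
      rw [hbad, image_union]
      refine measure_union_null ((hexc.image F).countable.measure_zero _) ?_
      refine addHaar_image_eq_zero_of_det_fderivWithin_eq_zero volume
        (f' := fun t => ContinuousLinearMap.smulRight (1 : ℝ →L[ℝ] ℝ) (deriv F t)) ?_ ?_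
      · intro t ht
        exact ((hdiff t ht.1).hasDerivAt.hasFDerivAt).hasFDerivWithinAt
      · intro t ht
        rw [ContinuousLinearMap.smulRight_one_eq_toSpanSingleton, ContinuousLinearMap.det_toSpanSingleton, ht.2]
    refine measure_mono_null (fun q hq => ?_)
      (by rw [Measure.volume_eq_prod, Measure.prod_prod, hbadnull, zero_mul] :
        volume (bad ×ˢ (univ : Set ℝ)) = 0)
    show q ∈ bad ×ˢ (univ : Set ℝ)
    refine ⟨?_, trivial⟩
    by_contra hnb
    have hq1 : q.1 ∈ Ioo (F 0) (F 1) := (hBsub hq.1).1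
    obtain ⟨t, htI, htF⟩ : ∃ t ∈ Icc (0:ℝ) 1, F t = q.1 :=
      intermediate_value_Icc zero_le_one hFc.continuousOn ⟨hq1.1.le, hq1.2.le⟩
    have ht0 : t ≠ 0 := fun h => by rw [h] at htF; exact lt_irrefl _ (htF ▸ hq1.1)
    have ht1 : t ≠ 1 := fun h => by rw [h] at htF; exact lt_irrefl _ (htF ▸ hq1.2)
    have ht01 : t ∈ Ioo (0:ℝ) 1 := ⟨lt_of_le_of_ne htI.1 (Ne.symm ht0), lt_of_le_of_ne htI.2 ht1⟩
    have hex : t ∉ exc := fun h => hnb ⟨t, Or.inl h, htF⟩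
    have hd0 : deriv F t ≠ 0 := fun h => hnb ⟨t, Or.inr ⟨⟨ht01, hex⟩, h⟩, htF⟩
    have hd : 0 < deriv F t := (aux_deriv_nonneg hFm t).lt_of_ne (Ne.symm hd0)
    obtain ⟨hlo1, hhi1⟩ := hcov q hq.1 t htI htF
    exact hq.2 ⟨(t, q.2), ⟨⟨ht01, hlo1, hhi1⟩, hd, hex⟩, by show (F t, q.2) = q; rw [htF]⟩
  have hae : Φ '' Tp =ᵐ[volume] B := MeasureTheory.ae_eq_set.2 ⟨h1, h2⟩
  have hfin : ∫ q in Φ '' Tp, P q = ∫ q in B, P q := setIntegral_congr_set hae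
  rw [← fub, hsplit, hCoV, hfin]

/-- Green-type identity for the cost of a monotone path, relative to the
vertical-then-horizontal two-segment path; `B_γ` is the part of the rectangle above `γ`. -/
theorem green_identity_vh (c : ℝ × ℝ → ℝ × ℝ) (hc : ContDiff ℝ 1 c)
    (a b : ℝ × ℝ) (hab1 : a.1 ≤ b.1) (hab2 : a.2 ≤ b.2)
    (γ : MonoPath) (hγ : IsMonoPathFromTo γ a b) :
    pathCost c γ =
      (∫ s in a.2..b.2, (c (a.1, s)).2) + (∫ t in a.1..b.1, (c (t, b.2)).1) -
        ∫ q in {q : ℝ × ℝ | a.1 < q.1 ∧ q.1 < b.1 ∧ hypoFun γ q.1 < q.2 ∧ q.2 < b.2},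
          Ucurl c q := by
  classical
  obtain ⟨hp0, hp1, hmem⟩ := hγ
  have hexc : γ.exc.Finite := γ.exc_finite
  -- clamped reparametrization
  set cl : ℝ → ℝ := fun t => max 0 (min 1 t) with hcl
  have hcl_mem : ∀ t, cl t ∈ Icc (0:ℝ) 1 := fun t =>
    ⟨le_max_left _ _, max_le zero_le_one (min_le_left _ _)⟩
  have hcl_id : ∀ t ∈ Icc (0:ℝ) 1, cl t = t := by
    intro t ht
    show max 0 (min 1 t) = t
    rw [min_eq_right ht.2, max_eq_right ht.1]
  have hcl_cont : Continuous cl := continuous_const.max (continuous_const.min continuous_id)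
  have hcl_mono : Monotone cl := fun x y h => max_le_max le_rfl (min_le_min le_rfl h)
  set w : ℝ → ℝ × ℝ := fun t => γ.p (cl t) with hw
  have hw_cont : Continuous w := γ.cont.comp_continuous hcl_cont hcl_mem
  have hw_mem : ∀ t, w t ∈ Icc a b := fun t => hmem _ (hcl_mem t)
  set F1 : ℝ → ℝ := fun t => (w t).1 with hF1
  set F2 : ℝ → ℝ := fun t => (w t).2 with hF2
  have hF1c : Continuous F1 := hw_cont.fst
  have hF2c : Continuous F2 := hw_cont.snd
  have hwid : ∀ t ∈ Icc (0:ℝ) 1, w t = γ.p t := by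
    intro t ht
    show γ.p (cl t) = γ.p t
    rw [hcl_id t ht]
  -- monotonicity of the coordinates
  have hmono1 : MonotoneOn (fun t => (γ.p t).1) (Icc (0:ℝ) 1) :=
    aux_monotoneOn γ.exc_finite (continuous_fst.comp_continuousOn γ.cont)
      γ.deriv_fst γ.d_fst_nonneg
  have hmono2 : MonotoneOn (fun t => (γ.p t).2) (Icc (0:ℝ) 1) :=
    aux_monotoneOn γ.exc_finite (continuous_snd.comp_continuousOn γ.cont)
      γ.deriv_snd γ.d_snd_nonneg
  have hF1m : Monotone F1 := fun x y h => hmono1 (hcl_mem x) (hcl_mem y) (hcl_mono h)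
  have hF2m : Monotone F2 := fun x y h => hmono2 (hcl_mem x) (hcl_mem y) (hcl_mono h)
  have hF1id : ∀ t ∈ Icc (0:ℝ) 1, F1 t = (γ.p t).1 := fun t ht => by
    show (w t).1 = (γ.p t).1; rw [hwid t ht]
  have hF2id : ∀ t ∈ Icc (0:ℝ) 1, F2 t = (γ.p t).2 := fun t ht => by
    show (w t).2 = (γ.p t).2; rw [hwid t ht]
  have h01 : (0:ℝ) ∈ Icc (0:ℝ) 1 := ⟨le_rfl, zero_le_one⟩
  have h11 : (1:ℝ) ∈ Icc (0:ℝ) 1 := ⟨zero_le_one, le_rfl⟩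
  have hF10 : F1 0 = a.1 := by rw [hF1id 0 h01, hp0]
  have hF11 : F1 1 = b.1 := by rw [hF1id 1 h11, hp1]
  have hF20 : F2 0 = a.2 := by rw [hF2id 0 h01, hp0]
  have hF21 : F2 1 = b.2 := by rw [hF2id 1 h11, hp1]
  have hbd1 : ∀ t, a.2 ≤ F2 t := fun t => ((hw_mem t).1).2
  have hbd1' : ∀ t, F2 t ≤ b.2 := fun t => ((hw_mem t).2).2
  have hbd2 : ∀ t, a.1 ≤ F1 t := fun t => ((hw_mem t).1).1
  have hbd2' : ∀ t, F1 t ≤ b.1 := fun t => ((hw_mem t).2).1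
  -- derivatives of the clamped coordinates
  have hder1 : ∀ t ∈ Ioo (0:ℝ) 1 \ γ.exc, HasDerivAt F1 ((γ.d t).1) t := by
    intro t ht
    have hev : F1 =ᶠ[nhds t] fun u => (γ.p u).1 := by
      filter_upwards [isOpen_Ioo.mem_nhds ht.1] with u hu
      exact hF1id u (Ioo_subset_Icc_self hu)
    exact (γ.deriv_fst t ⟨Ioo_subset_Icc_self ht.1, ht.2⟩).congr_of_eventuallyEq hev
  have hder2 : ∀ t ∈ Ioo (0:ℝ) 1 \ γ.exc, HasDerivAt F2 ((γ.d t).2) t := by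
    intro t ht
    have hev : F2 =ᶠ[nhds t] fun u => (γ.p u).2 := by
      filter_upwards [isOpen_Ioo.mem_nhds ht.1] with u hu
      exact hF2id u (Ioo_subset_Icc_self hu)
    exact (γ.deriv_snd t ⟨Ioo_subset_Icc_self ht.1, ht.2⟩).congr_of_eventuallyEq hev
  have hD1 : ∀ t ∈ Ioo (0:ℝ) 1 \ γ.exc, deriv F1 t = (γ.d t).1 := fun t ht => (hder1 t ht).deriv
  have hD2 : ∀ t ∈ Ioo (0:ℝ) 1 \ γ.exc, deriv F2 t = (γ.d t).2 := fun t ht => (hder2 t ht).deriv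
  have hdiff1 : ∀ t ∈ Ioo (0:ℝ) 1 \ γ.exc, DifferentiableAt ℝ F1 t :=
    fun t ht => (hder1 t ht).differentiableAt
  have hdiff2 : ∀ t ∈ Ioo (0:ℝ) 1 \ γ.exc, DifferentiableAt ℝ F2 t :=
    fun t ht => (hder2 t ht).differentiableAt
  -- the partial derivatives P, Q
  have hdc : Differentiable ℝ c := hc.differentiable one_ne_zero
  set P : ℝ × ℝ → ℝ := fun q => (fderiv ℝ c q ((0:ℝ), (1:ℝ))).1 with hPdef
  set Q : ℝ × ℝ → ℝ := fun q => (fderiv ℝ c q ((1:ℝ), (0:ℝ))).2 with hQdef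
  have hPderiv : ∀ x y : ℝ, HasDerivAt (fun y => (c (x, y)).1) (P (x, y)) y := by
    intro x y
    have h1 : HasDerivAt (fun y : ℝ => (x, y)) ((0:ℝ), (1:ℝ)) y :=
      (hasDerivAt_const y x).prodMk (hasDerivAt_id y)
    exact ((hdc (x, y)).hasFDerivAt.comp_hasDerivAt y h1).fst
  have hQderiv : ∀ x y : ℝ, HasDerivAt (fun u => (c (u, y)).2) (Q (x, y)) x := by
    intro x y
    have h1 : HasDerivAt (fun u : ℝ => (u, y)) ((1:ℝ), (0:ℝ)) x :=
      (hasDerivAt_id x).prodMk (hasDerivAt_const x y)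
    exact hasFDerivAt_snd.comp_hasDerivAt x ((hdc (x, y)).hasFDerivAt.comp_hasDerivAt x h1)
  have hPc : Continuous P :=
    ((hc.continuous_fderiv one_ne_zero).clm_apply continuous_const).fst
  have hQc : Continuous Q :=
    ((hc.continuous_fderiv one_ne_zero).clm_apply continuous_const).snd
  have hU : ∀ q : ℝ × ℝ, Ucurl c q = P q - Q q := by
    intro q
    rw [Ucurl, (hPderiv q.1 q.2).deriv, (hQderiv q.1 q.2).deriv]
  -- facts about the hypograph function
  have hSb : ∀ x : ℝ, BddAbove ((fun t => (γ.p t).2) '' {t | t ∈ Icc (0:ℝ) 1 ∧ (γ.p t).1 ≤ x}) := by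
    intro x
    refine ⟨b.2, ?_⟩
    rintro v ⟨t, ht, rfl⟩
    exact ((hmem t ht.1).2).2
  have hmem0 : ∀ x : ℝ, a.1 ≤ x → (0:ℝ) ∈ {t | t ∈ Icc (0:ℝ) 1 ∧ (γ.p t).1 ≤ x} := by
    intro x hx
    exact ⟨h01, by rw [hp0]; exact hx⟩
  have hSne : ∀ x : ℝ, a.1 ≤ x →
      ((fun t => (γ.p t).2) '' {t | t ∈ Icc (0:ℝ) 1 ∧ (γ.p t).1 ≤ x}).Nonempty :=
    fun x hx => ⟨(γ.p 0).2, 0, hmem0 x hx, rfl⟩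
  have hge : ∀ x : ℝ, ∀ t ∈ Icc (0:ℝ) 1, (γ.p t).1 ≤ x → (γ.p t).2 ≤ hypoFun γ x :=
    fun x t ht hle => le_csSup (hSb x) ⟨t, ⟨ht, hle⟩, rfl⟩
  have hlow : ∀ x : ℝ, a.1 ≤ x → a.2 ≤ hypoFun γ x := by
    intro x hx
    have h := hge x 0 h01 (by rw [hp0]; exact hx)
    rwa [hp0] at h
  have hattain : ∀ x : ℝ, a.1 ≤ x → ∃ ts ∈ Icc (0:ℝ) 1, (γ.p ts).1 ≤ x ∧
      hypoFun γ x = (γ.p ts).2 ∧ ∀ s ∈ Icc (0:ℝ) 1, (γ.p s).1 ≤ x → s ≤ ts := by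
    intro x hx
    have hKeq : {t | t ∈ Icc (0:ℝ) 1 ∧ (γ.p t).1 ≤ x} =
        Icc (0:ℝ) 1 ∩ (fun t => (γ.p t).1) ⁻¹' (Iic x) := by
      ext t; simp [mem_preimage, mem_Iic]
    have hKc : IsClosed {t | t ∈ Icc (0:ℝ) 1 ∧ (γ.p t).1 ≤ x} := by
      rw [hKeq]
      exact (continuous_fst.comp_continuousOn γ.cont).preimage_isClosed_of_isClosed
        isClosed_Icc isClosed_Iic
    have hKcp : IsCompact {t | t ∈ Icc (0:ℝ) 1 ∧ (γ.p t).1 ≤ x} :=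
      isCompact_Icc.of_isClosed_subset hKc (fun t ht => ht.1)
    have hKne : {t | t ∈ Icc (0:ℝ) 1 ∧ (γ.p t).1 ≤ x}.Nonempty := ⟨0, hmem0 x hx⟩
    have hmax : sSup {t | t ∈ Icc (0:ℝ) 1 ∧ (γ.p t).1 ≤ x} ∈
        {t | t ∈ Icc (0:ℝ) 1 ∧ (γ.p t).1 ≤ x} := hKcp.sSup_mem hKne
    refine ⟨_, hmax.1, hmax.2, ?_, fun s hs hsx => le_csSup hKcp.bddAbove ⟨hs, hsx⟩⟩
    refine le_antisymm (csSup_le (hSne x hx) ?_) (hge x _ hmax.1 hmax.2)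
    rintro v ⟨t, ht, rfl⟩
    exact hmono2 ht.1 hmax.1 (le_csSup hKcp.bddAbove ht)
  -- the hypograph-complement region and its measurability
  set Bs : Set (ℝ × ℝ) :=
    {q : ℝ × ℝ | a.1 < q.1 ∧ q.1 < b.1 ∧ hypoFun γ q.1 < q.2 ∧ q.2 < b.2} with hBs
  have hBsmem : ∀ q : ℝ × ℝ, q ∈ Bs ↔
      a.1 < q.1 ∧ q.1 < b.1 ∧ hypoFun γ q.1 < q.2 ∧ q.2 < b.2 := fun q => Iff.rfl
  have hhmono : MonotoneOn (hypoFun γ) (Ici a.1) := by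
    intro x hx y hy hxy
    refine csSup_le (hSne x hx) ?_
    rintro v ⟨t, ht, rfl⟩
    exact le_csSup (hSb y) ⟨t, ⟨ht.1, ht.2.trans hxy⟩, rfl⟩
  have hBmeas : MeasurableSet Bs := by
    set H : ℝ → ℝ := fun x => hypoFun γ (max a.1 x) with hH
    have hHm : Monotone H := fun x y h =>
      hhmono (mem_Ici.2 (le_max_left _ _)) (mem_Ici.2 (le_max_left _ _)) (max_le_max le_rfl h)
    have hHeq : ∀ x : ℝ, a.1 ≤ x → H x = hypoFun γ x := by
      intro x hx
      show hypoFun γ (max a.1 x) = hypoFun γ x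
      rw [max_eq_right hx]
    have h1 : Bs = {q : ℝ × ℝ | q.1 ∈ Ioo a.1 b.1} ∩
        ({q | H q.1 < q.2} ∩ {q | q.2 < b.2}) := by
      ext q
      simp only [hBs, mem_setOf_eq, mem_inter_iff, mem_Ioo]
      constructor
      · rintro ⟨u1, u2, u3, u4⟩
        exact ⟨⟨u1, u2⟩, by rwa [hHeq q.1 u1.le], u4⟩
      · rintro ⟨⟨u1, u2⟩, u3, u4⟩
        exact ⟨u1, u2, by rwa [hHeq q.1 u1.le] at u3, u4⟩
    rw [h1]
    exact (measurable_fst measurableSet_Ioo).inter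
      ((measurableSet_lt (hHm.measurable.comp measurable_fst) measurable_snd).inter
        (measurableSet_lt measurable_snd measurable_const))
  -- the hypograph value at a point of increase
  have hhypF1 : ∀ t, t ∈ Ioo (0:ℝ) 1 → t ∉ γ.exc → 0 < deriv F1 t →
      hypoFun γ (F1 t) = F2 t := by
    intro t ht hex hd
    have htI : t ∈ Icc (0:ℝ) 1 := Ioo_subset_Icc_self ht
    obtain ⟨ts, hts, htsle, heq, hmax⟩ := hattain (F1 t) (hbd2 t)
    have htle : t ≤ ts := hmax t htI (hF1id t htI).ge
    rcases eq_or_lt_of_le htle with hEq | hlt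
    · rw [heq, ← hEq, ← hF2id t htI]
    · exfalso
      have hconst : ∀ v ∈ uIcc t ts, F1 v = F1 t := by
        intro v hv
        rw [uIcc_of_le htle] at hv
        refine le_antisymm ?_ (hF1m hv.1)
        calc F1 v ≤ F1 ts := hF1m hv.2
        _ = (γ.p ts).1 := hF1id ts hts
        _ ≤ F1 t := htsle
      exact (ne_of_gt hd) (aux_deriv_zero_of_const hlt.ne hconst)
  have hhypF2 : ∀ t, t ∈ Ioo (0:ℝ) 1 → t ∉ γ.exc → 0 < deriv F2 t → ∀ u, a.1 ≤ u →
      u < F1 t → hypoFun γ u < F2 t := by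
    intro t ht hex hd u hau huF
    have htI : t ∈ Icc (0:ℝ) 1 := Ioo_subset_Icc_self ht
    obtain ⟨ts, hts, htsle, heq, hmax⟩ := hattain u hau
    have htslt : ts < t := by
      by_contra hcon
      push_neg at hcon
      have h2 : F1 t ≤ F1 ts := hF1m hcon
      rw [hF1id ts hts] at h2
      exact absurd (h2.trans htsle) (not_le.2 huF)
    have hle : (γ.p ts).2 ≤ (γ.p t).2 := hmono2 hts htI htslt.le
    rcases eq_or_lt_of_le hle with hEq | hlt
    · exfalso
      have hconst : ∀ v ∈ uIcc t ts, F2 v = F2 t := by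
        intro v hv
        rw [uIcc_of_ge htslt.le] at hv
        have hvI : v ∈ Icc (0:ℝ) 1 := ⟨hts.1.trans hv.1, hv.2.trans htI.2⟩
        rw [hF2id v hvI, hF2id t htI]
        refine le_antisymm (hmono2 hvI htI hv.2) ?_
        calc (γ.p t).2 = (γ.p ts).2 := hEq.symm
        _ ≤ (γ.p v).2 := hmono2 hts hvI hv.1
      exact (ne_of_gt hd) (aux_deriv_zero_of_const htslt.ne' hconst)
    · rw [heq, hF2id t htI]
      exact hlt
  -- the four integrand factors
  set Z1 : ℝ × ℝ → ℝ := fun z => (c (z.1, b.2)).1 with hZ1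
  set Z2 : ℝ × ℝ → ℝ := fun z => ∫ s in z.2..b.2, P (z.1, s) with hZ2
  set Z3 : ℝ × ℝ → ℝ := fun z => (c (a.1, z.2)).2 with hZ3
  set Z4 : ℝ × ℝ → ℝ := fun z => ∫ u in a.1..z.1, Q (u, z.2) with hZ4
  have hZ1c : Continuous Z1 :=
    (hc.continuous.comp (continuous_fst.prodMk continuous_const)).fst
  have hZ3c : Continuous Z3 :=
    (hc.continuous.comp (continuous_const.prodMk continuous_snd)).snd
  have hZ2c : Continuous Z2 := by
    have h1 : Continuous fun z : ℝ × ℝ => ∫ s in b.2..z.2, P (z.1, s) :=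
      intervalIntegral.continuous_parametric_intervalIntegral_of_continuous
        (f := fun (z : ℝ × ℝ) (s : ℝ) => P (z.1, s))
        (hPc.comp ((continuous_fst.comp continuous_fst).prodMk continuous_snd))
        continuous_snd
    have h2 : Z2 = fun z : ℝ × ℝ => -∫ s in b.2..z.2, P (z.1, s) := by
      funext z
      rw [hZ2]
      show (∫ s in z.2..b.2, P (z.1, s)) = -∫ s in b.2..z.2, P (z.1, s)
      exact intervalIntegral.integral_symm b.2 z.2
    rw [h2]
    exact h1.neg
  have hZ4c : Continuous Z4 :=
    intervalIntegral.continuous_parametric_intervalIntegral_of_continuous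
      (f := fun (z : ℝ × ℝ) (u : ℝ) => Q (u, z.2))
      (hQc.comp (continuous_snd.prodMk (continuous_snd.comp continuous_fst)))
      continuous_fst
  -- integrability of the four products
  have hII : ∀ (Z : ℝ × ℝ → ℝ) (F : ℝ → ℝ), Continuous Z → Monotone F →
      IntervalIntegrable (fun t => Z (w t) * deriv F t) volume 0 1 := by
    intro Z F hZ hFm'
    obtain ⟨C, hC⟩ :=
      (isCompact_Icc : IsCompact (Icc a b)).exists_bound_of_continuousOn hZ.continuousOn
    rw [intervalIntegrable_iff_integrableOn_Ioc_of_le zero_le_one]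
    have h0 : IntegrableOn (fun t => Z (w t) * deriv F t) (Ioo (0:ℝ) 1) :=
      Integrable.bdd_mul (aux_integrableOn_deriv hFm')
        ((hZ.comp hw_cont).aestronglyMeasurable) (Filter.Eventually.of_forall fun t => hC _ (hw_mem t))
    exact h0.congr_set_ae Ioo_ae_eq_Ioc.symm
  have hI1 := hII Z1 F1 hZ1c hF1m
  have hI2 := hII Z2 F1 hZ2c hF1m
  have hI3 := hII Z3 F2 hZ3c hF2m
  have hI4 := hII Z4 F2 hZ4c hF2m
  -- rewrite the path cost
  have hpc : pathCost c γ = ∫ t in (0:ℝ)..1,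
      ((Z1 (w t) * deriv F1 t - Z2 (w t) * deriv F1 t) +
        (Z3 (w t) * deriv F2 t + Z4 (w t) * deriv F2 t)) := by
    rw [pathCost]
    apply intervalIntegral.integral_congr_ae
    have hnull : volume (γ.exc ∪ {1}) = 0 :=
      measure_union_null (hexc.countable.measure_zero _) (Real.volume_singleton)
    filter_upwards [measure_eq_zero_iff_ae_notMem.1 hnull] with t htn htI
    have ht1 : t ≠ 1 := fun h => htn (Or.inr (by rw [h]; exact rfl))
    have htO : t ∈ Ioo (0:ℝ) 1 := by
      rw [uIoc_of_le zero_le_one] at htI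
      exact ⟨htI.1, lt_of_le_of_ne htI.2 ht1⟩
    have htE : t ∉ γ.exc := fun h => htn (Or.inl h)
    have htIc : t ∈ Icc (0:ℝ) 1 := Ioo_subset_Icc_self htO
    have e1 : deriv F1 t = (γ.d t).1 := hD1 t ⟨htO, htE⟩
    have e2 : deriv F2 t = (γ.d t).2 := hD2 t ⟨htO, htE⟩
    have e3 : w t = γ.p t := hwid t htIc
    have e4 : (c (γ.p t)).1 = Z1 (w t) - Z2 (w t) := by
      have hcont : Continuous fun s => P ((γ.p t).1, s) :=
        hPc.comp (continuous_const.prodMk continuous_id)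
      have h5 := intervalIntegral.integral_eq_sub_of_hasDerivAt
        (f := fun y => (c ((γ.p t).1, y)).1) (f' := fun s => P ((γ.p t).1, s))
        (a := (γ.p t).2) (b := b.2)
        (fun s _ => hPderiv (γ.p t).1 s) (hcont.intervalIntegrable _ _)
      have e5 : Z2 (w t) = (c ((γ.p t).1, b.2)).1 - (c ((γ.p t).1, (γ.p t).2)).1 := by
        rw [hZ2]
        show (∫ s in (w t).2..b.2, P ((w t).1, s)) = _
        rw [e3]
        exact h5
      have e6 : Z1 (w t) = (c ((γ.p t).1, b.2)).1 := by
        rw [hZ1]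
        show (c ((w t).1, b.2)).1 = _
        rw [e3]
      rw [e5, e6]
      simp only [Prod.mk.eta]
      ring
    have e7 : (c (γ.p t)).2 = Z3 (w t) + Z4 (w t) := by
      have hcont : Continuous fun u => Q (u, (γ.p t).2) :=
        hQc.comp (continuous_id.prodMk continuous_const)
      have h5 := intervalIntegral.integral_eq_sub_of_hasDerivAt
        (f := fun u => (c (u, (γ.p t).2)).2) (f' := fun u => Q (u, (γ.p t).2))
        (a := a.1) (b := (γ.p t).1)
        (fun u _ => hQderiv u (γ.p t).2) (hcont.intervalIntegrable _ _)
      have e5 : Z4 (w t) = (c ((γ.p t).1, (γ.p t).2)).2 - (c (a.1, (γ.p t).2)).2 := by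
        rw [hZ4]
        show (∫ u in a.1..(w t).1, Q (u, (w t).2)) = _
        rw [e3]
        exact h5
      have e6 : Z3 (w t) = (c (a.1, (γ.p t).2)).2 := by
        rw [hZ3]
        show (c (a.1, (w t).2)).2 = _
        rw [e3]
      rw [e5, e6]
      simp only [Prod.mk.eta]
      ring
    rw [e4, e7, e1, e2]
    ring
  have hsplit4 : (∫ t in (0:ℝ)..1,
      ((Z1 (w t) * deriv F1 t - Z2 (w t) * deriv F1 t) +
        (Z3 (w t) * deriv F2 t + Z4 (w t) * deriv F2 t)))
      = ((∫ t in (0:ℝ)..1, Z1 (w t) * deriv F1 t) - ∫ t in (0:ℝ)..1, Z2 (w t) * deriv F1 t)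
        + ((∫ t in (0:ℝ)..1, Z3 (w t) * deriv F2 t)
          + ∫ t in (0:ℝ)..1, Z4 (w t) * deriv F2 t) := by
    rw [intervalIntegral.integral_add (hI1.sub hI2) (hI3.add hI4),
      intervalIntegral.integral_sub hI1 hI2, intervalIntegral.integral_add hI3 hI4]
  -- the two boundary terms
  have hT1 : ∫ t in (0:ℝ)..1, Z1 (w t) * deriv F1 t = ∫ x in a.1..b.1, (c (x, b.2)).1 := by
    set prim : ℝ → ℝ := fun u => ∫ x in a.1..u, (c (x, b.2)).1 with hprim
    have hZc : Continuous fun x : ℝ => (c (x, b.2)).1 :=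
      (hc.continuous.comp (continuous_id.prodMk continuous_const)).fst
    have hprimd : ∀ u : ℝ, HasDerivAt prim ((c (u, b.2)).1) u := fun u =>
      intervalIntegral.integral_hasDerivAt_right (hZc.intervalIntegrable _ _)
        (hZc.stronglyMeasurableAtFilter _ _) hZc.continuousAt
    have hcont : ContinuousOn (fun t => prim (F1 t)) (uIcc (0:ℝ) 1) :=
      ((continuous_iff_continuousAt.2 fun x => (hprimd x).continuousAt).comp hF1c).continuousOn
    have hd : ∀ t ∈ Ioo (min (0:ℝ) 1) (max (0:ℝ) 1) \ γ.exc,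
        HasDerivAt (fun t => prim (F1 t)) (Z1 (w t) * deriv F1 t) t := by
      intro t ht
      rw [min_eq_left zero_le_one, max_eq_right zero_le_one] at ht
      have h1 := (hprimd (F1 t)).comp t (hder1 t ht)
      rw [hD1 t ht]
      exact h1
    have heq := MeasureTheory.integral_eq_of_hasDerivAt_off_countable
      (fun t => prim (F1 t)) (fun t => Z1 (w t) * deriv F1 t) hexc.countable hcont hd hI1
    rw [heq]
    show prim (F1 1) - prim (F1 0) = ∫ x in a.1..b.1, (c (x, b.2)).1
    rw [hF11, hF10]
    show prim b.1 - ∫ x in a.1..a.1, (c (x, b.2)).1 = prim b.1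
    rw [intervalIntegral.integral_same, sub_zero]
  have hT2 : ∫ t in (0:ℝ)..1, Z3 (w t) * deriv F2 t = ∫ y in a.2..b.2, (c (a.1, y)).2 := by
    set prim : ℝ → ℝ := fun u => ∫ y in a.2..u, (c (a.1, y)).2 with hprim
    have hZc : Continuous fun y : ℝ => (c (a.1, y)).2 :=
      (hc.continuous.comp (continuous_const.prodMk continuous_id)).snd
    have hprimd : ∀ u : ℝ, HasDerivAt prim ((c (a.1, u)).2) u := fun u =>
      intervalIntegral.integral_hasDerivAt_right (hZc.intervalIntegrable _ _)
        (hZc.stronglyMeasurableAtFilter _ _) hZc.continuousAt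
    have hcont : ContinuousOn (fun t => prim (F2 t)) (uIcc (0:ℝ) 1) :=
      ((continuous_iff_continuousAt.2 fun x => (hprimd x).continuousAt).comp hF2c).continuousOn
    have hd : ∀ t ∈ Ioo (min (0:ℝ) 1) (max (0:ℝ) 1) \ γ.exc,
        HasDerivAt (fun t => prim (F2 t)) (Z3 (w t) * deriv F2 t) t := by
      intro t ht
      rw [min_eq_left zero_le_one, max_eq_right zero_le_one] at ht
      have h1 := (hprimd (F2 t)).comp t (hder2 t ht)
      rw [hD2 t ht]
      exact h1
    have heq := MeasureTheory.integral_eq_of_hasDerivAt_off_countable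
      (fun t => prim (F2 t)) (fun t => Z3 (w t) * deriv F2 t) hexc.countable hcont hd hI3
    rw [heq]
    show prim (F2 1) - prim (F2 0) = ∫ y in a.2..b.2, (c (a.1, y)).2
    rw [hF21, hF20]
    show prim b.2 - ∫ y in a.2..a.2, (c (a.1, y)).2 = prim b.2
    rw [intervalIntegral.integral_same, sub_zero]
  -- the area terms via the key change-of-variables lemma
  have hEq2 : ∫ t in (0:ℝ)..1, Z2 (w t) * deriv F1 t = ∫ q in Bs, P q := by
    have hkey := aux_key (F := F1) (lo := F2) (hi := fun _ => b.2) (exc := γ.exc)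
      hF1c hF1m hexc hdiff1 hF2c continuous_const (m := a.2) (M := b.2)
      hbd1 (fun _ => le_rfl) hPc hBmeas ?_ ?_ ?_
    · calc ∫ t in (0:ℝ)..1, Z2 (w t) * deriv F1 t
          = ∫ t in Ioc (0:ℝ) 1, Z2 (w t) * deriv F1 t :=
            intervalIntegral.integral_of_le zero_le_one
        _ = ∫ t in Ioo (0:ℝ) 1, Z2 (w t) * deriv F1 t :=
            (setIntegral_congr_set Ioo_ae_eq_Ioc).symm
        _ = ∫ t in Ioo (0:ℝ) 1, (∫ s in Ioo (F2 t) b.2, P (F1 t, s)) * deriv F1 t := by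
            refine setIntegral_congr_fun measurableSet_Ioo fun t ht => ?_
            have : Z2 (w t) = ∫ s in Ioo (F2 t) b.2, P (F1 t, s) := by
              rw [hZ2]
              show (∫ s in (w t).2..b.2, P ((w t).1, s)) = _
              rw [intervalIntegral.integral_of_le (hbd1' t),
                ← setIntegral_congr_set Ioo_ae_eq_Ioc]
            rw [this]
        _ = ∫ q in Bs, P q := hkey
    · -- Bs ⊆ Ioo (F1 0) (F1 1) ×ˢ Ioo a.2 b.2
      intro q hq
      rw [hF10, hF11]
      exact ⟨⟨hq.1, hq.2.1⟩, lt_of_le_of_lt (hlow q.1 hq.1.le) hq.2.2.1, hq.2.2.2⟩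
    · -- image condition
      intro t ht hex hd h0 h1' s hs1 hs2
      refine (hBsmem _).2 ⟨?_, ?_, ?_, hs2⟩
      · rwa [hF10] at h0
      · rwa [hF11] at h1'
      · rw [hhypF1 t ht hex hd]
        exact hs1
    · -- covering condition
      intro q hq t htI hFt
      refine ⟨?_, hq.2.2.2⟩
      have h2 : (γ.p t).2 ≤ hypoFun γ q.1 :=
        hge q.1 t htI (by rw [← hFt, hF1id t htI])
      calc F2 t = (γ.p t).2 := hF2id t htI
      _ ≤ hypoFun γ q.1 := h2
      _ < q.2 := hq.2.2.1
  set Bw : Set (ℝ × ℝ) := Prod.swap ⁻¹' Bs with hBw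
  have hBwmeas : MeasurableSet Bw := hBmeas.preimage measurable_swap
  have hEq4 : ∫ t in (0:ℝ)..1, Z4 (w t) * deriv F2 t = ∫ q in Bs, Q q := by
    have hkey := aux_key (F := F2) (lo := fun _ => a.1) (hi := F1) (exc := γ.exc)
      hF2c hF2m hexc hdiff2 continuous_const hF1c (m := a.1) (M := b.1)
      (fun _ => le_rfl) hbd2' (P := fun z => Q (z.2, z.1)) (hQc.comp continuous_swap)
      hBwmeas ?_ ?_ ?_
    · have hswapint : ∫ q in Bw, Q (q.2, q.1) = ∫ q in Bs, Q q := by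
        have h1 : MeasurePreserving (Prod.swap : ℝ × ℝ → ℝ × ℝ) volume volume :=
          Measure.measurePreserving_swap
        have h2 : MeasurableEmbedding (Prod.swap : ℝ × ℝ → ℝ × ℝ) :=
          (MeasurableEquiv.prodComm (α := ℝ) (β := ℝ)).measurableEmbedding
        exact h1.setIntegral_preimage_emb h2 Q Bs
      calc ∫ t in (0:ℝ)..1, Z4 (w t) * deriv F2 t
          = ∫ t in Ioc (0:ℝ) 1, Z4 (w t) * deriv F2 t :=
            intervalIntegral.integral_of_le zero_le_one
        _ = ∫ t in Ioo (0:ℝ) 1, Z4 (w t) * deriv F2 t :=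
            (setIntegral_congr_set Ioo_ae_eq_Ioc).symm
        _ = ∫ t in Ioo (0:ℝ) 1, (∫ s in Ioo a.1 (F1 t), Q (s, F2 t)) * deriv F2 t := by
            refine setIntegral_congr_fun measurableSet_Ioo fun t ht => ?_
            have : Z4 (w t) = ∫ s in Ioo a.1 (F1 t), Q (s, F2 t) := by
              rw [hZ4]
              show (∫ u in a.1..(w t).1, Q (u, (w t).2)) = _
              rw [intervalIntegral.integral_of_le (hbd2 t),
                ← setIntegral_congr_set Ioo_ae_eq_Ioc]
            rw [this]
        _ = ∫ q in Bw, Q (q.2, q.1) := hkey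
        _ = ∫ q in Bs, Q q := hswapint
    · -- Bw ⊆ Ioo (F2 0) (F2 1) ×ˢ Ioo a.1 b.1
      intro q hq
      have hqs : (q.2, q.1) ∈ Bs := hq
      rw [hF20, hF21]
      exact ⟨⟨lt_of_le_of_lt (hlow q.2 hqs.1.le) hqs.2.2.1, hqs.2.2.2⟩, hqs.1, hqs.2.1⟩
    · -- image condition
      intro t ht hex hd h0 h1' s hs1 hs2
      show (s, F2 t) ∈ Bs
      refine (hBsmem _).2 ⟨hs1, lt_of_lt_of_le hs2 (hbd2' t), ?_, ?_⟩
      · exact hhypF2 t ht hex hd s hs1.le hs2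
      · rwa [hF21] at h1'
    · -- covering condition
      intro q hq t htI hFt
      have hqs : (q.2, q.1) ∈ Bs := hq
      refine ⟨hqs.1, ?_⟩
      by_contra hcon
      push_neg at hcon
      have h2 : (γ.p t).2 ≤ hypoFun γ q.2 :=
        hge q.2 t htI (le_trans (hF1id t htI).ge hcon)
      have h3 : q.1 ≤ hypoFun γ q.2 := by
        calc q.1 = F2 t := hFt.symm
        _ = (γ.p t).2 := hF2id t htI
        _ ≤ hypoFun γ q.2 := h2
      exact absurd hqs.2.2.1 (not_lt.2 h3)
  -- combine the curl
  have hBsub' : Bs ⊆ Icc a b := by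
    intro q hq
    exact ⟨⟨hq.1.le, (hlow q.1 hq.1.le).trans hq.2.2.1.le⟩, ⟨hq.2.1.le, hq.2.2.2.le⟩⟩
  have hPint : IntegrableOn P Bs :=
    (hPc.continuousOn.integrableOn_compact isCompact_Icc).mono_set hBsub'
  have hQint : IntegrableOn Q Bs :=
    (hQc.continuousOn.integrableOn_compact isCompact_Icc).mono_set hBsub'
  have hfinal : (∫ q in Bs, P q) - ∫ q in Bs, Q q = ∫ q in Bs, Ucurl c q := by
    rw [← integral_sub hPint hQint]
    exact integral_congr_ae (Filter.Eventually.of_forall fun q => (hU q).symm)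
  rw [hpc, hsplit4, hT1, hT2, hEq2, hEq4]
  rw [← hfinal]
  ring
end

section
/- (Point-to-point optimal path, positive curl case.) Let c=(c1,c2):ℝ²→ℝ² be a C¹ cost field and let a=(a1,a2), b=(b1,b2) with a1≤b1 and a2≤b2. If U(x)>0 for almost every x in the rectangle R_ab=[a1,b1]×[a2,b2], then every monotone path γ from a to b satisfies cost(γ) ≥ ∫_{a1}^{b1} c1(t,a2) dt + ∫_{a2}^{b2} c2(b1,s) ds; that is, the two-segment path consisting of the horizontal segment {(x,a2): a1≤x≤b1} followed by the vertical segment {(b1,y): a2≤y≤b2} (whose cost is the right-hand side) is optimal. -/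
open MeasureTheory Set

section AuxLemmas

noncomputable def pd1 (f : ℝ × ℝ → ℝ) (q : ℝ × ℝ) : ℝ := fderiv ℝ f q (1, 0)
noncomputable def pd2 (f : ℝ × ℝ → ℝ) (q : ℝ × ℝ) : ℝ := fderiv ℝ f q (0, 1)

lemma hasDerivAt_pd1 {f : ℝ × ℝ → ℝ} (hf : ContDiff ℝ 1 f) (x s : ℝ) :
    HasDerivAt (fun r => f (r, s)) (pd1 f (x, s)) x := by
  have h1 : HasDerivAt (fun r : ℝ => (r, s)) ((1 : ℝ), (0 : ℝ)) x :=
    (hasDerivAt_id x).prodMk (hasDerivAt_const x s)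
  exact ((hf.differentiable one_ne_zero (x, s)).hasFDerivAt).comp_hasDerivAt x h1

lemma hasDerivAt_pd2 {f : ℝ × ℝ → ℝ} (hf : ContDiff ℝ 1 f) (x s : ℝ) :
    HasDerivAt (fun r => f (x, r)) (pd2 f (x, s)) s := by
  have h1 : HasDerivAt (fun r : ℝ => (x, r)) ((0 : ℝ), (1 : ℝ)) s :=
    (hasDerivAt_const s x).prodMk (hasDerivAt_id s)
  exact ((hf.differentiable one_ne_zero (x, s)).hasFDerivAt).comp_hasDerivAt s h1

lemma continuous_pd1 {f : ℝ × ℝ → ℝ} (hf : ContDiff ℝ 1 f) : Continuous (pd1 f) :=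
  (hf.continuous_fderiv one_ne_zero).clm_apply continuous_const

lemma continuous_pd2 {f : ℝ × ℝ → ℝ} (hf : ContDiff ℝ 1 f) : Continuous (pd2 f) :=
  (hf.continuous_fderiv one_ne_zero).clm_apply continuous_const

/-- moving upper endpoint piece, jointly differentiable in both variables -/
lemma hasFDerivAt_piece {f : ℝ × ℝ → ℝ} (hf : Continuous f) (q0 : ℝ × ℝ) :
    HasFDerivAt (fun q : ℝ × ℝ => ∫ s in q0.2..q.2, f (q.1, s))
      (f q0 • ContinuousLinearMap.snd ℝ ℝ ℝ) q0 := by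
  rw [hasFDerivAt_iff_isLittleO_nhds_zero]
  rw [Asymptotics.isLittleO_iff]
  intro ε hε
  obtain ⟨δ, hδ, hcont⟩ := Metric.continuousAt_iff.1 hf.continuousAt ε hε
  filter_upwards [Metric.ball_mem_nhds (0 : ℝ × ℝ) hδ] with h hh
  have hint : ∀ x : ℝ, IntervalIntegrable (fun s => f (x, s)) volume q0.2 (q0.2 + h.2) :=
    fun x => (hf.comp (continuous_const.prodMk continuous_id)).intervalIntegrable _ _
  have key : (∫ s in q0.2..(q0 + h).2, f ((q0 + h).1, s)) - f q0 * h.2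
      = ∫ s in q0.2..q0.2 + h.2, (f (q0.1 + h.1, s) - f q0) := by
    rw [intervalIntegral.integral_sub (hint _) intervalIntegrable_const]
    simp [Prod.fst_add, Prod.snd_add, intervalIntegral.integral_const]
    ring
  have hb : ∀ s ∈ Set.uIoc q0.2 (q0.2 + h.2), ‖f (q0.1 + h.1, s) - f q0‖ ≤ ε := by
    intro s hs
    have hs' : |s - q0.2| ≤ |h.2| := by
      rcases le_total q0.2 (q0.2 + h.2) with hle | hle
      · rw [uIoc_of_le hle] at hs
        rw [abs_le]
        constructor <;> [nlinarith [hs.1, abs_nonneg h.2]; nlinarith [hs.2, le_abs_self h.2]]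
      · rw [uIoc_of_ge hle] at hs
        rw [abs_le]
        constructor <;> [nlinarith [hs.1, neg_abs_le h.2]; nlinarith [hs.2, abs_nonneg h.2]]
    have hnorm : ‖h‖ < δ := by simpa [dist_zero_right] using hh
    have : dist (q0.1 + h.1, s) q0 < δ := by
      have heq : dist (q0.1 + h.1, s) q0 = max |h.1| |s - q0.2| := by
        rw [Prod.dist_eq]
        simp [Real.dist_eq]
      rw [heq]
      calc max |h.1| |s - q0.2| ≤ max |h.1| |h.2| := max_le_max le_rfl hs'
        _ = ‖h‖ := by rw [Prod.norm_def]; simp [Real.norm_eq_abs]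
        _ < δ := hnorm
    exact le_of_lt (hcont this)
  calc ‖(∫ s in q0.2..(q0 + h).2, f ((q0 + h).1, s)) - (∫ s in q0.2..q0.2, f (q0.1, s))
        - (f q0 • ContinuousLinearMap.snd ℝ ℝ ℝ) h‖
      = ‖(∫ s in q0.2..(q0 + h).2, f ((q0 + h).1, s)) - f q0 * h.2‖ := by
        simp [intervalIntegral.integral_same]
    _ = ‖∫ s in q0.2..q0.2 + h.2, (f (q0.1 + h.1, s) - f q0)‖ := by rw [key]
    _ ≤ ε * |q0.2 + h.2 - q0.2| := intervalIntegral.norm_integral_le_of_norm_le_const hb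
    _ ≤ ε * ‖h‖ := by
        rw [add_sub_cancel_left]
        exact mul_le_mul_of_nonneg_left (by simpa using norm_snd_le h) hε.le

/-- derivative in the parameter, fixed endpoints -/
lemma hasDerivAt_param {f : ℝ × ℝ → ℝ} (hf : ContDiff ℝ 1 f) (a2 y0 x0 : ℝ) :
    HasDerivAt (fun x => ∫ s in a2..y0, f (x, s))
      (∫ s in a2..y0, pd1 f (x0, s)) x0 := by
  obtain ⟨M, hM⟩ := (isCompact_Icc.prod isCompact_Icc :
      IsCompact (Icc (x0 - 1) (x0 + 1) ×ˢ Icc (min a2 y0) (max a2 y0))).exists_bound_of_continuousOn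
    (continuous_pd1 hf).continuousOn
  have h := intervalIntegral.hasDerivAt_integral_of_dominated_loc_of_deriv_le
    (F := fun x s => f (x, s)) (F' := fun x s => pd1 f (x, s))
    (x₀ := x0) (a := a2) (b := y0) (bound := fun _ => M) (μ := volume)
    (Metric.ball_mem_nhds x0 one_pos)
    (Filter.Eventually.of_forall fun x =>
      ((hf.continuous.comp (continuous_const.prodMk continuous_id)).aestronglyMeasurable))
    ((hf.continuous.comp (continuous_const.prodMk continuous_id)).intervalIntegrable _ _)
    (((continuous_pd1 hf).comp (continuous_const.prodMk continuous_id)).aestronglyMeasurable)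
    ?_ intervalIntegrable_const ?_
  · exact h.2
  · refine Filter.Eventually.of_forall fun s hs x hx => hM (x, s) ?_
    constructor
    · have : |x - x0| < 1 := by simpa [Real.dist_eq] using hx
      constructor <;> [linarith [abs_le.1 this.le |>.1]; linarith [abs_le.1 this.le |>.2]]
    · exact ⟨hs.1.le, hs.2⟩
  · exact Filter.Eventually.of_forall fun s _ x _ => hasDerivAt_pd1 hf x s

/-- Joint differentiability of `(x,y) ↦ ∫_{a2}^{y} f(x,s) ds`. -/
lemma hasFDerivAt_B {f : ℝ × ℝ → ℝ} (hf : ContDiff ℝ 1 f) (a2 : ℝ) (q0 : ℝ × ℝ) :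
    HasFDerivAt (fun q : ℝ × ℝ => ∫ s in a2..q.2, f (q.1, s))
      ((∫ s in a2..q0.2, pd1 f (q0.1, s)) • ContinuousLinearMap.fst ℝ ℝ ℝ
        + f q0 • ContinuousLinearMap.snd ℝ ℝ ℝ) q0 := by
  have h1 : HasFDerivAt (fun q : ℝ × ℝ => ∫ s in a2..q0.2, f (q.1, s))
      ((∫ s in a2..q0.2, pd1 f (q0.1, s)) • ContinuousLinearMap.fst ℝ ℝ ℝ) q0 :=
    (hasDerivAt_param hf a2 q0.2 q0.1).comp_hasFDerivAt q0 hasFDerivAt_fst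
  have h2 := hasFDerivAt_piece hf.continuous q0
  have h3 := h1.add h2
  refine h3.congr_of_eventuallyEq (Filter.Eventually.of_forall fun q => ?_)
  have hi1 : IntervalIntegrable (fun s => f (q.1, s)) volume a2 q0.2 :=
    (hf.continuous.comp (continuous_const.prodMk continuous_id)).intervalIntegrable _ _
  have hi2 : IntervalIntegrable (fun s => f (q.1, s)) volume q0.2 q.2 :=
    (hf.continuous.comp (continuous_const.prodMk continuous_id)).intervalIntegrable _ _
  exact (intervalIntegral.integral_add_adjacent_intervals hi1 hi2).symm

/-- FTC-type inequality allowing a finite exceptional set. -/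
lemma sub_le_integral_finite_exc {exc : Set ℝ} (hexc : exc.Finite) :
    ∀ (n : ℕ) (g g' φ : ℝ → ℝ) (a b : ℝ), a ≤ b → (exc ∩ Ioo a b).ncard ≤ n →
    ContinuousOn g (Icc a b) → (∀ x ∈ Ioo a b \ exc, HasDerivAt g (g' x) x) →
    IntegrableOn φ (Icc a b) → (∀ x ∈ Ioo a b \ exc, g' x ≤ φ x) →
    g b - g a ≤ ∫ y in a..b, φ y := by
  intro n
  induction n with
  | zero =>
    intro g g' φ a b hab hcard hcont hderiv hφint hle
    have hempty : exc ∩ Ioo a b = ∅ :=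
      Set.ncard_eq_zero (hexc.inter_of_left _) |>.1 (Nat.le_zero.1 hcard)
    refine intervalIntegral.sub_le_integral_of_hasDeriv_right_of_le hab hcont (fun x hx => ?_) hφint
        (fun x hx => hle x ⟨hx, fun hmem => ?_⟩)
    · exact (hderiv x ⟨hx, fun hmem =>
        (Set.eq_empty_iff_forall_notMem.1 hempty x ⟨hmem, hx⟩)⟩).hasDerivWithinAt
    · exact Set.eq_empty_iff_forall_notMem.1 hempty x ⟨hmem, hx⟩
  | succ n ih =>
    intro g g' φ a b hab hcard hcont hderiv hφint hle
    by_cases hne : (exc ∩ Ioo a b).Nonempty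
    · obtain ⟨x, hxe, hxm⟩ := hne
      have hfin : (exc ∩ Ioo a b).Finite := hexc.inter_of_left _
      have hsub1 : exc ∩ Ioo a x ⊆ (exc ∩ Ioo a b) \ {x} := fun y hy =>
        Set.mem_diff_singleton.2 ⟨⟨hy.1, hy.2.1, hy.2.2.trans hxm.2⟩, ne_of_lt hy.2.2⟩
      have hsub2 : exc ∩ Ioo x b ⊆ (exc ∩ Ioo a b) \ {x} := fun y hy =>
        Set.mem_diff_singleton.2 ⟨⟨hy.1, hxm.1.trans hy.2.1, hy.2.2⟩, ne_of_gt hy.2.1⟩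
      have hcard' : ((exc ∩ Ioo a b) \ {x}).ncard ≤ n := by
        have := Set.ncard_diff_singleton_lt_of_mem (Set.mem_inter hxe hxm) hfin
        omega
      have hIcc1 : Icc a x ⊆ Icc a b := Icc_subset_Icc le_rfl hxm.2.le
      have hIcc2 : Icc x b ⊆ Icc a b := Icc_subset_Icc hxm.1.le le_rfl
      have hIoo1 : Ioo a x ⊆ Ioo a b := Ioo_subset_Ioo le_rfl hxm.2.le
      have hIoo2 : Ioo x b ⊆ Ioo a b := Ioo_subset_Ioo hxm.1.le le_rfl
      have H1 := ih g g' φ a x hxm.1.le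
        ((Set.ncard_le_ncard hsub1 (hfin.diff)).trans hcard')
        (hcont.mono hIcc1) (fun y hy => hderiv y ⟨hIoo1 hy.1, hy.2⟩)
        (hφint.mono_set hIcc1) (fun y hy => hle y ⟨hIoo1 hy.1, hy.2⟩)
      have H2 := ih g g' φ x b hxm.2.le
        ((Set.ncard_le_ncard hsub2 (hfin.diff)).trans hcard')
        (hcont.mono hIcc2) (fun y hy => hderiv y ⟨hIoo2 hy.1, hy.2⟩)
        (hφint.mono_set hIcc2) (fun y hy => hle y ⟨hIoo2 hy.1, hy.2⟩)
      have hi1 : IntervalIntegrable φ volume a x :=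
        (hφint.mono_set (by rw [uIcc_of_le hxm.1.le]; exact hIcc1)).intervalIntegrable
      have hi2 : IntervalIntegrable φ volume x b :=
        (hφint.mono_set (by rw [uIcc_of_le hxm.2.le]; exact hIcc2)).intervalIntegrable
      have := intervalIntegral.integral_add_adjacent_intervals hi1 hi2
      linarith
    · rw [Set.not_nonempty_iff_eq_empty] at hne
      refine intervalIntegral.sub_le_integral_of_hasDeriv_right_of_le hab hcont (fun y hy => ?_) hφint
          (fun y hy => hle y ⟨hy, fun hmem => ?_⟩)
      · exact (hderiv y ⟨hy, fun hmem =>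
          (Set.eq_empty_iff_forall_notMem.1 hne y ⟨hmem, hy⟩)⟩).hasDerivWithinAt
      · exact Set.eq_empty_iff_forall_notMem.1 hne y ⟨hmem, hy⟩

/-- The (generalized) derivative of a monotone-with-finite-exceptions function is integrable. -/
lemma integrableOn_d_of_monotone {p1 : ℝ → ℝ} {d1 : ℝ → ℝ} {exc : Set ℝ} (hexc : exc.Finite)
    (hmono : MonotoneOn p1 (Icc 0 1))
    (hderiv : ∀ t ∈ Icc (0:ℝ) 1 \ exc, HasDerivAt p1 (d1 t) t) :
    IntegrableOn d1 (Icc 0 1) volume := by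
  set cl : ℝ → ℝ := fun u => max 0 (min 1 u) with hcl
  have hclmem : ∀ u, cl u ∈ Icc (0:ℝ) 1 :=
    fun u => ⟨le_max_left _ _, max_le zero_le_one (min_le_left _ _)⟩
  have hfm : Monotone (fun u => p1 (cl u)) := fun u v huv =>
    hmono (hclmem u) (hclmem v) (max_le_max le_rfl (min_le_min le_rfl huv))
  set R : ℝ → ℝ := fun x => (Measure.rnDeriv hfm.stieltjesFunction.measure volume x).toReal
    with hR
  have hae := hfm.ae_hasDerivAt
  have hRmeas : Measurable R := (Measure.measurable_rnDeriv _ _).ennreal_toReal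
  have hRint : IntegrableOn R (Icc 0 1) volume := by
    constructor
    · exact hRmeas.aestronglyMeasurable.restrict
    · rw [hasFiniteIntegral_iff_ofReal (Filter.Eventually.of_forall fun x => ENNReal.toReal_nonneg)]
      calc ∫⁻ x in Icc (0:ℝ) 1, ENNReal.ofReal (R x)
          ≤ ∫⁻ x in Icc (0:ℝ) 1, Measure.rnDeriv hfm.stieltjesFunction.measure volume x := by
            exact lintegral_mono fun x => ENNReal.ofReal_toReal_le
        _ ≤ hfm.stieltjesFunction.measure (Icc 0 1) := Measure.setLIntegral_rnDeriv_le _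
        _ < ⊤ := by rw [StieltjesFunction.measure_Icc]; exact ENNReal.ofReal_lt_top
  have hnull : volume (exc ∪ ({0, 1} : Set ℝ)) = 0 :=
    measure_union_null (hexc.measure_zero volume)
      (((Set.finite_singleton (1:ℝ)).insert 0).measure_zero volume)
  have heq : d1 =ᵐ[volume.restrict (Icc (0:ℝ) 1)] R := by
    filter_upwards [ae_restrict_of_ae hae,
      ae_restrict_of_ae ((measure_eq_zero_iff_ae_notMem).1 hnull),
      ae_restrict_mem measurableSet_Icc] with x hfx hnm hmem
    have hxexc : x ∉ exc := fun h => hnm (Or.inl h)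
    have hxIoo : x ∈ Ioo (0:ℝ) 1 := by
      refine ⟨lt_of_le_of_ne hmem.1 ?_, lt_of_le_of_ne hmem.2 ?_⟩
      · exact fun h => hnm (Or.inr (by simp [← h]))
      · exact fun h => hnm (Or.inr (by simp [h]))
    have h1 : HasDerivAt p1 (d1 x) x := hderiv x ⟨hmem, hxexc⟩
    have hev : (fun u => p1 (cl u)) =ᶠ[nhds x] p1 := by
      filter_upwards [isOpen_Ioo.mem_nhds hxIoo] with u hu
      simp [hcl, min_eq_right hu.2.le, max_eq_right hu.1.le]
    have h2 : HasDerivAt (fun u => p1 (cl u)) (d1 x) x := h1.congr_of_eventuallyEq hev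
    exact h2.unique hfx
  exact hRint.congr heq.symm

/-- a.e.-positivity on the rectangle implies nonnegative vertical integrals everywhere. -/
lemma delta_nonneg {U : ℝ × ℝ → ℝ} (hU : Continuous U) {a b : ℝ × ℝ}
    (hab1 : a.1 < b.1)
    (hae : ∀ᵐ q ∂(volume.restrict (Icc a b)), 0 < U q) :
    ∀ x ∈ Icc a.1 b.1, ∀ y ∈ Icc a.2 b.2, 0 ≤ ∫ s in a.2..y, U (x, s) := by
  have hprod : (volume : Measure (ℝ × ℝ)).restrict (Icc a b)
      = (volume.restrict (Icc a.1 b.1)).prod (volume.restrict (Icc a.2 b.2)) := by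
    rw [Icc_prod_eq, Measure.volume_eq_prod, Measure.prod_restrict]
  rw [hprod] at hae
  have hfub := Measure.ae_ae_of_ae_prod hae
  set Q : ℝ → Prop := fun x => ∀ y ∈ Icc a.2 b.2, 0 ≤ ∫ s in a.2..y, U (x, s) with hQ
  have hgood : ∀ᵐ x ∂(volume.restrict (Icc a.1 b.1)), Q x := by
    filter_upwards [hfub] with x hx
    intro y hy
    refine intervalIntegral.integral_nonneg_of_ae_restrict hy.1 ?_
    have : ∀ᵐ s ∂(volume.restrict (Icc a.2 y)), 0 < U (x, s) :=
      ae_restrict_of_ae_restrict_of_subset (Icc_subset_Icc le_rfl hy.2) hx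
    filter_upwards [this] with s hs using hs.le
  by_contra hcon
  push_neg at hcon
  obtain ⟨x0, hx0, y0, hy0, hneg⟩ := hcon
  have hcx : ContinuousAt (fun x => ∫ s in a.2..y0, U (x, s)) x0 := by
    have h1 : Continuous fun p : ℝ × ℝ => ∫ s in a.2..p.2, U (p.1, s) :=
      intervalIntegral.continuous_parametric_primitive_of_continuous (f := fun x s => U (x, s))
        (by exact hU.comp (continuous_fst.prodMk continuous_snd))
    exact (h1.comp (continuous_id.prodMk continuous_const)).continuousAt
  have hnb : ∀ᶠ x in nhds x0, (∫ s in a.2..y0, U (x, s)) < 0 :=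
    hcx.eventually_lt continuousAt_const hneg
  obtain ⟨δ, hδpos, hδ⟩ := Metric.eventually_nhds_iff_ball.1 hnb
  set L := max a.1 (x0 - δ) with hL
  set R := min b.1 (x0 + δ) with hRdef
  have hLR : L < R := by
    rcases max_cases a.1 (x0 - δ) with ⟨h1, h2⟩ | ⟨h1, h2⟩ <;>
      rcases min_cases b.1 (x0 + δ) with ⟨h3, h4⟩ | ⟨h3, h4⟩ <;>
        simp only [hL, hRdef, h1, h3] <;>
          first
          | linarith [hx0.1, hx0.2]
          | linarith [hx0.1, hx0.2, hδpos]
  have hsub : Ioo L R ⊆ {x | ¬ Q x} := by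
    intro x hx
    have hball : x ∈ Metric.ball x0 δ := by
      rw [Metric.mem_ball, Real.dist_eq, abs_lt]
      constructor
      · linarith [lt_of_le_of_lt (le_max_right a.1 (x0 - δ)) hx.1]
      · linarith [lt_of_lt_of_le hx.2 (min_le_right b.1 (x0 + δ))]
    intro hQx
    exact absurd (hQx y0 hy0) (not_le.2 (hδ x hball))
  have h0 : (volume.restrict (Icc a.1 b.1)) {x | ¬ Q x} = 0 := hgood
  have hmono : (volume.restrict (Icc a.1 b.1)) (Ioo L R) = 0 :=
    le_antisymm (h0 ▸ measure_mono hsub) (zero_le ..)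
  rw [Measure.restrict_apply measurableSet_Ioo] at hmono
  have hIoosub : Ioo L R ∩ Icc a.1 b.1 = Ioo L R :=
    inter_eq_left.2 fun x hx =>
      ⟨(le_max_left a.1 (x0 - δ)).trans hx.1.le, hx.2.le.trans (min_le_left b.1 (x0 + δ))⟩
  rw [hIoosub, Real.volume_Ioo] at hmono
  exact absurd hmono (by simp [ENNReal.ofReal_eq_zero]; linarith)

end AuxLemmas

/-- if `U > 0` a.e. on the rectangle `[a₁,b₁]×[a₂,b₂]`, the
horizontal-then-vertical two-segment path from `a` to `b` is optimal. -/
theorem hv_path_optimal (c : ℝ × ℝ → ℝ × ℝ) (hc : ContDiff ℝ 1 c)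
    (a b : ℝ × ℝ) (hab1 : a.1 ≤ b.1) (hab2 : a.2 ≤ b.2)
    (hU : ∀ᵐ q ∂(volume.restrict (Icc a b)), 0 < Ucurl c q)
    (γ : MonoPath) (hγ : IsMonoPathFromTo γ a b) :
    (∫ t in a.1..b.1, (c (t, a.2)).1) + (∫ s in a.2..b.2, (c (b.1, s)).2) ≤
      pathCost c γ := by
  classical
  set c1 : ℝ × ℝ → ℝ := fun q => (c q).1 with hc1def
  set c2 : ℝ × ℝ → ℝ := fun q => (c q).2 with hc2def
  have hc1 : ContDiff ℝ 1 c1 := contDiff_fst.comp hc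
  have hc2 : ContDiff ℝ 1 c2 := contDiff_snd.comp hc
  -- rewrite Ucurl in terms of pd1/pd2
  have hUeq : ∀ q : ℝ × ℝ, Ucurl c q = pd2 c1 q - pd1 c2 q := by
    intro q
    have h1 : deriv (fun y => (c (q.1, y)).1) q.2 = pd2 c1 q := by
      have h := hasDerivAt_pd2 hc1 q.1 q.2
      exact h.deriv
    have h2 : deriv (fun s => (c (s, q.2)).2) q.1 = pd1 c2 q := by
      have h := hasDerivAt_pd1 hc2 q.1 q.2
      exact h.deriv
    rw [Ucurl, h1, h2]
  -- monotonicity of the coordinates of the path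
  have hmono1 : MonotoneOn (fun t => (γ.p t).1) (Icc 0 1) := by
    intro s hs t ht hst
    have key := sub_le_integral_finite_exc γ.exc_finite ((γ.exc ∩ Ioo s t).ncard)
      (fun u => -(γ.p u).1) (fun u => -(γ.d u).1) (fun _ => (0:ℝ)) s t hst le_rfl
      (((continuous_fst.comp_continuousOn γ.cont).mono (Icc_subset_Icc hs.1 ht.2)).neg)
      (fun x hx => (γ.deriv_fst x ⟨Icc_subset_Icc hs.1 ht.2 (Ioo_subset_Icc_self hx.1), hx.2⟩).neg)
      ((integrable_zero _ _ _).integrableOn)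
      (fun x hx => neg_nonpos.2 (γ.d_fst_nonneg x (Icc_subset_Icc hs.1 ht.2 (Ioo_subset_Icc_self hx.1))))
    simp only [intervalIntegral.integral_zero] at key
    linarith
  have hmono2 : MonotoneOn (fun t => (γ.p t).2) (Icc 0 1) := by
    intro s hs t ht hst
    have key := sub_le_integral_finite_exc γ.exc_finite ((γ.exc ∩ Ioo s t).ncard)
      (fun u => -(γ.p u).2) (fun u => -(γ.d u).2) (fun _ => (0:ℝ)) s t hst le_rfl
      (((continuous_snd.comp_continuousOn γ.cont).mono (Icc_subset_Icc hs.1 ht.2)).neg)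
      (fun x hx => (γ.deriv_snd x ⟨Icc_subset_Icc hs.1 ht.2 (Ioo_subset_Icc_self hx.1), hx.2⟩).neg)
      ((integrable_zero _ _ _).integrableOn)
      (fun x hx => neg_nonpos.2 (γ.d_snd_nonneg x (Icc_subset_Icc hs.1 ht.2 (Ioo_subset_Icc_self hx.1))))
    simp only [intervalIntegral.integral_zero] at key
    linarith
  have hd1int : IntegrableOn (fun t => (γ.d t).1) (Icc 0 1) volume :=
    integrableOn_d_of_monotone γ.exc_finite hmono1 γ.deriv_fst
  have hd2int : IntegrableOn (fun t => (γ.d t).2) (Icc 0 1) volume :=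
    integrableOn_d_of_monotone γ.exc_finite hmono2 γ.deriv_snd
  -- the cost integrand and its integrability
  set φ : ℝ → ℝ := fun t => (c (γ.p t)).1 * (γ.d t).1 + (c (γ.p t)).2 * (γ.d t).2 with hφdef
  obtain ⟨M, hM⟩ := (isCompact_Icc : IsCompact (Icc a b)).exists_bound_of_continuousOn
    hc.continuous.continuousOn
  have hcp : ContinuousOn (fun t => c (γ.p t)) (Icc 0 1) :=
    hc.continuous.comp_continuousOn γ.cont
  have hφint : IntegrableOn φ (Icc 0 1) volume := by
    refine Integrable.mono' (((hd1int.const_mul M).add (hd2int.const_mul M))) ?_ ?_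
    · exact (((continuous_fst.comp_continuousOn hcp).aestronglyMeasurable
          measurableSet_Icc).mul hd1int.aestronglyMeasurable).add
        (((continuous_snd.comp_continuousOn hcp).aestronglyMeasurable
          measurableSet_Icc).mul hd2int.aestronglyMeasurable)
    · filter_upwards [ae_restrict_mem measurableSet_Icc] with t ht
      have hmem := hγ.2.2 t ht
      have h1 : |(c (γ.p t)).1| ≤ M := (norm_fst_le (c (γ.p t))).trans (hM _ hmem)
      have h2 : |(c (γ.p t)).2| ≤ M := (norm_snd_le (c (γ.p t))).trans (hM _ hmem)
      have hd1 := γ.d_fst_nonneg t ht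
      have hd2 := γ.d_snd_nonneg t ht
      calc ‖φ t‖ ≤ |(c (γ.p t)).1 * (γ.d t).1| + |(c (γ.p t)).2 * (γ.d t).2| := abs_add_le _ _
        _ = |(c (γ.p t)).1| * (γ.d t).1 + |(c (γ.p t)).2| * (γ.d t).2 := by
            rw [abs_mul, abs_mul, abs_of_nonneg hd1, abs_of_nonneg hd2]
        _ ≤ M * (γ.d t).1 + M * (γ.d t).2 := by
            exact add_le_add (mul_le_mul_of_nonneg_right h1 hd1)
              (mul_le_mul_of_nonneg_right h2 hd2)
  -- the potential
  set A : ℝ → ℝ := fun x => ∫ t in a.1..x, (c (t, a.2)).1 with hAdef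
  have hcont1 : Continuous fun t : ℝ => (c (t, a.2)).1 :=
    continuous_fst.comp (hc.continuous.comp (continuous_id.prodMk continuous_const))
  have hAderiv : ∀ x : ℝ, HasDerivAt A ((c (x, a.2)).1) x := fun x =>
    intervalIntegral.integral_hasDerivAt_right (hcont1.intervalIntegrable _ _)
      (hcont1.stronglyMeasurableAtFilter _ _) hcont1.continuousAt
  set Bf : ℝ × ℝ → ℝ := fun q => ∫ s in a.2..q.2, (c (q.1, s)).2 with hBdef
  have hB : ∀ q : ℝ × ℝ, HasFDerivAt Bf
      ((∫ s in a.2..q.2, pd1 c2 (q.1, s)) • ContinuousLinearMap.fst ℝ ℝ ℝ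
        + c2 q • ContinuousLinearMap.snd ℝ ℝ ℝ) q := fun q => hasFDerivAt_B hc2 a.2 q
  set g : ℝ → ℝ := fun u => A ((γ.p u).1) + Bf (γ.p u) with hgdef
  have hgcont : ContinuousOn g (Icc 0 1) := by
    have hAc : Continuous A := Differentiable.continuous fun x => (hAderiv x).differentiableAt
    have hBc : Continuous Bf := Differentiable.continuous fun q => (hB q).differentiableAt
    exact ((hAc.comp continuous_fst).comp_continuousOn γ.cont).add (hBc.comp_continuousOn γ.cont)
  -- candidate derivative of g along the path
  set ψ : ℝ → ℝ := fun t => (c ((γ.p t).1, a.2)).1 * (γ.d t).1 +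
      ((∫ s in a.2..(γ.p t).2, pd1 c2 ((γ.p t).1, s)) * (γ.d t).1 + (c (γ.p t)).2 * (γ.d t).2)
    with hψdef
  have hgderiv : ∀ t ∈ Ioo (0:ℝ) 1 \ γ.exc, HasDerivAt g (ψ t) t := by
    intro t ht
    have htIcc : t ∈ Icc (0:ℝ) 1 \ γ.exc := ⟨Ioo_subset_Icc_self ht.1, ht.2⟩
    have hd1 := γ.deriv_fst t htIcc
    have hd2 := γ.deriv_snd t htIcc
    have hp : HasDerivAt γ.p (γ.d t) t := by
      have h := hd1.prodMk hd2
      simpa using h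
    have h1 : HasDerivAt (fun u => A ((γ.p u).1)) ((c (((γ.p t).1), a.2)).1 * (γ.d t).1) t :=
      (hAderiv _).comp t hd1
    have h2 := (hB (γ.p t)).comp_hasDerivAt t hp
    have h2' : HasDerivAt (fun u => Bf (γ.p u))
        ((∫ s in a.2..(γ.p t).2, pd1 c2 ((γ.p t).1, s)) * (γ.d t).1
          + (c (γ.p t)).2 * (γ.d t).2) t := by
      exact h2
    exact h1.add h2'
  -- the pointwise inequality ψ ≤ φ
  have hψle : ∀ t ∈ Ioo (0:ℝ) 1 \ γ.exc, ψ t ≤ φ t := by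
    rcases eq_or_lt_of_le hab1 with heq | hlt
    · -- degenerate case: the first coordinate is constant
      intro t ht
      have htIcc : t ∈ Icc (0:ℝ) 1 \ γ.exc := ⟨Ioo_subset_Icc_self ht.1, ht.2⟩
      have hconst : ∀ u ∈ Ioo (0:ℝ) 1, (γ.p u).1 = a.1 := by
        intro u hu
        have hm := hγ.2.2 u (Ioo_subset_Icc_self hu)
        have hle1 : a.1 ≤ (γ.p u).1 := (Prod.le_def.1 hm.1).1
        have hle2 : (γ.p u).1 ≤ b.1 := (Prod.le_def.1 hm.2).1
        exact le_antisymm (hle2.trans_eq heq.symm) hle1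
      have hzero : HasDerivAt (fun u => (γ.p u).1) 0 t := by
        refine (hasDerivAt_const t a.1).congr_of_eventuallyEq ?_
        filter_upwards [isOpen_Ioo.mem_nhds ht.1] with u hu using hconst u hu
      have hd10 : (γ.d t).1 = 0 := (γ.deriv_fst t htIcc).unique hzero
      simp only [hψdef, hφdef, hd10, mul_zero, zero_add, add_zero]
      linarith
    · -- main case: use the a.e. curl positivity
      have hUc : Continuous fun q : ℝ × ℝ => pd2 c1 q - pd1 c2 q :=
        (continuous_pd2 hc1).sub (continuous_pd1 hc2)
      have hae' : ∀ᵐ q ∂(volume.restrict (Icc a b)), 0 < pd2 c1 q - pd1 c2 q := by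
        filter_upwards [hU] with q hq
        rwa [hUeq q] at hq
      have hkey := delta_nonneg hUc hlt hae'
      intro t ht
      have htIcc' : t ∈ Icc (0:ℝ) 1 := Ioo_subset_Icc_self ht.1
      have hm := hγ.2.2 t htIcc'
      have hx1 : (γ.p t).1 ∈ Icc a.1 b.1 := ⟨(Prod.le_def.1 hm.1).1, (Prod.le_def.1 hm.2).1⟩
      have hx2 : (γ.p t).2 ∈ Icc a.2 b.2 := ⟨(Prod.le_def.1 hm.1).2, (Prod.le_def.1 hm.2).2⟩
      have hΔ := hkey _ hx1 _ hx2
      -- FTC in the second variable for c1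
      have hftc : (∫ s in a.2..(γ.p t).2, pd2 c1 ((γ.p t).1, s))
          = (c (γ.p t)).1 - (c ((γ.p t).1, a.2)).1 := by
        have h := intervalIntegral.integral_eq_sub_of_hasDerivAt
          (f := fun y => (c ((γ.p t).1, y)).1) (a := a.2) (b := (γ.p t).2)
          (fun s _ => hasDerivAt_pd2 hc1 (γ.p t).1 s)
          (((continuous_pd2 hc1).comp
            (continuous_const.prodMk continuous_id)).intervalIntegrable _ _)
        rw [h]
      have hsplit : (∫ s in a.2..(γ.p t).2, (pd2 c1 ((γ.p t).1, s) - pd1 c2 ((γ.p t).1, s)))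
          = (∫ s in a.2..(γ.p t).2, pd2 c1 ((γ.p t).1, s))
            - ∫ s in a.2..(γ.p t).2, pd1 c2 ((γ.p t).1, s) := by
        exact intervalIntegral.integral_sub
          (((continuous_pd2 hc1).comp
            (continuous_const.prodMk continuous_id)).intervalIntegrable _ _)
          (((continuous_pd1 hc2).comp
            (continuous_const.prodMk continuous_id)).intervalIntegrable _ _)
      have hineq : (c ((γ.p t).1, a.2)).1 + (∫ s in a.2..(γ.p t).2, pd1 c2 ((γ.p t).1, s))
          ≤ (c (γ.p t)).1 := by
        rw [hsplit, hftc] at hΔ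
        linarith
      have hd1n := γ.d_fst_nonneg t htIcc'
      simp only [hψdef, hφdef]
      nlinarith [mul_le_mul_of_nonneg_right hineq hd1n]
  -- conclude with the FTC-type inequality
  have hfinal := sub_le_integral_finite_exc γ.exc_finite ((γ.exc ∩ Ioo 0 1).ncard)
    g ψ φ 0 1 zero_le_one le_rfl hgcont hgderiv hφint hψle
  have hg0 : g 0 = 0 := by
    simp only [hgdef, hγ.1]
    simp [hAdef, hBdef]
  have hg1 : g 1 = (∫ t in a.1..b.1, (c (t, a.2)).1) + ∫ s in a.2..b.2, (c (b.1, s)).2 := by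
    simp only [hgdef, hγ.2.1]
    rfl
  have hpc : pathCost c γ = ∫ t in (0:ℝ)..1, φ t := rfl
  rw [hpc]
  rw [hg1, hg0, sub_zero] at hfinal
  exact hfinal
end

section
/- (Point-to-point optimal path, negative curl case.) Let c=(c1,c2):ℝ²→ℝ² be a C¹ cost field and let a=(a1,a2), b=(b1,b2) with a1≤b1 and a2≤b2. If U(x)<0 for almost every x in the rectangle R_ab=[a1,b1]×[a2,b2], then every monotone path γ from a to b satisfies cost(γ) ≥ ∫_{a2}^{b2} c2(a1,s) ds + ∫_{a1}^{b1} c1(t,b2) dt; that is, the two-segment path consisting of the vertical segment {(a1,y): a2≤y≤b2} followed by the horizontal segment {(x,b2): a1≤x≤b1} (whose cost is the right-hand side) is optimal. -/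
open MeasureTheory Set

/-! ### Auxiliary machinery -/

/-- Second partial derivative (in the `x₂` direction) of a function on the plane. -/
noncomputable def VHD2 (f : ℝ × ℝ → ℝ) (q : ℝ × ℝ) : ℝ := fderiv ℝ f q ((0:ℝ),(1:ℝ))
/-- First partial derivative (in the `x₁` direction) of a function on the plane. -/
noncomputable def VHD1 (f : ℝ × ℝ → ℝ) (q : ℝ × ℝ) : ℝ := fderiv ℝ f q ((1:ℝ),(0:ℝ))

lemma VHD2_cont (f : ℝ × ℝ → ℝ) (hf : ContDiff ℝ 1 f) : Continuous (VHD2 f) :=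
  (ContinuousLinearMap.apply ℝ ℝ ((0:ℝ),(1:ℝ))).continuous.comp (hf.continuous_fderiv one_ne_zero)

lemma VHD1_cont (f : ℝ × ℝ → ℝ) (hf : ContDiff ℝ 1 f) : Continuous (VHD1 f) :=
  (ContinuousLinearMap.apply ℝ ℝ ((1:ℝ),(0:ℝ))).continuous.comp (hf.continuous_fderiv one_ne_zero)

lemma hasDerivAt_snd_slice (f : ℝ × ℝ → ℝ) (hf : ContDiff ℝ 1 f) (x : ℝ × ℝ) :
    HasDerivAt (fun y => f (x.1, y)) (VHD2 f x) x.2 := by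
  have h1 : HasDerivAt (fun y : ℝ => ((x.1 : ℝ), y)) ((0:ℝ),(1:ℝ)) x.2 :=
    (hasDerivAt_const x.2 x.1).prodMk (hasDerivAt_id x.2)
  have := ((hf.differentiable one_ne_zero x).hasFDerivAt).comp_hasDerivAt x.2 (by simpa using h1)
  exact this

lemma hasDerivAt_fst_slice (f : ℝ × ℝ → ℝ) (hf : ContDiff ℝ 1 f) (x : ℝ × ℝ) :
    HasDerivAt (fun s => f (s, x.2)) (VHD1 f x) x.1 := by
  have h1 : HasDerivAt (fun s : ℝ => (s, (x.2:ℝ))) ((1:ℝ),(0:ℝ)) x.1 :=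
    (hasDerivAt_id x.1).prodMk (hasDerivAt_const x.1 x.2)
  have := ((hf.differentiable one_ne_zero x).hasFDerivAt).comp_hasDerivAt x.1 (by simpa using h1)
  exact this

lemma Ucurl_eq (c : ℝ × ℝ → ℝ × ℝ) (hc : ContDiff ℝ 1 c) (q : ℝ × ℝ) :
    Ucurl c q = VHD2 (fun x => (c x).1) q - VHD1 (fun x => (c x).2) q := by
  have h1 := (hasDerivAt_snd_slice (fun x => (c x).1) hc.fst q).deriv
  have h2 := (hasDerivAt_fst_slice (fun x => (c x).2) hc.snd q).deriv
  rw [Ucurl, h1, h2]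

lemma vh_ftc1 (g : ℝ → ℝ) (hg : Continuous g) (α x : ℝ) :
    HasDerivAt (fun y => ∫ s in α..y, g s) (g x) x :=
  intervalIntegral.integral_hasDerivAt_right (hg.intervalIntegrable _ _)
    (hg.stronglyMeasurableAtFilter _ _) hg.continuousAt

lemma vh_ftc2 (f : ℝ × ℝ → ℝ) (hf : ContDiff ℝ 1 f) (α x y : ℝ) :
    ∫ t in α..x, VHD1 f (t, y) = f (x, y) - f (α, y) := by
  have hcont : Continuous (fun t => VHD1 f (t, y)) :=
    (VHD1_cont f hf).comp (continuous_id.prodMk continuous_const)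
  exact intervalIntegral.integral_eq_sub_of_hasDerivAt
    (f := fun s => f (s, y)) (fun t _ => by simpa using hasDerivAt_fst_slice f hf (t, y))
    (hcont.intervalIntegrable _ _)

/-- Auxiliary substitution kernel used to prove joint differentiability of
`x ↦ ∫ t in a1..x.1, (c (t, x.2)).1`. -/
noncomputable def vhPsi (c : ℝ × ℝ → ℝ × ℝ) (a1 : ℝ) (q : (ℝ×ℝ)×ℝ) : ℝ :=
  (q.1.1 - a1) * (c (a1 + q.2 * (q.1.1 - a1), q.1.2)).1

lemma vhPsi_contDiff (c : ℝ × ℝ → ℝ × ℝ) (hc : ContDiff ℝ 1 c) (a1 : ℝ) :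
    ContDiff ℝ 1 (vhPsi c a1) := by
  have hm : ContDiff ℝ 1 (fun q : (ℝ×ℝ)×ℝ => (a1 + q.2 * (q.1.1 - a1), q.1.2)) :=
    (contDiff_const.add (contDiff_snd.mul ((contDiff_fst.fst).sub contDiff_const))).prodMk
      contDiff_fst.snd
  exact ((contDiff_fst.fst).sub contDiff_const).mul (hc.fst.comp hm)

lemma vhG_diffAt (c : ℝ × ℝ → ℝ × ℝ) (hc : ContDiff ℝ 1 c) (a1 : ℝ) (q : ℝ×ℝ) :
    DifferentiableAt ℝ (fun x : ℝ×ℝ => ∫ t in a1..x.1, (c (t, x.2)).1) q := by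
  have hΨ := vhPsi_contDiff c hc a1
  have hΨc : Continuous (vhPsi c a1) := hΨ.continuous
  have hsub : (fun x : ℝ×ℝ => ∫ t in a1..x.1, (c (t, x.2)).1)
      = fun x => ∫ u in (0:ℝ)..1, vhPsi c a1 (x,u) := by
    funext x
    have hf : Continuous (fun t => (c (t, x.2)).1) :=
      (continuous_fst.comp hc.continuous).comp (continuous_id.prodMk continuous_const)
    have h := intervalIntegral.integral_comp_smul_deriv (a := (0:ℝ)) (b := 1)
        (f := fun u => a1 + u * (x.1 - a1)) (f' := fun _ => x.1 - a1)
        (g := fun t => (c (t, x.2)).1)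
        (fun u _ => by simpa using ((hasDerivAt_id u).mul_const (x.1 - a1)).const_add a1)
        continuousOn_const hf
    simp only [smul_eq_mul, Function.comp] at h
    norm_num at h
    rw [← h]
    simp [vhPsi]
  rw [hsub]
  set Φ' : (ℝ×ℝ) → ℝ → (ℝ×ℝ) →L[ℝ] ℝ := fun x u =>
    (fderiv ℝ (vhPsi c a1) (x,u)).comp (ContinuousLinearMap.inl ℝ (ℝ×ℝ) ℝ) with hΦ'
  have hfd : Continuous (fun p : (ℝ×ℝ)×ℝ => fderiv ℝ (vhPsi c a1) p) :=
    hΨ.continuous_fderiv one_ne_zero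
  obtain ⟨M, hM⟩ := ((isCompact_closedBall q 1).prod (isCompact_Icc (a := (0:ℝ)) (b := 1)))
    |>.exists_bound_of_continuousOn hfd.continuousOn
  have key := intervalIntegral.hasFDerivAt_integral_of_dominated_of_fderiv_le (𝕜 := ℝ)
    (F := fun x u => vhPsi c a1 (x,u)) (F' := Φ') (x₀ := q) (a := 0) (b := 1) (μ := volume)
    (s := Metric.ball q 1) (bound := fun _ => M * ‖(ContinuousLinearMap.inl ℝ (ℝ×ℝ) ℝ)‖)
    (Metric.ball_mem_nhds q one_pos)
    (Filter.Eventually.of_forall fun x =>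
      (hΨc.comp (continuous_const.prodMk continuous_id)).aestronglyMeasurable)
    ((hΨc.comp (continuous_const.prodMk continuous_id)).intervalIntegrable _ _)
    (((hfd.comp (continuous_const.prodMk continuous_id)).clm_comp
      continuous_const).aestronglyMeasurable)
    (Filter.Eventually.of_forall fun u hu x hx => by
      refine (ContinuousLinearMap.opNorm_comp_le _ _).trans ?_
      have : ‖fderiv ℝ (vhPsi c a1) (x, u)‖ ≤ M := by
        refine hM _ ⟨Metric.ball_subset_closedBall hx, ?_⟩
        have := Set.uIoc_of_le (by norm_num : (0:ℝ) ≤ 1) ▸ hu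
        exact Ioc_subset_Icc_self this
      exact mul_le_mul_of_nonneg_right this (norm_nonneg _))
    (intervalIntegrable_const)
    (Filter.Eventually.of_forall fun u hu x hx =>
      by have h := ((hΨ.differentiable one_ne_zero (x,u)).hasFDerivAt).comp x (hasFDerivAt_prodMk_left (𝕜 := ℝ) x u); exact h)
  exact key.differentiableAt

/-- Differentiation under the integral sign in the second variable. -/
lemma vhGy (f : ℝ × ℝ → ℝ) (hf : ContDiff ℝ 1 f) (a1 x y₀ : ℝ) :
    HasDerivAt (fun y => ∫ t in a1..x, f (t, y)) (∫ t in a1..x, VHD2 f (t, y₀)) y₀ := by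
  have hD2 := VHD2_cont f hf
  obtain ⟨M, hM⟩ := ((isCompact_uIcc (a := a1) (b := x)).prod
      (isCompact_closedBall y₀ 1)).exists_bound_of_continuousOn
      ((hD2.comp (continuous_id.prodMap continuous_id)).continuousOn)
  have key := intervalIntegral.hasDerivAt_integral_of_dominated_loc_of_deriv_le (𝕜 := ℝ)
    (F := fun y t => f (t, y)) (F' := fun y t => VHD2 f (t, y)) (x₀ := y₀)
    (a := a1) (b := x) (μ := volume) (s := Metric.ball y₀ 1) (bound := fun _ => M)
    (Metric.ball_mem_nhds y₀ one_pos)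
    (Filter.Eventually.of_forall fun y =>
      ((hf.continuous.comp (continuous_id.prodMk continuous_const)).aestronglyMeasurable))
    ((hf.continuous.comp (continuous_id.prodMk continuous_const)).intervalIntegrable _ _)
    ((hD2.comp (continuous_id.prodMk continuous_const)).aestronglyMeasurable)
    (Filter.Eventually.of_forall fun t ht z hz => by
      have : (t, z) ∈ (uIcc a1 x) ×ˢ Metric.closedBall y₀ 1 :=
        ⟨uIoc_subset_uIcc ht, Metric.ball_subset_closedBall hz⟩
      simpa using hM _ this)
    intervalIntegrable_const
    (Filter.Eventually.of_forall fun t ht z hz =>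
      hasDerivAt_snd_slice f hf (t, z))
  exact key.2

/-- A continuous function that is a.e. negative on a nondegenerate rectangle is
nonpositive everywhere on it. -/
lemma vh_nonpos_of_ae_neg {U : ℝ × ℝ → ℝ} (hUc : Continuous U) (a b : ℝ × ℝ)
    (h1 : a.1 < b.1) (h2 : a.2 < b.2)
    (hU : ∀ᵐ q ∂(volume.restrict (Icc a b)), U q < 0) :
    ∀ q ∈ Icc a b, U q ≤ 0 := by
  intro q hq
  by_contra hpos
  push_neg at hpos
  have hVopen : IsOpen (U ⁻¹' Ioi 0) := isOpen_Ioi.preimage hUc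
  have hIcc : (Icc a b : Set (ℝ × ℝ)) = Icc a.1 b.1 ×ˢ Icc a.2 b.2 := Icc_prod_eq a b
  have hclos : q ∈ closure (Ioo a.1 b.1 ×ˢ Ioo a.2 b.2) := by
    rw [closure_prod_eq, closure_Ioo h1.ne, closure_Ioo h2.ne, ← hIcc]
    exact hq
  have hW : ((U ⁻¹' Ioi 0) ∩ (Ioo a.1 b.1 ×ˢ Ioo a.2 b.2)).Nonempty :=
    mem_closure_iff.mp hclos _ hVopen hpos
  set W := (U ⁻¹' Ioi 0) ∩ (Ioo a.1 b.1 ×ˢ Ioo a.2 b.2) with hWdef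
  have hWopen : IsOpen W := hVopen.inter ((isOpen_Ioo).prod isOpen_Ioo)
  have hWpos : 0 < volume W := hWopen.measure_pos volume hW
  have hmeas : MeasurableSet {q | ¬ U q < 0} := by
    have : {q | ¬ U q < 0} = U ⁻¹' Ici 0 := by ext x; simp [not_lt]
    rw [this]; exact (isClosed_Ici.preimage hUc).measurableSet
  have hzero : volume ({q | ¬ U q < 0} ∩ Icc a b) = 0 := by
    have := (ae_iff.mp hU)
    rwa [Measure.restrict_apply hmeas] at this
  have hWsub : W ⊆ {q | ¬ U q < 0} ∩ Icc a b := by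
    rintro x ⟨hx1, hx2⟩
    refine ⟨by simp only [mem_setOf_eq, not_lt]; exact le_of_lt hx1, ?_⟩
    rw [hIcc]
    exact ⟨Ioo_subset_Icc_self hx2.1, Ioo_subset_Icc_self hx2.2⟩
  exact absurd (measure_mono_null hWsub hzero) hWpos.ne'

/-- FTC-type inequality allowing a finite exceptional set. -/
lemma vh_sub_le_integral_exc : ∀ (n : ℕ) {g g' φ : ℝ → ℝ} {α β : ℝ} (s : Set ℝ),
    (s ∩ Ioo α β).encard ≤ n → α ≤ β → ContinuousOn g (Icc α β) →
    (∀ x ∈ Ioo α β \ s, HasDerivAt g (g' x) x) → IntegrableOn φ (Icc α β) →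
    (∀ x ∈ Ioo α β \ s, g' x ≤ φ x) → g β - g α ≤ ∫ y in α..β, φ y := by
  intro n
  induction n with
  | zero =>
    intro g g' φ α β s hcard hab hcont hderiv hint hle
    have hs : s ∩ Ioo α β = ∅ := by
      simpa [Set.encard_eq_zero] using hcard
    have hnot : ∀ x ∈ Ioo α β, x ∉ s := fun x hx hxs =>
      (Set.eq_empty_iff_forall_notMem.mp hs x) ⟨hxs, hx⟩
    exact intervalIntegral.sub_le_integral_of_hasDeriv_right_of_le hab hcont
      (fun x hx => (hderiv x ⟨hx, hnot x hx⟩).hasDerivWithinAt) hint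
      (fun x hx => hle x ⟨hx, hnot x hx⟩)
  | succ n ih =>
    intro g g' φ α β s hcard hab hcont hderiv hint hle
    rcases Set.eq_empty_or_nonempty (s ∩ Ioo α β) with hs | ⟨m, hms, hm⟩
    · have hnot : ∀ x ∈ Ioo α β, x ∉ s := fun x hx hxs =>
        (Set.eq_empty_iff_forall_notMem.mp hs x) ⟨hxs, hx⟩
      exact intervalIntegral.sub_le_integral_of_hasDeriv_right_of_le hab hcont
        (fun x hx => (hderiv x ⟨hx, hnot x hx⟩).hasDerivWithinAt) hint
        (fun x hx => hle x ⟨hx, hnot x hx⟩)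
    · have hcard' : ((s ∩ Ioo α β) \ {m}).encard ≤ n := by
        have h1 := Set.encard_diff_singleton_add_one (show m ∈ s ∩ Ioo α β from ⟨hms, hm⟩)
        have : ((s ∩ Ioo α β) \ {m}).encard + 1 ≤ (n : ℕ∞) + 1 := by
          rw [h1]; exact_mod_cast hcard
        exact (WithTop.add_le_add_iff_right ENat.one_ne_top).mp this
      have hsub1 : s ∩ Ioo α m ⊆ (s ∩ Ioo α β) \ {m} := fun x hx =>
        ⟨⟨hx.1, hx.2.1, hx.2.2.trans hm.2⟩, fun hxm => by
          simp only [mem_singleton_iff] at hxm; exact absurd (hxm ▸ hx.2.2) (lt_irrefl m)⟩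
      have hsub2 : s ∩ Ioo m β ⊆ (s ∩ Ioo α β) \ {m} := fun x hx =>
        ⟨⟨hx.1, hm.1.trans hx.2.1, hx.2.2⟩, fun hxm => by
          simp only [mem_singleton_iff] at hxm; exact absurd (hxm ▸ hx.2.1) (lt_irrefl m)⟩
      have I1 := ih (s := s) (α := α) (β := m) ((Set.encard_mono hsub1).trans hcard')
        hm.1.le (hcont.mono (Icc_subset_Icc le_rfl hm.2.le))
        (fun x hx => hderiv x ⟨⟨hx.1.1, hx.1.2.trans hm.2⟩, hx.2⟩)
        (hint.mono_set (Icc_subset_Icc le_rfl hm.2.le))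
        (fun x hx => hle x ⟨⟨hx.1.1, hx.1.2.trans hm.2⟩, hx.2⟩)
      have I2 := ih (s := s) (α := m) (β := β) ((Set.encard_mono hsub2).trans hcard')
        hm.2.le (hcont.mono (Icc_subset_Icc hm.1.le le_rfl))
        (fun x hx => hderiv x ⟨⟨hm.1.trans hx.1.1, hx.1.2⟩, hx.2⟩)
        (hint.mono_set (Icc_subset_Icc hm.1.le le_rfl))
        (fun x hx => hle x ⟨⟨hm.1.trans hx.1.1, hx.1.2⟩, hx.2⟩)
      have hii1 : IntervalIntegrable φ volume α m :=
        (hint.mono_set (by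
          rw [uIcc_of_le hm.1.le]; exact Icc_subset_Icc le_rfl hm.2.le)).intervalIntegrable
      have hii2 : IntervalIntegrable φ volume m β :=
        (hint.mono_set (by
          rw [uIcc_of_le hm.2.le]; exact Icc_subset_Icc hm.1.le le_rfl)).intervalIntegrable
      have hsum := intervalIntegral.integral_add_adjacent_intervals hii1 hii2
      linarith

/-- Integrability of a nonnegative derivative, allowing a finite exceptional set. -/
lemma vh_integrableOn_deriv_exc : ∀ (n : ℕ) {g g' : ℝ → ℝ} {α β : ℝ} (s : Set ℝ),
    (s ∩ Ioo α β).encard ≤ n → α ≤ β → ContinuousOn g (Icc α β) →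
    (∀ x ∈ Ioo α β \ s, HasDerivAt g (g' x) x) →
    (∀ x ∈ Ioo α β, 0 ≤ g' x) → IntegrableOn g' (Icc α β) := by
  intro n
  induction n with
  | zero =>
    intro g g' α β s hcard hab hcont hderiv hpos
    have hs : s ∩ Ioo α β = ∅ := by simpa [Set.encard_eq_zero] using hcard
    have hnot : ∀ x ∈ Ioo α β, x ∉ s := fun x hx hxs =>
      (Set.eq_empty_iff_forall_notMem.mp hs x) ⟨hxs, hx⟩
    rw [integrableOn_Icc_iff_integrableOn_Ioc]
    exact intervalIntegral.integrableOn_deriv_of_nonneg hcont (fun x hx => hderiv x ⟨hx, hnot x hx⟩) hpos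
  | succ n ih =>
    intro g g' α β s hcard hab hcont hderiv hpos
    rcases Set.eq_empty_or_nonempty (s ∩ Ioo α β) with hs | ⟨m, hms, hm⟩
    · have hnot : ∀ x ∈ Ioo α β, x ∉ s := fun x hx hxs =>
        (Set.eq_empty_iff_forall_notMem.mp hs x) ⟨hxs, hx⟩
      rw [integrableOn_Icc_iff_integrableOn_Ioc]
      exact intervalIntegral.integrableOn_deriv_of_nonneg hcont (fun x hx => hderiv x ⟨hx, hnot x hx⟩) hpos
    · have hcard' : ((s ∩ Ioo α β) \ {m}).encard ≤ n := by
        have h1 := Set.encard_diff_singleton_add_one (show m ∈ s ∩ Ioo α β from ⟨hms, hm⟩)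
        have : ((s ∩ Ioo α β) \ {m}).encard + 1 ≤ (n : ℕ∞) + 1 := by
          rw [h1]; exact_mod_cast hcard
        exact (WithTop.add_le_add_iff_right ENat.one_ne_top).mp this
      have hsub1 : s ∩ Ioo α m ⊆ (s ∩ Ioo α β) \ {m} := fun x hx =>
        ⟨⟨hx.1, hx.2.1, hx.2.2.trans hm.2⟩, fun hxm => by
          simp only [mem_singleton_iff] at hxm; exact absurd (hxm ▸ hx.2.2) (lt_irrefl m)⟩
      have hsub2 : s ∩ Ioo m β ⊆ (s ∩ Ioo α β) \ {m} := fun x hx =>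
        ⟨⟨hx.1, hm.1.trans hx.2.1, hx.2.2⟩, fun hxm => by
          simp only [mem_singleton_iff] at hxm; exact absurd (hxm ▸ hx.2.1) (lt_irrefl m)⟩
      have I1 := ih (s := s) (α := α) (β := m) ((Set.encard_mono hsub1).trans hcard')
        hm.1.le (hcont.mono (Icc_subset_Icc le_rfl hm.2.le))
        (fun x hx => hderiv x ⟨⟨hx.1.1, hx.1.2.trans hm.2⟩, hx.2⟩)
        (fun x hx => hpos x ⟨hx.1, hx.2.trans hm.2⟩)
      have I2 := ih (s := s) (α := m) (β := β) ((Set.encard_mono hsub2).trans hcard')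
        hm.2.le (hcont.mono (Icc_subset_Icc hm.1.le le_rfl))
        (fun x hx => hderiv x ⟨⟨hm.1.trans hx.1.1, hx.1.2⟩, hx.2⟩)
        (fun x hx => hpos x ⟨hm.1.trans hx.1, hx.2⟩)
      have := I1.union I2
      rwa [Icc_union_Icc_eq_Icc hm.1.le hm.2.le] at this

/-- if `U < 0` a.e. on the rectangle `[a₁,b₁]×[a₂,b₂]`, the
vertical-then-horizontal two-segment path from `a` to `b` is optimal. -/
theorem vh_path_optimal (c : ℝ × ℝ → ℝ × ℝ) (hc : ContDiff ℝ 1 c)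
    (a b : ℝ × ℝ) (hab1 : a.1 ≤ b.1) (hab2 : a.2 ≤ b.2)
    (hU : ∀ᵐ q ∂(volume.restrict (Icc a b)), Ucurl c q < 0)
    (γ : MonoPath) (hγ : IsMonoPathFromTo γ a b) :
    (∫ s in a.2..b.2, (c (a.1, s)).2) + (∫ t in a.1..b.1, (c (t, b.2)).1) ≤
      pathCost c γ := by
  obtain ⟨hst, hen, hmem⟩ := hγ
  have hc1 : ContDiff ℝ 1 (fun q : ℝ×ℝ => (c q).1) := hc.fst
  have hc2 : ContDiff ℝ 1 (fun q : ℝ×ℝ => (c q).2) := hc.snd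
  have hc2a : Continuous (fun s : ℝ => (c (a.1, s)).2) :=
    hc2.continuous.comp (continuous_const.prodMk continuous_id)
  -- the potential
  set F : ℝ×ℝ → ℝ :=
    fun q => (∫ s in a.2..q.2, (c (a.1, s)).2) + ∫ t in a.1..q.1, (c (t, q.2)).1 with hFdef
  set P : ℝ×ℝ → ℝ :=
    fun q => (c (a.1, q.2)).2 + ∫ t in a.1..q.1, VHD2 (fun x => (c x).1) (t, q.2) with hPdef
  -- differentiability of F
  have hFdiff : ∀ q, DifferentiableAt ℝ F q := by
    intro q
    have h1 : DifferentiableAt ℝ (fun y : ℝ => ∫ s in a.2..y, (c (a.1, s)).2) q.2 :=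
      (vh_ftc1 _ hc2a a.2 q.2).differentiableAt
    have hVd : DifferentiableAt ℝ (fun q : ℝ×ℝ => ∫ s in a.2..q.2, (c (a.1, s)).2) q :=
      h1.comp q differentiableAt_snd
    exact hVd.add (vhG_diffAt c hc a.1 q)
  have hFc : Continuous F := continuous_iff_continuousAt.mpr fun q => (hFdiff q).continuousAt
  -- partial derivatives of F
  have hFx : ∀ q : ℝ×ℝ, HasDerivAt (fun x => F (x, q.2)) ((c q).1) q.1 := by
    intro q
    have h1 : HasDerivAt (fun x : ℝ => ∫ t in a.1..x, (c (t, q.2)).1) ((c (q.1, q.2)).1) q.1 :=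
      vh_ftc1 _ (hc1.continuous.comp (continuous_id.prodMk continuous_const)) a.1 q.1
    have := (hasDerivAt_const q.1 (∫ s in a.2..q.2, (c (a.1, s)).2)).add h1
    rw [zero_add] at this; exact this
  have hFy : ∀ q : ℝ×ℝ, HasDerivAt (fun y => F (q.1, y)) (P q) q.2 := by
    intro q
    have h1 : HasDerivAt (fun y : ℝ => ∫ s in a.2..y, (c (a.1, s)).2) ((c (a.1, q.2)).2) q.2 :=
      vh_ftc1 _ hc2a a.2 q.2
    have h2 := vhGy (fun x => (c x).1) hc1 a.1 q.1 q.2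
    exact h1.add h2
  -- the full derivative of F in terms of the partials
  have hfd : ∀ q v : ℝ×ℝ, fderiv ℝ F q v = v.1 * (c q).1 + v.2 * P q := by
    intro q v
    have hD : HasFDerivAt F (fderiv ℝ F q) (q.1, q.2) := by
      rw [Prod.mk.eta]; exact (hFdiff q).hasFDerivAt
    have hx : fderiv ℝ F q ((1:ℝ),(0:ℝ)) = (c q).1 := by
      have h1 : HasDerivAt (fun x : ℝ => (x, q.2)) ((1:ℝ),(0:ℝ)) q.1 :=
        (hasDerivAt_id q.1).prodMk (hasDerivAt_const q.1 q.2)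
      have h2 := hD.comp_hasDerivAt q.1 h1
      exact h2.unique (hFx q)
    have hy : fderiv ℝ F q ((0:ℝ),(1:ℝ)) = P q := by
      have h1 : HasDerivAt (fun y : ℝ => ((q.1 : ℝ), y)) ((0:ℝ),(1:ℝ)) q.2 :=
        (hasDerivAt_const q.2 q.1).prodMk (hasDerivAt_id q.2)
      exact ((hD.comp_hasDerivAt q.2 h1).unique (hFy q))
    have hv : (v.1 • ((1:ℝ),(0:ℝ)) + v.2 • ((0:ℝ),(1:ℝ)) : ℝ×ℝ) = v := by
      ext <;> simp
    calc fderiv ℝ F q v = fderiv ℝ F q (v.1 • ((1:ℝ),(0:ℝ)) + v.2 • ((0:ℝ),(1:ℝ))) := by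
          rw [hv]
      _ = v.1 * (c q).1 + v.2 * P q := by
          rw [map_add, (fderiv ℝ F q).map_smul, (fderiv ℝ F q).map_smul, hx, hy]
          simp [smul_eq_mul]
  -- key inequality : P q ≤ c₂ q on the rectangle (when a.2 < b.2)
  have hPc2 : a.2 < b.2 → ∀ q ∈ Icc a b, P q ≤ (c q).2 := by
    intro h2 q hq
    have hq11 : a.1 ≤ q.1 := (hq.1 : a ≤ q).1
    have hq12 : q.1 ≤ b.1 := (hq.2 : q ≤ b).1
    have hq21 : a.2 ≤ q.2 := (hq.1 : a ≤ q).2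
    have hq22 : q.2 ≤ b.2 := (hq.2 : q ≤ b).2
    rcases eq_or_lt_of_le hab1 with h1 | h1
    · have hq1 : q.1 = a.1 := le_antisymm (h1 ▸ hq12) hq11
      have : P q = (c (a.1, q.2)).2 := by
        rw [hPdef]; simp [hq1]
      rw [this]
      have : (a.1, q.2) = q := by rw [← hq1]
      rw [this]
    · -- nondegenerate rectangle: use U ≤ 0
      have hUc : Continuous (fun x : ℝ×ℝ => VHD2 (fun y => (c y).1) x - VHD1 (fun y => (c y).2) x) :=
        (VHD2_cont _ hc1).sub (VHD1_cont _ hc2)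
      have hU' : ∀ᵐ x ∂(volume.restrict (Icc a b)),
          VHD2 (fun y => (c y).1) x - VHD1 (fun y => (c y).2) x < 0 := by
        filter_upwards [hU] with x hx
        rwa [Ucurl_eq c hc] at hx
      have hUle := vh_nonpos_of_ae_neg hUc a b h1 h2 hU'
      have hint1 : IntervalIntegrable (fun t => VHD2 (fun y => (c y).1) (t, q.2)) volume a.1 q.1 :=
        (((VHD2_cont _ hc1).comp (continuous_id.prodMk continuous_const)).intervalIntegrable _ _)
      have hint2 : IntervalIntegrable (fun t => VHD1 (fun y => (c y).2) (t, q.2)) volume a.1 q.1 :=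
        (((VHD1_cont _ hc2).comp (continuous_id.prodMk continuous_const)).intervalIntegrable _ _)
      have hmono : ∫ t in a.1..q.1, VHD2 (fun y => (c y).1) (t, q.2)
          ≤ ∫ t in a.1..q.1, VHD1 (fun y => (c y).2) (t, q.2) := by
        apply intervalIntegral.integral_mono_on hq11 hint1 hint2
        intro t ht
        have hmemt : ((t, q.2) : ℝ×ℝ) ∈ Icc a b := by
          rw [Icc_prod_eq]
          exact ⟨⟨ht.1, ht.2.trans hq12⟩, ⟨hq21, hq22⟩⟩
        have := hUle _ hmemt
        linarith
      have hftc := vh_ftc2 (fun y => (c y).2) hc2 a.1 q.1 q.2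
      have hqeta : ((q.1, q.2) : ℝ×ℝ) = q := Prod.mk.eta
      rw [hPdef]
      simp only
      rw [hftc] at hmono
      rw [hqeta] at hmono
      linarith
  -- the integrand of the path cost
  set φ : ℝ → ℝ := fun t => (c (γ.p t)).1 * (γ.d t).1 + (c (γ.p t)).2 * (γ.d t).2 with hφdef
  -- encard bound for the exceptional set
  have hfin : (γ.exc ∩ Ioo (0:ℝ) 1).Finite := γ.exc_finite.subset inter_subset_left
  set n : ℕ := hfin.toFinset.card with hndef
  have hencard : (γ.exc ∩ Ioo (0:ℝ) 1).encard ≤ (n : ℕ∞) := by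
    rw [hfin.encard_eq_coe_toFinset_card]
  -- integrability of the coordinate derivatives
  have hd1int : IntegrableOn (fun t => (γ.d t).1) (Icc (0:ℝ) 1) := by
    refine vh_integrableOn_deriv_exc n (g := fun u => (γ.p u).1) γ.exc hencard
      (by norm_num) γ.cont.fst
      (fun x hx => γ.deriv_fst x ⟨Ioo_subset_Icc_self hx.1, hx.2⟩)
      (fun x hx => γ.d_fst_nonneg x (Ioo_subset_Icc_self hx))
  have hd2int : IntegrableOn (fun t => (γ.d t).2) (Icc (0:ℝ) 1) := by
    refine vh_integrableOn_deriv_exc n (g := fun u => (γ.p u).2) γ.exc hencard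
      (by norm_num) γ.cont.snd
      (fun x hx => γ.deriv_snd x ⟨Ioo_subset_Icc_self hx.1, hx.2⟩)
      (fun x hx => γ.d_snd_nonneg x (Ioo_subset_Icc_self hx))
  -- integrability of φ
  have hcγ : ContinuousOn (fun t => c (γ.p t)) (Icc (0:ℝ) 1) :=
    hc.continuous.comp_continuousOn γ.cont
  obtain ⟨M, hM⟩ := isCompact_Icc.exists_bound_of_continuousOn hcγ
  have hφint : IntegrableOn φ (Icc (0:ℝ) 1) := by
    have h1m : AEStronglyMeasurable (fun t => (c (γ.p t)).1) (volume.restrict (Icc (0:ℝ) 1)) :=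
      (hcγ.fst).aestronglyMeasurable measurableSet_Icc
    have h2m : AEStronglyMeasurable (fun t => (c (γ.p t)).2) (volume.restrict (Icc (0:ℝ) 1)) :=
      (hcγ.snd).aestronglyMeasurable measurableSet_Icc
    have hφm : AEStronglyMeasurable φ (volume.restrict (Icc (0:ℝ) 1)) :=
      (h1m.mul hd1int.aestronglyMeasurable).add (h2m.mul hd2int.aestronglyMeasurable)
    refine Integrable.mono' ((hd1int.const_mul M).add (hd2int.const_mul M)) hφm ?_
    filter_upwards [ae_restrict_mem measurableSet_Icc] with t ht
    have hd1 := γ.d_fst_nonneg t ht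
    have hd2 := γ.d_snd_nonneg t ht
    have e1 : |(c (γ.p t)).1| ≤ M := by
      refine le_trans ?_ (hM t ht)
      simpa [Real.norm_eq_abs] using norm_fst_le (c (γ.p t))
    have e2 : |(c (γ.p t)).2| ≤ M := by
      refine le_trans ?_ (hM t ht)
      simpa [Real.norm_eq_abs] using norm_snd_le (c (γ.p t))
    have habs : |φ t| ≤ |(c (γ.p t)).1| * (γ.d t).1 + |(c (γ.p t)).2| * (γ.d t).2 := by
      refine (abs_add_le _ _).trans ?_
      rw [abs_mul, abs_mul, abs_of_nonneg hd1, abs_of_nonneg hd2]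
    have : |φ t| ≤ M * (γ.d t).1 + M * (γ.d t).2 :=
      habs.trans (add_le_add (mul_le_mul_of_nonneg_right e1 hd1)
        (mul_le_mul_of_nonneg_right e2 hd2))
    simpa [Real.norm_eq_abs] using this
  -- the chain rule along the path and the pointwise inequality
  have hchain : ∀ x ∈ Ioo (0:ℝ) 1 \ γ.exc,
      HasDerivAt (fun u => F (γ.p u)) (fderiv ℝ F (γ.p x) (γ.d x)) x := by
    intro x hx
    have hx' : x ∈ Icc (0:ℝ) 1 \ γ.exc := ⟨Ioo_subset_Icc_self hx.1, hx.2⟩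
    have hp : HasDerivAt γ.p (γ.d x) x := by
      have := (γ.deriv_fst x hx').prodMk (γ.deriv_snd x hx')
      simpa using this
    exact ((hFdiff (γ.p x)).hasFDerivAt).comp_hasDerivAt x hp
  have hle : ∀ x ∈ Ioo (0:ℝ) 1 \ γ.exc, fderiv ℝ F (γ.p x) (γ.d x) ≤ φ x := by
    intro x hx
    have hx' : x ∈ Icc (0:ℝ) 1 \ γ.exc := ⟨Ioo_subset_Icc_self hx.1, hx.2⟩
    have hqmem : γ.p x ∈ Icc a b := hmem x hx'.1
    rw [hfd]
    rcases eq_or_lt_of_le hab2 with h2 | h2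
    · -- degenerate vertical direction: γ₂ is constant, so (γ.d x).2 = 0
      have hconst : ∀ᶠ u in nhds x, (γ.p u).2 = a.2 := by
        filter_upwards [isOpen_Ioo.mem_nhds hx.1] with u hu
        have hmu := hmem u (Ioo_subset_Icc_self hu)
        have hl : a.2 ≤ (γ.p u).2 := (hmu.1 : a ≤ γ.p u).2
        have hr : (γ.p u).2 ≤ b.2 := (hmu.2 : γ.p u ≤ b).2
        linarith [h2.symm ▸ hr]
      have h0' : HasDerivAt (fun u => (γ.p u).2) 0 x :=
        (hasDerivAt_const x a.2).congr_of_eventuallyEq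
          (hconst.mono fun u hu => hu)
      have hd2 : (γ.d x).2 = 0 := (γ.deriv_snd x hx').unique h0'
      rw [hφdef]
      simp only [hd2, mul_zero, zero_mul, add_zero]
      rw [mul_comm]
    · have hP := hPc2 h2 (γ.p x) hqmem
      have hd2 := γ.d_snd_nonneg x hx'.1
      have : (γ.d x).2 * P (γ.p x) ≤ (γ.d x).2 * (c (γ.p x)).2 :=
        mul_le_mul_of_nonneg_left hP hd2
      rw [hφdef]
      simp only
      linarith
  -- final assembly
  have hFcont : ContinuousOn (fun u => F (γ.p u)) (Icc (0:ℝ) 1) :=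
    hFc.comp_continuousOn γ.cont
  have hkey := vh_sub_le_integral_exc n (g := fun u => F (γ.p u))
    (g' := fun x => fderiv ℝ F (γ.p x) (γ.d x)) (φ := φ) γ.exc hencard
    (by norm_num) hFcont hchain hφint hle
  have hkey2 : F b - F a ≤ ∫ y in (0:ℝ)..1, φ y := by
    rw [← hst, ← hen]; exact hkey
  have hFa : F a = 0 := by
    rw [hFdef]; simp
  have hFb : F b = (∫ s in a.2..b.2, (c (a.1, s)).2) + ∫ t in a.1..b.1, (c (t, b.2)).1 := rfl
  have hpc : pathCost c γ = ∫ t in (0:ℝ)..1, φ t := rfl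
  rw [hpc]
  rw [hFb, hFa] at hkey2
  linarith
end

section
/- (Point-to-boundary optimal path, vertical case.) Let R=[p1,q1]×[p2,q2] be a rectangle, Γ1={(x,q2): p1≤x≤q1} its far horizontal edge and Γ2={(q1,y): p2≤y≤q2} its far vertical edge, and let x⁰=(x⁰1,x⁰2)∈R. Let c=(c1,c2) be a C¹ cost field and suppose: U(x)<0 for almost every x∈R; c1(x,q2)≥0 for all x∈[p1,q1] (nonnegative cost along Γ1); and c2(q1,y)≤0 for all y∈[p2,q2] (nonpositive cost along Γ2). Then every monotone path γ with γ(0)=x⁰ and γ(1)∈Γ1∪Γ2 satisfies cost(γ) ≥ ∫_{x⁰2}^{q2} c2(x⁰1,s) ds, the cost of the straight vertical segment from x⁰ to Γ1; i.e., the straight vertical path to Γ1 is optimal among all monotone paths from x⁰ to the boundary Γ1∪Γ2. -/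
open MeasureTheory Set

/-! ### Auxiliary material -/

/-- `∂c2/∂x1` as a function of the point. -/
noncomputable def Dd1 (c : ℝ × ℝ → ℝ × ℝ) (z : ℝ × ℝ) : ℝ := (fderiv ℝ c z (1,0)).2

/-- `∂c1/∂x2` as a function of the point. -/
noncomputable def Dd2 (c : ℝ × ℝ → ℝ × ℝ) (z : ℝ × ℝ) : ℝ := (fderiv ℝ c z (0,1)).1

section Aux

variable {c : ℝ × ℝ → ℝ × ℝ}

lemma contD1 (hc : ContDiff ℝ 1 c) : Continuous (Dd1 c) :=
  continuous_snd.comp ((hc.continuous_fderiv one_ne_zero).clm_apply continuous_const)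

lemma contD2 (hc : ContDiff ℝ 1 c) : Continuous (Dd2 c) :=
  continuous_fst.comp ((hc.continuous_fderiv one_ne_zero).clm_apply continuous_const)

lemma sliceX2 (hc : ContDiff ℝ 1 c) (y x₀ : ℝ) :
    HasDerivAt (fun s => (c (s, y)).2) (Dd1 c (x₀, y)) x₀ :=
  ((ContinuousLinearMap.snd ℝ ℝ ℝ).hasFDerivAt).comp_hasDerivAt x₀
    (((hc.differentiable one_ne_zero (x₀, y)).hasFDerivAt).comp_hasDerivAt x₀
      ((hasDerivAt_id x₀).prodMk (hasDerivAt_const x₀ y)))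

lemma sliceY1 (hc : ContDiff ℝ 1 c) (x y₀ : ℝ) :
    HasDerivAt (fun s => (c (x, s)).1) (Dd2 c (x, y₀)) y₀ :=
  ((ContinuousLinearMap.fst ℝ ℝ ℝ).hasFDerivAt).comp_hasDerivAt y₀
    (((hc.differentiable one_ne_zero (x, y₀)).hasFDerivAt).comp_hasDerivAt y₀
      ((hasDerivAt_const y₀ x).prodMk (hasDerivAt_id y₀)))

lemma ucurl_eq' (hc : ContDiff ℝ 1 c) (z : ℝ × ℝ) :
    Ucurl c z = Dd2 c z - Dd1 c z := by
  unfold Ucurl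
  rw [(sliceY1 hc z.1 z.2).deriv,
    HasDerivAt.deriv (f := fun s => (c (s, z.2)).2) (x := z.1)
      (by simpa using sliceX2 hc z.2 z.1)]

lemma integrable_exc {E : Set ℝ} (hE : E.Finite) {g' : ℝ → ℝ} :
    ∀ (a b : ℝ) (g : ℝ → ℝ), a ≤ b → ContinuousOn g (Icc a b) →
    (∀ x ∈ Ioo a b \ E, HasDerivAt g (g' x) x) →
    (∀ x ∈ Ioo a b, 0 ≤ g' x) →
    IntegrableOn g' (Ioc a b) := by
  refine Set.Finite.induction_on E hE ?_ ?_
  · intro a b g hab hcont hderiv hpos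
    exact intervalIntegral.integrableOn_deriv_of_nonneg hcont
      (fun x hx => hderiv x (by simpa using hx)) hpos
  · intro t s ht hs IH
    intro a b g hab hcont hderiv hpos
    by_cases htm : t ∈ Ioo a b
    · have h1 : IntegrableOn g' (Ioc a t) :=
        IH a t g htm.1.le (hcont.mono (Icc_subset_Icc le_rfl htm.2.le))
          (fun x hx => hderiv x ⟨⟨hx.1.1, hx.1.2.trans htm.2⟩,
            by simp only [mem_insert_iff]; push_neg; exact ⟨ne_of_lt hx.1.2, hx.2⟩⟩)
          (fun x hx => hpos x ⟨hx.1, hx.2.trans htm.2⟩)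
      have h2 : IntegrableOn g' (Ioc t b) :=
        IH t b g htm.2.le (hcont.mono (Icc_subset_Icc htm.1.le le_rfl))
          (fun x hx => hderiv x ⟨⟨htm.1.trans hx.1.1, hx.1.2⟩,
            by simp only [mem_insert_iff]; push_neg; exact ⟨(ne_of_gt hx.1.1), hx.2⟩⟩)
          (fun x hx => hpos x ⟨htm.1.trans hx.1, hx.2⟩)
      rw [← Ioc_union_Ioc_eq_Ioc htm.1.le htm.2.le]
      exact h1.union h2
    · exact IH a b g hab hcont
        (fun x hx => hderiv x ⟨hx.1, by
          simp only [mem_insert_iff]; push_neg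
          exact ⟨fun h => htm (h ▸ hx.1), hx.2⟩⟩) hpos

lemma ftc_ineq_exc {E : Set ℝ} (hE : E.Finite) {g' φ : ℝ → ℝ} :
    ∀ (a b : ℝ) (g : ℝ → ℝ), a ≤ b → ContinuousOn g (Icc a b) →
    (∀ x ∈ Ioo a b \ E, HasDerivAt g (g' x) x) →
    IntegrableOn φ (Icc a b) →
    (∀ x ∈ Ioo a b \ E, g' x ≤ φ x) →
    g b - g a ≤ ∫ y in a..b, φ y := by
  refine Set.Finite.induction_on E hE ?_ ?_
  · intro a b g hab hcont hderiv hint hle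
    exact intervalIntegral.sub_le_integral_of_hasDeriv_right_of_le hab hcont
      (fun x hx => (hderiv x (by simpa using hx)).hasDerivWithinAt) hint
      (fun x hx => hle x (by simpa using hx))
  · intro t s ht hs IH
    intro a b g hab hcont hderiv hint hle
    by_cases htm : t ∈ Ioo a b
    · have h1 := IH a t g htm.1.le (hcont.mono (Icc_subset_Icc le_rfl htm.2.le))
          (fun x hx => hderiv x ⟨⟨hx.1.1, hx.1.2.trans htm.2⟩,
            by simp only [mem_insert_iff]; push_neg; exact ⟨ne_of_lt hx.1.2, hx.2⟩⟩)
          (hint.mono_set (Icc_subset_Icc le_rfl htm.2.le))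
          (fun x hx => hle x ⟨⟨hx.1.1, hx.1.2.trans htm.2⟩,
            by simp only [mem_insert_iff]; push_neg; exact ⟨ne_of_lt hx.1.2, hx.2⟩⟩)
      have h2 := IH t b g htm.2.le (hcont.mono (Icc_subset_Icc htm.1.le le_rfl))
          (fun x hx => hderiv x ⟨⟨htm.1.trans hx.1.1, hx.1.2⟩,
            by simp only [mem_insert_iff]; push_neg; exact ⟨ne_of_gt hx.1.1, hx.2⟩⟩)
          (hint.mono_set (Icc_subset_Icc htm.1.le le_rfl))
          (fun x hx => hle x ⟨⟨htm.1.trans hx.1.1, hx.1.2⟩,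
            by simp only [mem_insert_iff]; push_neg; exact ⟨ne_of_gt hx.1.1, hx.2⟩⟩)
      have hadd : (∫ y in a..t, φ y) + (∫ y in t..b, φ y) = ∫ y in a..b, φ y := by
        apply intervalIntegral.integral_add_adjacent_intervals
        · exact (hint.mono_set (by rw [uIcc_of_le htm.1.le]; exact Icc_subset_Icc le_rfl htm.2.le)).intervalIntegrable
        · exact (hint.mono_set (by rw [uIcc_of_le htm.2.le]; exact Icc_subset_Icc htm.1.le le_rfl)).intervalIntegrable
      linarith
    · exact IH a b g hab hcont
        (fun x hx => hderiv x ⟨hx.1, by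
          simp only [mem_insert_iff]; push_neg
          exact ⟨fun h => htm (h ▸ hx.1), hx.2⟩⟩) hint
        (fun x hx => hle x ⟨hx.1, by
          simp only [mem_insert_iff]; push_neg
          exact ⟨fun h => htm (h ▸ hx.1), hx.2⟩⟩)

lemma part_a (hc : ContDiff ℝ 1 c) (y₀ q2 x₀ : ℝ) :
    HasDerivAt (fun x => ∫ s in y₀..q2, (c (x, s)).2)
      (∫ s in y₀..q2, Dd1 c (x₀, s)) x₀ := by
  have hccont : Continuous c := hc.continuous
  obtain ⟨M, hM⟩ : ∃ M, ∀ x ∈ Icc (x₀ - 1) (x₀ + 1), ∀ s ∈ uIcc y₀ q2, |Dd1 c (x, s)| ≤ M := by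
    obtain ⟨M, hM⟩ := (((isCompact_Icc (a := x₀ - 1) (b := x₀ + 1)).prod
      (isCompact_uIcc (a := y₀) (b := q2))).image_of_continuousOn
      ((contD1 hc).continuousOn
        (s := (Icc (x₀-1) (x₀+1)) ×ˢ uIcc y₀ q2))).isBounded.subset_closedBall 0
    exact ⟨M, fun x hx s hs => by
      have := hM ⟨(x, s), ⟨hx, hs⟩, rfl⟩
      simpa [Real.norm_eq_abs] using this⟩
  refine (intervalIntegral.hasDerivAt_integral_of_dominated_loc_of_deriv_le
    (F := fun x s => (c (x, s)).2) (F' := fun x s => Dd1 c (x, s)) (bound := fun _ => M)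
    (a := y₀) (b := q2) (μ := volume) (x₀ := x₀) (Metric.ball_mem_nhds x₀ zero_lt_one) ?_ ?_ ?_ ?_ ?_ ?_).2
  · filter_upwards with x
    exact ((continuous_snd.comp (hccont.comp (Continuous.prodMk_right x))).aestronglyMeasurable)
  · exact (continuous_snd.comp (hccont.comp (Continuous.prodMk_right x₀))).intervalIntegrable _ _
  · exact ((contD1 hc).comp (Continuous.prodMk_right x₀)).aestronglyMeasurable
  · filter_upwards with s hs x hx
    have hx' : x ∈ Icc (x₀ - 1) (x₀ + 1) := by
      have := mem_ball_iff_norm.1 hx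
      rw [Real.norm_eq_abs, abs_lt] at this
      constructor <;> linarith
    simpa [Real.norm_eq_abs] using hM x hx' s (uIoc_subset_uIcc hs)
  · exact intervalIntegrable_const
  · filter_upwards with s hs x hx
    exact sliceX2 hc s x

lemma part_b (hc : ContDiff ℝ 1 c) (z0 : ℝ × ℝ) :
    HasFDerivAt (fun z : ℝ × ℝ => ∫ s in z0.2..z.2, (c (z.1, s)).2)
      ((c z0).2 • ContinuousLinearMap.snd ℝ ℝ ℝ) z0 := by
  rw [hasFDerivAt_iff_isLittleO_nhds_zero]
  rw [Asymptotics.isLittleO_iff]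
  intro C hC
  have hcont : Continuous fun w : ℝ × ℝ => (c w).2 := continuous_snd.comp hc.continuous
  obtain ⟨δ, hδ, hδ'⟩ := Metric.continuousAt_iff.1 (hcont.continuousAt (x := z0)) C hC
  have hball : Metric.ball (0 : ℝ × ℝ) δ ∈ nhds (0 : ℝ × ℝ) := Metric.ball_mem_nhds _ hδ
  filter_upwards [hball] with h hh
  have hint1 : IntervalIntegrable (fun s => (c ((z0 + h).1, s)).2) volume z0.2 (z0 + h).2 :=
    (continuous_snd.comp (hc.continuous.comp (Continuous.prodMk_right _))).intervalIntegrable _ _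
  have key : (∫ s in z0.2..(z0 + h).2, (c ((z0 + h).1, s)).2)
      - (∫ s in z0.2..z0.2, (c (z0.1, s)).2)
      - ((c z0).2 • ContinuousLinearMap.snd ℝ ℝ ℝ) h
      = ∫ s in z0.2..(z0 + h).2, ((c ((z0 + h).1, s)).2 - (c z0).2) := by
    rw [intervalIntegral.integral_sub hint1 intervalIntegrable_const,
      intervalIntegral.integral_same, intervalIntegral.integral_const]
    simp [Prod.snd_add, smul_eq_mul]
    ring
  rw [key]
  have hb : ∀ s ∈ uIoc z0.2 (z0 + h).2, ‖(c ((z0 + h).1, s)).2 - (c z0).2‖ ≤ C := by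
    intro s hs
    have h1 : |s - z0.2| ≤ |h.2| := by
      have hz : (z0+h).2 = z0.2 + h.2 := rfl
      have e1 := le_abs_self h.2
      have e2 := neg_abs_le h.2
      rcases le_total z0.2 (z0+h).2 with hle | hle
      · rw [uIoc_of_le hle] at hs
        rw [hz] at hs
        exact abs_le.2 ⟨by linarith [hs.1.le], by linarith [hs.2]⟩
      · rw [uIoc_of_ge hle] at hs
        rw [hz] at hs
        exact abs_le.2 ⟨by linarith [hs.1], by linarith [hs.2]⟩
    have hd : dist ((z0 + h).1, s) z0 < δ := by
      rw [Prod.dist_eq]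
      have hh1 : dist (z0 + h).1 z0.1 = |h.1| := by
        simp [Prod.fst_add, Real.dist_eq]
      have hh2 : dist s z0.2 ≤ |h.2| := by rw [Real.dist_eq]; exact h1
      have hn : max |h.1| |h.2| < δ := by
        have := mem_ball_iff_norm.1 hh
        simpa [Prod.norm_def, Real.norm_eq_abs] using this
      calc max (dist (z0+h).1 z0.1) (dist s z0.2) ≤ max |h.1| |h.2| :=
            max_le_max (le_of_eq hh1) hh2
        _ < δ := hn
    have := hδ' hd
    rw [Real.dist_eq] at this
    exact (le_of_lt (by simpa [Real.norm_eq_abs] using this))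
  calc ‖∫ s in z0.2..(z0 + h).2, ((c ((z0 + h).1, s)).2 - (c z0).2)‖
      ≤ C * |(z0 + h).2 - z0.2| := intervalIntegral.norm_integral_le_of_norm_le_const hb
    _ = C * |h.2| := by norm_num [Prod.snd_add]
    _ ≤ C * ‖h‖ := by
        apply mul_le_mul_of_nonneg_left _ hC.le
        rw [Prod.norm_def]
        exact le_max_right _ _ |>.trans' (by simp [Real.norm_eq_abs])

lemma phi_hasFDeriv (hc : ContDiff ℝ 1 c) (q2 : ℝ) (z0 : ℝ × ℝ) :
    HasFDerivAt (fun z : ℝ × ℝ => ∫ s in z.2..q2, (c (z.1, s)).2)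
      ((∫ s in z0.2..q2, Dd1 c (z0.1, s)) • ContinuousLinearMap.fst ℝ ℝ ℝ
        - (c z0).2 • ContinuousLinearMap.snd ℝ ℝ ℝ) z0 := by
  have h1 : HasFDerivAt (fun z : ℝ × ℝ => ∫ s in z0.2..q2, (c (z.1, s)).2)
      ((∫ s in z0.2..q2, Dd1 c (z0.1, s)) • ContinuousLinearMap.fst ℝ ℝ ℝ) z0 :=
    (part_a hc z0.2 q2 z0.1).comp_hasFDerivAt z0 (hasFDerivAt_fst (p := z0))
  have h2 := part_b hc z0
  refine (h1.sub h2).congr_of_eventuallyEq (Filter.Eventually.of_forall fun z => ?_)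
  have hadd := intervalIntegral.integral_add_adjacent_intervals
    (a := z0.2) (b := z.2) (c := q2) (f := fun s => (c (z.1, s)).2) (μ := volume)
    ((continuous_snd.comp (hc.continuous.comp (Continuous.prodMk_right _))).intervalIntegrable _ _)
    ((continuous_snd.comp (hc.continuous.comp (Continuous.prodMk_right _))).intervalIntegrable _ _)
  simp only [Pi.sub_apply]
  linarith [hadd]

end Aux

/-- point-to-boundary optimal path, vertical case. With `U < 0` a.e. in the
rectangle, nonnegative horizontal cost along the far horizontal edge `Γ1` and nonpositive
vertical cost along the far vertical edge `Γ2`, the straight vertical path from `x⁰` to `Γ1`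
is optimal among monotone paths from `x⁰` to `Γ1 ∪ Γ2`. -/
theorem vertical_to_boundary_optimal (p1 q1 p2 q2 : ℝ) (hp1 : p1 ≤ q1) (hp2 : p2 ≤ q2)
    (c : ℝ × ℝ → ℝ × ℝ) (hc : ContDiff ℝ 1 c)
    (x0 : ℝ × ℝ) (hx0 : x0 ∈ Icc p1 q1 ×ˢ Icc p2 q2)
    (hU : ∀ᵐ q ∂(volume.restrict (Icc p1 q1 ×ˢ Icc p2 q2)), Ucurl c q < 0)
    (hΓ1 : ∀ x ∈ Icc p1 q1, 0 ≤ (c (x, q2)).1)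
    (hΓ2 : ∀ y ∈ Icc p2 q2, (c (q1, y)).2 ≤ 0)
    (γ : MonoPath) (hst : γ.p 0 = x0)
    (hend : γ.p 1 ∈ {z : ℝ × ℝ | z.2 = q2 ∧ p1 ≤ z.1 ∧ z.1 ≤ q1} ∪
                    {z : ℝ × ℝ | z.1 = q1 ∧ p2 ≤ z.2 ∧ z.2 ≤ q2})
    (him : ∀ t ∈ Icc (0:ℝ) 1, γ.p t ∈ Icc p1 q1 ×ˢ Icc p2 q2) :
    (∫ s in x0.2..q2, (c (x0.1, s)).2) ≤ pathCost c γ := by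
  classical
  set rect : Set (ℝ × ℝ) := Icc p1 q1 ×ˢ Icc p2 q2 with hrect
  -- the potential and its x-derivative kernel
  set Φ : ℝ × ℝ → ℝ := fun z => ∫ s in z.2..q2, (c (z.1, s)).2 with hΦdef
  set G : ℝ × ℝ → ℝ := fun z => ∫ s in z.2..q2, Dd1 c (z.1, s) with hGdef
  have hΦd : ∀ z : ℝ × ℝ, HasFDerivAt Φ
      ((G z) • ContinuousLinearMap.fst ℝ ℝ ℝ - (c z).2 • ContinuousLinearMap.snd ℝ ℝ ℝ) z :=
    fun z => phi_hasFDeriv hc q2 z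
  have hΦc : Continuous Φ := continuous_iff_continuousAt.2
    fun z => (hΦd z).differentiableAt.continuousAt
  -- the key pointwise inequality on the rectangle
  have Hineq : p1 < q1 → ∀ z ∈ rect, (c (z.1, q2)).1 ≤ (c z).1 + G z := by
    intro hlt1 z hz
    by_cases hq2' : p2 = q2
    · have hz2 : z.2 = q2 := le_antisymm hz.2.2 (hq2' ▸ hz.2.1)
      have : G z = 0 := by rw [hGdef]; simp only; rw [hz2, intervalIntegral.integral_same]
      rw [this, add_zero]
      have : (z.1, q2) = z := by rw [← hz2]
      rw [this]
    · have hlt2 : p2 < q2 := lt_of_le_of_ne hp2 hq2'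
      -- U ≤ 0 on the rectangle
      have hU0 : ∀ w ∈ rect, Dd2 c w ≤ Dd1 c w := by
        intro w hw
        by_contra hcon
        push_neg at hcon
        have contU : Continuous fun v : ℝ × ℝ => Dd2 c v - Dd1 c v :=
          (contD2 hc).sub (contD1 hc)
        have hVopen : IsOpen {v : ℝ × ℝ | 0 < Dd2 c v - Dd1 c v} :=
          isOpen_lt continuous_const contU
        have hwV : w ∈ {v : ℝ × ℝ | 0 < Dd2 c v - Dd1 c v} := sub_pos.2 hcon
        have hOopen : IsOpen (Ioo p1 q1 ×ˢ Ioo p2 q2) := isOpen_Ioo.prod isOpen_Ioo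
        have hwcl : w ∈ closure (Ioo p1 q1 ×ˢ Ioo p2 q2) := by
          rw [closure_prod_eq, closure_Ioo hlt1.ne, closure_Ioo hlt2.ne]
          exact hw
        have hne : ({v : ℝ × ℝ | 0 < Dd2 c v - Dd1 c v} ∩ (Ioo p1 q1 ×ˢ Ioo p2 q2)).Nonempty :=
          mem_closure_iff.1 hwcl _ hVopen hwV
        have hpos : 0 < volume ({v : ℝ × ℝ | 0 < Dd2 c v - Dd1 c v} ∩ (Ioo p1 q1 ×ˢ Ioo p2 q2)) :=
          (hVopen.inter hOopen).measure_pos volume hne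
        have hnull : volume ({v | ¬ Ucurl c v < 0} ∩ rect) = 0 := by
          have := ae_iff.1 hU
          rwa [Measure.restrict_apply' (measurableSet_Icc.prod measurableSet_Icc)] at this
        have hsub : {v : ℝ × ℝ | 0 < Dd2 c v - Dd1 c v} ∩ (Ioo p1 q1 ×ˢ Ioo p2 q2)
            ⊆ {v | ¬ Ucurl c v < 0} ∩ rect := by
          intro v hv
          refine ⟨?_, ⟨Ioo_subset_Icc_self hv.2.1, Ioo_subset_Icc_self hv.2.2⟩⟩
          simp only [mem_setOf_eq, not_lt, ucurl_eq' hc v]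
          exact (hv.1).le
        exact absurd (le_antisymm ((measure_mono hsub).trans hnull.le) (zero_le ..)) hpos.ne'
      -- slice FTC and monotonicity
      have hzint : ∀ z' : ℝ × ℝ, (c (z'.1, q2)).1 - (c z').1 = ∫ s in z'.2..q2, Dd2 c (z'.1, s) := by
        intro z'
        have := intervalIntegral.integral_eq_sub_of_hasDerivAt
          (f := fun s => (c (z'.1, s)).1) (f' := fun s => Dd2 c (z'.1, s))
          (a := z'.2) (b := q2)
          (fun s _ => sliceY1 hc z'.1 s)
          (((contD2 hc).comp (Continuous.prodMk_right _)).intervalIntegrable _ _)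
        rw [this]
      have hmono : (∫ s in z.2..q2, Dd2 c (z.1, s)) ≤ ∫ s in z.2..q2, Dd1 c (z.1, s) := by
        apply intervalIntegral.integral_mono_on hz.2.2
          (((contD2 hc).comp (Continuous.prodMk_right _)).intervalIntegrable _ _)
          (((contD1 hc).comp (Continuous.prodMk_right _)).intervalIntegrable _ _)
        intro s hsc
        exact hU0 (z.1, s) ⟨hz.1, ⟨hz.2.1.trans hsc.1, hsc.2⟩⟩
      have := hzint z
      have hGz : G z = ∫ s in z.2..q2, Dd1 c (z.1, s) := rfl
      linarith
  -- the composed potential along the path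
  set g : ℝ → ℝ := fun t => Φ (γ.p t) with hgdef
  set g' : ℝ → ℝ := fun t => G (γ.p t) * (γ.d t).1 - (c (γ.p t)).2 * (γ.d t).2 with hg'def
  set φ : ℝ → ℝ := fun t => (c (γ.p t)).1 * (γ.d t).1 + (c (γ.p t)).2 * (γ.d t).2 with hφdef
  have hpd : ∀ t ∈ Icc (0:ℝ) 1 \ γ.exc, HasDerivAt γ.p (γ.d t) t := by
    intro t ht
    have := (γ.deriv_fst t ht).prodMk (γ.deriv_snd t ht)
    simpa using this
  have hgd : ∀ t ∈ Ioo (0:ℝ) 1 \ γ.exc, HasDerivAt g (g' t) t := by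
    intro t ht
    have := (hΦd (γ.p t)).comp_hasDerivAt t (hpd t ⟨Ioo_subset_Icc_self ht.1, ht.2⟩)
    simpa [hg'def, ContinuousLinearMap.sub_apply, ContinuousLinearMap.smul_apply,
      smul_eq_mul, hgdef, Function.comp_def] using this
  have hgc : ContinuousOn g (Icc 0 1) := hΦc.comp_continuousOn γ.cont
  -- key inequality : -(g' t) ≤ φ t
  have key : ∀ t ∈ Ioo (0:ℝ) 1 \ γ.exc, -(g' t) ≤ φ t := by
    intro t ht
    have htIcc : t ∈ Icc (0:ℝ) 1 := Ioo_subset_Icc_self ht.1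
    have h0 : 0 ≤ ((c (γ.p t)).1 + G (γ.p t)) * (γ.d t).1 := by
      rcases eq_or_lt_of_le hp1 with hq | hlt1
      · -- degenerate: first coordinate constant, derivative 0
        have hconst : ∀ u ∈ Icc (0:ℝ) 1, (γ.p u).1 = q1 := fun u hu =>
          le_antisymm (him u hu).1.2 (hq ▸ (him u hu).1.1)
        have hev : (fun u => (γ.p u).1) =ᶠ[nhds t] fun _ => q1 := by
          filter_upwards [isOpen_Ioo.mem_nhds ht.1] with u hu
          exact hconst u (Ioo_subset_Icc_self hu)
        have hder : HasDerivAt (fun _ : ℝ => q1) ((γ.d t).1) t :=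
          (γ.deriv_fst t ⟨htIcc, ht.2⟩).congr_of_eventuallyEq hev.symm
        have : (γ.d t).1 = 0 := hder.unique (hasDerivAt_const t q1)
        rw [this, mul_zero]
      · apply mul_nonneg _ (γ.d_fst_nonneg t htIcc)
        have h1 := Hineq hlt1 (γ.p t) (him t htIcc)
        have h2 := hΓ1 (γ.p t).1 (him t htIcc).1
        linarith
    simp only [hg'def, hφdef]
    nlinarith [h0]
  -- integrability of φ
  obtain ⟨M, hM⟩ : ∃ M, ∀ t ∈ Icc (0:ℝ) 1, ‖c (γ.p t)‖ ≤ M := by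
    obtain ⟨M, hM⟩ := (isCompact_Icc.image_of_continuousOn
      (hc.continuous.comp_continuousOn γ.cont)).isBounded.subset_closedBall 0
    exact ⟨M, fun t ht => by simpa using hM ⟨t, ht, rfl⟩⟩
  have d1int : IntegrableOn (fun t => (γ.d t).1) (Ioc 0 1) :=
    integrable_exc γ.exc_finite 0 1 (fun u => (γ.p u).1) zero_le_one
      (continuous_fst.comp_continuousOn γ.cont)
      (fun x hx => γ.deriv_fst x ⟨Ioo_subset_Icc_self hx.1, hx.2⟩)
      (fun x hx => γ.d_fst_nonneg x (Ioo_subset_Icc_self hx))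
  have d2int : IntegrableOn (fun t => (γ.d t).2) (Ioc 0 1) :=
    integrable_exc γ.exc_finite 0 1 (fun u => (γ.p u).2) zero_le_one
      (continuous_snd.comp_continuousOn γ.cont)
      (fun x hx => γ.deriv_snd x ⟨Ioo_subset_Icc_self hx.1, hx.2⟩)
      (fun x hx => γ.d_snd_nonneg x (Ioo_subset_Icc_self hx))
  have hφint : IntegrableOn φ (Icc 0 1) := by
    rw [integrableOn_Icc_iff_integrableOn_Ioc]
    have hcγ : AEStronglyMeasurable (fun t => c (γ.p t)) (volume.restrict (Ioc (0:ℝ) 1)) :=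
      ((hc.continuous.comp_continuousOn γ.cont).mono Ioc_subset_Icc_self).aestronglyMeasurable
        measurableSet_Ioc
    have hφmeas : AEStronglyMeasurable φ (volume.restrict (Ioc (0:ℝ) 1)) := by
      apply AEStronglyMeasurable.add
      · exact ((continuous_fst.comp_aestronglyMeasurable hcγ).mul d1int.1)
      · exact ((continuous_snd.comp_aestronglyMeasurable hcγ).mul d2int.1)
    refine Integrable.mono' ((d1int.add d2int).const_mul M) hφmeas ?_
    filter_upwards [ae_restrict_mem measurableSet_Ioc] with t ht
    have htI : t ∈ Icc (0:ℝ) 1 := Ioc_subset_Icc_self ht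
    have h1 := γ.d_fst_nonneg t htI
    have h2 := γ.d_snd_nonneg t htI
    have hn1 : |(c (γ.p t)).1| ≤ M :=
      le_trans (by simpa using norm_fst_le (c (γ.p t))) (hM t htI)
    have hn2 : |(c (γ.p t)).2| ≤ M :=
      le_trans (by simpa using norm_snd_le (c (γ.p t))) (hM t htI)
    calc ‖φ t‖ = |(c (γ.p t)).1 * (γ.d t).1 + (c (γ.p t)).2 * (γ.d t).2| := rfl
      _ ≤ |(c (γ.p t)).1| * (γ.d t).1 + |(c (γ.p t)).2| * (γ.d t).2 := by
          refine (abs_add_le _ _).trans (le_of_eq ?_)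
          rw [abs_mul, abs_mul, abs_of_nonneg h1, abs_of_nonneg h2]
      _ ≤ M * (γ.d t).1 + M * (γ.d t).2 :=
          add_le_add (mul_le_mul_of_nonneg_right hn1 h1) (mul_le_mul_of_nonneg_right hn2 h2)
      _ = M * ((γ.d t).1 + (γ.d t).2) := by ring
  -- FTC inequality for the (negated) potential along the path
  have main : g 0 - g 1 ≤ ∫ t in (0:ℝ)..1, φ t := by
    have h := ftc_ineq_exc γ.exc_finite (g' := fun t => -(g' t)) (φ := φ) 0 1 (fun t => -(g t))
      zero_le_one hgc.neg (fun x hx => (hgd x hx).neg) hφint (fun x hx => key x hx)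
    linarith
  have hg0 : g 0 = ∫ s in x0.2..q2, (c (x0.1, s)).2 := by
    simp only [hgdef, hΦdef, hst]
  have hg1 : g 1 ≤ 0 := by
    rcases hend with h | h
    · have h2 : g 1 = ∫ s in (γ.p 1).2..q2, (c ((γ.p 1).1, s)).2 := rfl
      rw [h2, h.1, intervalIntegral.integral_same]
    · have h2 : g 1 = ∫ s in (γ.p 1).2..q2, (c ((γ.p 1).1, s)).2 := rfl
      rw [h2, h.1]
      have h3 := intervalIntegral.integral_nonneg (f := fun s => -(c (q1, s)).2)
        (μ := volume) (a := (γ.p 1).2) (b := q2) h.2.2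
        (fun u hu => neg_nonneg.2 (hΓ2 u ⟨h.2.1.trans hu.1, hu.2⟩))
      rw [intervalIntegral.integral_neg] at h3
      linarith
  have hpc : pathCost c γ = ∫ t in (0:ℝ)..1, φ t := rfl
  rw [hpc]
  linarith
end

section
/- (Point-to-boundary optimal path, horizontal case.) Let R=[p1,q1]×[p2,q2] be a rectangle, Γ1={(x,q2): p1≤x≤q1} its far horizontal edge and Γ2={(q1,y): p2≤y≤q2} its far vertical edge, and let x⁰=(x⁰1,x⁰2)∈R. Let c=(c1,c2) be a C¹ cost field and suppose: U(x)>0 for almost every x∈R; c1(x,q2)≤0 for all x∈[p1,q1] (nonpositive cost along Γ1); and c2(q1,y)≥0 for all y∈[p2,q2] (nonnegative cost along Γ2). Then every monotone path γ with γ(0)=x⁰ and γ(1)∈Γ1∪Γ2 satisfies cost(γ) ≥ ∫_{x⁰1}^{q1} c1(t,x⁰2) dt, the cost of the straight horizontal segment from x⁰ to Γ2; i.e., the straight horizontal path to Γ2 is optimal among all monotone paths from x⁰ to the boundary Γ1∪Γ2. -/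
open MeasureTheory Set

open intervalIntegral Metric

section Aux


/-- FTC inequality allowing a finite exceptional set. -/
lemma sub_le_integral_finexc {g g' φ : ℝ → ℝ} {s : Set ℝ} (hs : s.Finite) :
    ∀ a b : ℝ, a ≤ b → ContinuousOn g (Icc a b) →
    (∀ x ∈ Ioo a b \ s, HasDerivAt g (g' x) x) → IntegrableOn φ (Icc a b) →
    (∀ x ∈ Ioo a b \ s, g' x ≤ φ x) → g b - g a ≤ ∫ y in a..b, φ y := by
  refine Set.Finite.induction_on s hs ?_ ?_
  · intro a b hab hcont hderiv hφint hle
    exact sub_le_integral_of_hasDeriv_right_of_le hab hcont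
      (fun x hx => (hderiv x (by simpa using hx)).hasDerivWithinAt) hφint
      (fun x hx => hle x (by simpa using hx))
  · intro t s' hts hs' IH a b hab hcont hderiv hφint hle
    by_cases ht : t ∈ Ioo a b
    · have h1 : g t - g a ≤ ∫ y in a..t, φ y := by
        refine IH a t ht.1.le (hcont.mono (Icc_subset_Icc le_rfl ht.2.le)) ?_
          (hφint.mono_set (Icc_subset_Icc le_rfl ht.2.le)) ?_
        · intro x hx
          exact hderiv x ⟨⟨hx.1.1, hx.1.2.trans ht.2⟩, by
            simp only [mem_insert_iff, not_or]
            exact ⟨ne_of_lt hx.1.2, hx.2⟩⟩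
        · intro x hx
          exact hle x ⟨⟨hx.1.1, hx.1.2.trans ht.2⟩, by
            simp only [mem_insert_iff, not_or]
            exact ⟨ne_of_lt hx.1.2, hx.2⟩⟩
      have h2 : g b - g t ≤ ∫ y in t..b, φ y := by
        refine IH t b ht.2.le (hcont.mono (Icc_subset_Icc ht.1.le le_rfl)) ?_
          (hφint.mono_set (Icc_subset_Icc ht.1.le le_rfl)) ?_
        · intro x hx
          exact hderiv x ⟨⟨ht.1.trans hx.1.1, hx.1.2⟩, by
            simp only [mem_insert_iff, not_or]
            exact ⟨(ne_of_lt hx.1.1).symm, hx.2⟩⟩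
        · intro x hx
          exact hle x ⟨⟨ht.1.trans hx.1.1, hx.1.2⟩, by
            simp only [mem_insert_iff, not_or]
            exact ⟨(ne_of_lt hx.1.1).symm, hx.2⟩⟩
      have hint1 : IntervalIntegrable φ volume a t := by
        apply IntegrableOn.intervalIntegrable
        rw [uIcc_of_le ht.1.le]
        exact hφint.mono_set (Icc_subset_Icc le_rfl ht.2.le)
      have hint2 : IntervalIntegrable φ volume t b := by
        apply IntegrableOn.intervalIntegrable
        rw [uIcc_of_le ht.2.le]
        exact hφint.mono_set (Icc_subset_Icc ht.1.le le_rfl)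
      have := integral_add_adjacent_intervals hint1 hint2
      linarith [h1, h2, this]
    · refine IH a b hab hcont ?_ hφint ?_
      · intro x hx
        refine hderiv x ⟨hx.1, ?_⟩
        simp only [mem_insert_iff, not_or]
        exact ⟨fun h => ht (h ▸ hx.1), hx.2⟩
      · intro x hx
        refine hle x ⟨hx.1, ?_⟩
        simp only [mem_insert_iff, not_or]
        exact ⟨fun h => ht (h ▸ hx.1), hx.2⟩

/-- Automatic integrability of a nonnegative derivative, allowing a finite exceptional set. -/
lemma integrableOn_deriv_finexc {g g' : ℝ → ℝ} {s : Set ℝ} (hs : s.Finite) :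
    ∀ a b : ℝ, ContinuousOn g (Icc a b) →
    (∀ x ∈ Ioo a b \ s, HasDerivAt g (g' x) x) →
    (∀ x ∈ Ioo a b \ s, 0 ≤ g' x) → IntegrableOn g' (Ioc a b) := by
  refine Set.Finite.induction_on s hs ?_ ?_
  · intro a b hcont hderiv hpos
    exact integrableOn_deriv_of_nonneg hcont (fun x hx => hderiv x (by simpa using hx))
      (fun x hx => hpos x (by simpa using hx))
  · intro t s' hts hs' IH a b hcont hderiv hpos
    by_cases ht : t ∈ Ioo a b
    · have h1 : IntegrableOn g' (Ioc a t) := by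
        refine IH a t (hcont.mono (Icc_subset_Icc le_rfl ht.2.le)) ?_ ?_
        · intro x hx
          exact hderiv x ⟨⟨hx.1.1, hx.1.2.trans ht.2⟩, by
            simp only [mem_insert_iff, not_or]; exact ⟨ne_of_lt hx.1.2, hx.2⟩⟩
        · intro x hx
          exact hpos x ⟨⟨hx.1.1, hx.1.2.trans ht.2⟩, by
            simp only [mem_insert_iff, not_or]; exact ⟨ne_of_lt hx.1.2, hx.2⟩⟩
      have h2 : IntegrableOn g' (Ioc t b) := by
        refine IH t b (hcont.mono (Icc_subset_Icc ht.1.le le_rfl)) ?_ ?_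
        · intro x hx
          exact hderiv x ⟨⟨ht.1.trans hx.1.1, hx.1.2⟩, by
            simp only [mem_insert_iff, not_or]; exact ⟨(ne_of_lt hx.1.1).symm, hx.2⟩⟩
        · intro x hx
          exact hpos x ⟨⟨ht.1.trans hx.1.1, hx.1.2⟩, by
            simp only [mem_insert_iff, not_or]; exact ⟨(ne_of_lt hx.1.1).symm, hx.2⟩⟩
      have : Ioc a b = Ioc a t ∪ Ioc t b := (Ioc_union_Ioc_eq_Ioc ht.1.le ht.2.le).symm
      rw [this]
      exact h1.union h2
    · refine IH a b hcont ?_ ?_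
      · intro x hx
        refine hderiv x ⟨hx.1, ?_⟩
        simp only [mem_insert_iff, not_or]
        exact ⟨fun h => ht (h ▸ hx.1), hx.2⟩
      · intro x hx
        refine hpos x ⟨hx.1, ?_⟩
        simp only [mem_insert_iff, not_or]
        exact ⟨fun h => ht (h ▸ hx.1), hx.2⟩

noncomputable def Fz (c : ℝ × ℝ → ℝ × ℝ) (q1 : ℝ) (z : ℝ × ℝ) : ℝ :=
  ∫ s in z.1..q1, (c (s, z.2)).1

noncomputable def Pd (c : ℝ × ℝ → ℝ × ℝ) (z : ℝ × ℝ) : ℝ := ((fderiv ℝ c z) (0, 1)).1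
noncomputable def Qd (c : ℝ × ℝ → ℝ × ℝ) (z : ℝ × ℝ) : ℝ := ((fderiv ℝ c z) (1, 0)).2

section Partials
variable {c : ℝ × ℝ → ℝ × ℝ}


lemma hasDerivAt_c1_y (hc : ContDiff ℝ 1 c) (x y : ℝ) :
    HasDerivAt (fun y' => (c (x, y')).1) (Pd c (x, y)) y := by
  have h1 : HasFDerivAt c (fderiv ℝ c (x, y)) (x, y) :=
    (hc.differentiable one_ne_zero (x, y)).hasFDerivAt
  have h2 : HasDerivAt (fun y' : ℝ => ((x : ℝ), y')) ((0 : ℝ), (1 : ℝ)) y :=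
    (hasDerivAt_const y x).prodMk (hasDerivAt_id y)
  have h3 := h1.comp_hasDerivAt y h2
  have h4 := (ContinuousLinearMap.fst ℝ ℝ ℝ).hasFDerivAt.comp_hasDerivAt y h3
  simpa [Pd, Function.comp_def] using h4

lemma hasDerivAt_c2_x (hc : ContDiff ℝ 1 c) (x y : ℝ) :
    HasDerivAt (fun x' => (c (x', y)).2) (Qd c (x, y)) x := by
  have h1 : HasFDerivAt c (fderiv ℝ c (x, y)) (x, y) :=
    (hc.differentiable one_ne_zero (x, y)).hasFDerivAt
  have h2 : HasDerivAt (fun x' : ℝ => (x', (y : ℝ))) ((1 : ℝ), (0 : ℝ)) x :=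
    (hasDerivAt_id x).prodMk (hasDerivAt_const x y)
  have h3 := h1.comp_hasDerivAt x h2
  have h4 := (ContinuousLinearMap.snd ℝ ℝ ℝ).hasFDerivAt.comp_hasDerivAt x h3
  simpa [Qd, Function.comp_def] using h4

lemma continuous_Pd (hc : ContDiff ℝ 1 c) : Continuous (Pd c) := by
  have h1 : Continuous (fderiv ℝ c) := hc.continuous_fderiv one_ne_zero
  have h2 : Continuous fun z => (fderiv ℝ c z) ((0 : ℝ), (1 : ℝ)) :=
    isBoundedBilinearMap_apply.continuous.comp (h1.prodMk continuous_const)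
  exact continuous_fst.comp h2

lemma continuous_Qd (hc : ContDiff ℝ 1 c) : Continuous (Qd c) := by
  have h1 : Continuous (fderiv ℝ c) := hc.continuous_fderiv one_ne_zero
  have h2 : Continuous fun z => (fderiv ℝ c z) ((1 : ℝ), (0 : ℝ)) :=
    isBoundedBilinearMap_apply.continuous.comp (h1.prodMk continuous_const)
  exact continuous_snd.comp h2

lemma Ucurl_eq_s6 (hc : ContDiff ℝ 1 c) (z : ℝ × ℝ) : Ucurl c z = Pd c z - Qd c z := by
  have h1 := (hasDerivAt_c1_y hc z.1 z.2).deriv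
  have h2 := (hasDerivAt_c2_x hc z.1 z.2).deriv
  simp only [Ucurl, h1, h2]

lemma continuous_Ucurl (hc : ContDiff ℝ 1 c) : Continuous (Ucurl c) := by
  have : Ucurl c = fun z => Pd c z - Qd c z := funext fun z => Ucurl_eq_s6 hc z
  rw [this]
  exact (continuous_Pd hc).sub (continuous_Qd hc)

end Partials

section FzLemmas
variable {c : ℝ × ℝ → ℝ × ℝ}

lemma Fz_eq_param (hc : ContDiff ℝ 1 c) (q1 : ℝ) (z : ℝ × ℝ) :
    Fz c q1 z = ∫ u in (0:ℝ)..1, (q1 - z.1) * (c (z.1 + u * (q1 - z.1), z.2)).1 := by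
  have hg : Continuous fun s => (c (s, z.2)).1 :=
    continuous_fst.comp (hc.continuous.comp (continuous_id.prodMk continuous_const))
  have h := integral_comp_smul_deriv (f := fun u : ℝ => z.1 + u * (q1 - z.1))
    (f' := fun _ : ℝ => q1 - z.1) (g := fun s => (c (s, z.2)).1) (a := 0) (b := 1)
    (fun u _ => (hasDerivAt_mul_const (q1 - z.1)).const_add z.1)
    continuousOn_const hg
  simp only [Function.comp, smul_eq_mul, zero_mul, add_zero, one_mul] at h
  have e : z.1 + (q1 - z.1) = q1 := by ring
  rw [e] at h
  rw [Fz, ← h]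

section FDeriv
variable (q1 : ℝ)

noncomputable def fst1 : ℝ × ℝ →L[ℝ] ℝ := ContinuousLinearMap.fst ℝ ℝ ℝ
noncomputable def inlfst : ℝ × ℝ →L[ℝ] ℝ × ℝ :=
  (ContinuousLinearMap.inl ℝ ℝ ℝ).comp (ContinuousLinearMap.fst ℝ ℝ ℝ)
noncomputable def Au (u : ℝ) : ℝ × ℝ →L[ℝ] ℝ × ℝ :=
  ContinuousLinearMap.id ℝ (ℝ × ℝ) - u • inlfst

noncomputable def hmap (q1 : ℝ) (z : ℝ × ℝ) (u : ℝ) : ℝ × ℝ := (z.1 + u * (q1 - z.1), z.2)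

lemma hasFDerivAt_hmap (u : ℝ) (z : ℝ × ℝ) :
    HasFDerivAt (fun z => hmap q1 z u) (Au u) z := by
  have h : HasFDerivAt (fun z : ℝ × ℝ => z - u • (inlfst z - ((q1 : ℝ), (0 : ℝ))))
      (ContinuousLinearMap.id ℝ (ℝ × ℝ) - u • inlfst) z :=
    (hasFDerivAt_id z).sub ((inlfst.hasFDerivAt.sub_const _).const_smul u)
  have e : (fun z : ℝ × ℝ => z - u • (inlfst z - ((q1 : ℝ), (0 : ℝ))))
      = fun z => hmap q1 z u := by
    funext w
    simp only [hmap, inlfst, ContinuousLinearMap.comp_apply, ContinuousLinearMap.inl_apply,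
      ContinuousLinearMap.coe_fst', Prod.smul_mk, Prod.mk_sub_mk, smul_eq_mul]
    ext <;> simp <;> ring
  rw [e] at h
  exact h

noncomputable def Fp (c : ℝ × ℝ → ℝ × ℝ) (q1 : ℝ) (z : ℝ × ℝ) (u : ℝ) : ℝ :=
  (q1 - z.1) * (c (hmap q1 z u)).1

noncomputable def Fp' (c : ℝ × ℝ → ℝ × ℝ) (q1 : ℝ) (z : ℝ × ℝ) (u : ℝ) : ℝ × ℝ →L[ℝ] ℝ :=
  (q1 - z.1) • (fst1.comp ((fderiv ℝ c (hmap q1 z u)).comp (Au u))) +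
    (c (hmap q1 z u)).1 • (-fst1)

lemma hasFDerivAt_Fp (hc : ContDiff ℝ 1 c) (u : ℝ) (z : ℝ × ℝ) :
    HasFDerivAt (fun z => Fp c q1 z u) (Fp' c q1 z u) z := by
  have hb : HasFDerivAt (fun z : ℝ × ℝ => q1 - z.1) (-fst1) z := by
    have h0 := (hasFDerivAt_const q1 z).sub fst1.hasFDerivAt
    rw [zero_sub] at h0
    exact h0
  have ha : HasFDerivAt (fun z : ℝ × ℝ => (c (hmap q1 z u)).1)
      (fst1.comp ((fderiv ℝ c (hmap q1 z u)).comp (Au u))) z := by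
    have h1 : HasFDerivAt c (fderiv ℝ c (hmap q1 z u)) (hmap q1 z u) :=
      (hc.differentiable one_ne_zero _).hasFDerivAt
    exact fst1.hasFDerivAt.comp z (h1.comp z (hasFDerivAt_hmap q1 u z))
  exact hb.mul ha

lemma norm_Au_apply_le (u : ℝ) (hu : u ∈ Icc (0:ℝ) 1) (w : ℝ × ℝ) : ‖Au u w‖ ≤ ‖w‖ := by
  have e : Au u w = (w.1 - u * w.1, w.2) := by
    simp [Au, inlfst, Prod.ext_iff]
  rw [e, Prod.norm_def, Prod.norm_def]
  simp only [Real.norm_eq_abs]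
  have h1 : |w.1 - u * w.1| ≤ |w.1| := by
    have e2 : w.1 - u * w.1 = (1 - u) * w.1 := by ring
    rw [e2, abs_mul, abs_of_nonneg (by linarith [hu.2] : (0:ℝ) ≤ 1 - u)]
    nlinarith [abs_nonneg w.1, hu.1]
  exact max_le_max h1 le_rfl

lemma Fz_hasFDerivAt (hc : ContDiff ℝ 1 c) (z₀ : ℝ × ℝ) :
    ∃ L : ℝ × ℝ →L[ℝ] ℝ, HasFDerivAt (Fz c q1) L z₀ := by
  -- bounds on the compact ball
  set B : ℝ := ‖z₀‖ + 1 + |q1| with hB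
  have hBz : ∀ z : ℝ × ℝ, z ∈ ball z₀ 1 → ∀ u ∈ Icc (0:ℝ) 1, ‖hmap q1 z u‖ ≤ B := by
    intro z hz u hu
    have hz' : ‖z‖ ≤ ‖z₀‖ + 1 := by
      have := norm_sub_norm_le z z₀
      have h2 := mem_ball_iff_norm.1 hz
      linarith
    have h1 : |z.1| ≤ ‖z‖ := by simpa using norm_fst_le z
    have h2 : |z.2| ≤ ‖z‖ := by simpa using norm_snd_le z
    rw [hmap, Prod.norm_def]
    simp only [Real.norm_eq_abs]
    refine max_le ?_ (by linarith [abs_nonneg q1])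
    have : z.1 + u * (q1 - z.1) = (1 - u) * z.1 + u * q1 := by ring
    rw [this]
    calc |(1 - u) * z.1 + u * q1| ≤ |(1-u) * z.1| + |u * q1| := abs_add_le _ _
      _ = (1-u) * |z.1| + u * |q1| := by
          rw [abs_mul, abs_mul, abs_of_nonneg (by linarith [hu.2] : (0:ℝ) ≤ 1 - u),
            abs_of_nonneg hu.1]
      _ ≤ B := by nlinarith [abs_nonneg z.1, abs_nonneg q1, hu.1, hu.2, h1, hz']
  obtain ⟨C1, hC1⟩ := (isCompact_closedBall (0 : ℝ × ℝ) B).exists_bound_of_continuousOn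
    ((hc.continuous_fderiv one_ne_zero).continuousOn)
  obtain ⟨C0, hC0⟩ := (isCompact_closedBall (0 : ℝ × ℝ) B).exists_bound_of_continuousOn
    hc.continuous.continuousOn
  set C1' : ℝ := max C1 0
  set C0' : ℝ := max C0 0
  set K : ℝ := (|q1| + ‖z₀‖ + 1) * C1' + C0'
  have hK0 : (0:ℝ) ≤ K := by
    have h0 : (0:ℝ) ≤ C1' := le_max_right C1 0
    have h0' : (0:ℝ) ≤ C0' := le_max_right C0 0
    have : (0:ℝ) ≤ |q1| + ‖z₀‖ + 1 := by positivity
    simp only [K]; nlinarith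
  have hbound : ∀ u ∈ Icc (0:ℝ) 1, ∀ z ∈ ball z₀ 1, ‖Fp' c q1 z u‖ ≤ K := by
    intro u hu z hz
    have hmem : hmap q1 z u ∈ closedBall (0 : ℝ × ℝ) B := by
      rw [mem_closedBall_zero_iff]; exact hBz z hz u hu
    have hf : ‖fderiv ℝ c (hmap q1 z u)‖ ≤ C1' := le_trans (hC1 _ hmem) (le_max_left _ _)
    have hc0 : |(c (hmap q1 z u)).1| ≤ C0' := by
      have h := (norm_fst_le (c (hmap q1 z u))).trans ((hC0 _ hmem).trans (le_max_left C0 (0:ℝ)))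
      exact h
    have hq : |q1 - z.1| ≤ |q1| + ‖z₀‖ + 1 := by
      have hz' : ‖z‖ ≤ ‖z₀‖ + 1 := by
        have := norm_sub_norm_le z z₀
        have h2 := mem_ball_iff_norm.1 hz
        linarith
      have h1 : |z.1| ≤ ‖z‖ := by simpa using norm_fst_le z
      calc |q1 - z.1| ≤ |q1| + |z.1| := abs_sub _ _
        _ ≤ |q1| + ‖z₀‖ + 1 := by linarith
    refine ContinuousLinearMap.opNorm_le_bound _ hK0 fun w => ?_
    have e : Fp' c q1 z u w =
        (q1 - z.1) * ((fderiv ℝ c (hmap q1 z u)) (Au u w)).1 + (c (hmap q1 z u)).1 * (-w.1) := by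
      simp [Fp', fst1, smul_eq_mul]
    rw [e]
    have hTw : |((fderiv ℝ c (hmap q1 z u)) (Au u w)).1| ≤ C1' * ‖w‖ := by
      have h1 : |((fderiv ℝ c (hmap q1 z u)) (Au u w)).1| ≤ ‖(fderiv ℝ c (hmap q1 z u)) (Au u w)‖ :=
        by simpa using norm_fst_le ((fderiv ℝ c (hmap q1 z u)) (Au u w))
      have h2 := (fderiv ℝ c (hmap q1 z u)).le_opNorm (Au u w)
      have h3 := norm_Au_apply_le u hu w
      have h4 := norm_nonneg (Au u w)
      have h5 := norm_nonneg w
      have h0 : (0:ℝ) ≤ C1' := le_max_right C1 0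
      nlinarith
    have hw1 : |w.1| ≤ ‖w‖ := by simpa using norm_fst_le w
    have h0' : (0:ℝ) ≤ C0' := le_max_right C0 0
    have h5 := norm_nonneg w
    calc |(q1 - z.1) * ((fderiv ℝ c (hmap q1 z u)) (Au u w)).1 + (c (hmap q1 z u)).1 * (-w.1)|
        ≤ |(q1 - z.1) * ((fderiv ℝ c (hmap q1 z u)) (Au u w)).1| + |(c (hmap q1 z u)).1 * (-w.1)| :=
          abs_add_le _ _
      _ ≤ |q1 - z.1| * (C1' * ‖w‖) + C0' * ‖w‖ := by
          rw [abs_mul, abs_mul, abs_neg]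
          have := abs_nonneg (q1 - z.1)
          have := abs_nonneg (c (hmap q1 z u)).1
          have := abs_nonneg ((fderiv ℝ c (hmap q1 z u)) (Au u w)).1
          nlinarith [hTw, hc0, hw1]
      _ ≤ K * ‖w‖ := by
          simp only [K]
          have h0 : (0:ℝ) ≤ C1' := le_max_right C1 0
          nlinarith [hq, abs_nonneg (q1 - z.1),
            mul_nonneg (mul_nonneg (sub_nonneg.2 hq) h0) h5]
  -- continuity in u
  have hcont_u : ∀ z : ℝ × ℝ, Continuous fun u => Fp c q1 z u := by
    intro z
    apply continuous_const.mul
    exact continuous_fst.comp (hc.continuous.comp (by unfold hmap; fun_prop))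
  have hcontAu : Continuous fun u : ℝ => Au u := by
    exact continuous_const.sub (continuous_id.smul continuous_const)
  have hcontF' : Continuous fun u => Fp' c q1 z₀ u := by
    apply Continuous.add
    · apply Continuous.smul (f := fun _ => q1 - z₀.1)
        (g := fun u => fst1.comp ((fderiv ℝ c (hmap q1 z₀ u)).comp (Au u))) continuous_const
      apply Continuous.clm_comp continuous_const
      apply Continuous.clm_comp _ hcontAu
      exact (hc.continuous_fderiv one_ne_zero).comp (by unfold hmap; fun_prop)
    · apply Continuous.smul (f := fun u => (c (hmap q1 z₀ u)).1) (g := fun _ => -fst1) _ continuous_const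
      exact continuous_fst.comp (hc.continuous.comp (by unfold hmap; fun_prop))
  have key := intervalIntegral.hasFDerivAt_integral_of_dominated_of_fderiv_le
    (F := fun z u => Fp c q1 z u) (F' := fun z u => Fp' c q1 z u) (x₀ := z₀)
    (a := 0) (b := 1) (μ := volume) (bound := fun _ => K) (s := ball z₀ 1) (ball_mem_nhds z₀ zero_lt_one)
    (Filter.Eventually.of_forall fun z => (hcont_u z).aestronglyMeasurable)
    ((hcont_u z₀).intervalIntegrable 0 1)
    hcontF'.aestronglyMeasurable
    (Filter.Eventually.of_forall fun u hu z hz =>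
      hbound u (Ioc_subset_Icc_self (by rwa [uIoc_of_le zero_le_one] at hu)) z hz)
    (intervalIntegrable_const)
    (Filter.Eventually.of_forall fun u _ z _ => hasFDerivAt_Fp q1 hc u z)
  have e : Fz c q1 = fun z => ∫ u in (0:ℝ)..1, Fp c q1 z u := by
    funext z; exact Fz_eq_param hc q1 z
  exact ⟨∫ u in (0:ℝ)..1, Fp' c q1 z₀ u, by rw [e]; exact key⟩
end FDeriv


variable {q1 : ℝ}

lemma cont_c1_line (hc : ContDiff ℝ 1 c) (y : ℝ) : Continuous fun s => (c (s, y)).1 :=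
  continuous_fst.comp (hc.continuous.comp (continuous_id.prodMk continuous_const))

lemma Fz_deriv_x (hc : ContDiff ℝ 1 c) (x y : ℝ) :
    HasDerivAt (fun x' => Fz c q1 (x', y)) (-(c (x, y)).1) x := by
  have hg : Continuous fun s => (c (s, y)).1 := cont_c1_line hc y
  exact integral_hasDerivAt_left (hg.intervalIntegrable x q1)
    (hg.stronglyMeasurableAtFilter volume (nhds x)) hg.continuousAt


lemma Fz_deriv_y (hc : ContDiff ℝ 1 c) (x y₀ : ℝ) :
    HasDerivAt (fun y => Fz c q1 (x, y)) (∫ s in x..q1, Pd c (s, y₀)) y₀ := by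
  set Kc : Set (ℝ × ℝ) := uIcc x q1 ×ˢ Icc (y₀ - 1) (y₀ + 1) with hKc
  have hKcomp : IsCompact Kc := isCompact_uIcc.prod isCompact_Icc
  obtain ⟨C, hC⟩ := hKcomp.exists_bound_of_continuousOn (continuous_Pd hc).continuousOn
  have key := intervalIntegral.hasDerivAt_integral_of_dominated_loc_of_deriv_le
    (F := fun y s => (c (s, y)).1) (F' := fun y s => Pd c (s, y)) (x₀ := y₀)
    (a := x) (b := q1) (μ := volume) (bound := fun _ => C) (s := ball y₀ 1) (ball_mem_nhds y₀ zero_lt_one)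
    (Filter.Eventually.of_forall fun y => ((cont_c1_line hc y).aestronglyMeasurable).restrict)
    ((cont_c1_line hc y₀).intervalIntegrable x q1)
    (((continuous_Pd hc).comp (continuous_id.prodMk continuous_const)).aestronglyMeasurable).restrict
    (Filter.Eventually.of_forall fun s hs y hy => by
      have hb := mem_ball_iff_norm.1 hy
      simp only [Real.norm_eq_abs] at hb
      have h := abs_lt.1 hb
      have h2 : y ∈ Icc (y₀ - 1) (y₀ + 1) := ⟨by linarith [h.1], by linarith [h.2]⟩
      have hmem : ((s : ℝ), y) ∈ Kc := ⟨uIoc_subset_uIcc hs, h2⟩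
      simpa using hC _ hmem)
    intervalIntegrable_const
    (Filter.Eventually.of_forall fun s _ y _ => hasDerivAt_c1_y hc s y)
  exact key.2

section Comp
variable {c : ℝ × ℝ → ℝ × ℝ} {q1 : ℝ}
lemma Fz_comp_hasDerivAt (hc : ContDiff ℝ 1 c) (q1 : ℝ) {γp : ℝ → ℝ × ℝ} {v : ℝ × ℝ} {t : ℝ}
    (hγ : HasDerivAt γp v t) :
    HasDerivAt (fun u => Fz c q1 (γp u))
      (v.1 * (-(c (γp t)).1) + v.2 * (∫ s in (γp t).1..q1, Pd c (s, (γp t).2))) t := by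
  obtain ⟨L, hL⟩ := Fz_hasFDerivAt q1 hc (γp t)
  have hcomp : HasDerivAt (fun u => Fz c q1 (γp u)) (L v) t := by
    simpa [Function.comp_def] using hL.comp_hasDerivAt t hγ
  have hL' : HasFDerivAt (Fz c q1) L ((γp t).1, (γp t).2) := by
    rw [Prod.mk.eta]; exact hL
  have h10 : L ((1:ℝ), (0:ℝ)) = -(c (γp t)).1 := by
    have l1 : HasDerivAt (fun x : ℝ => ((x : ℝ), (γp t).2)) ((1:ℝ), (0:ℝ)) (γp t).1 :=
      (hasDerivAt_id _).prodMk (hasDerivAt_const _ _)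
    have h := hL'.comp_hasDerivAt (γp t).1 l1
    simp only [Function.comp_def] at h
    have h2 := Fz_deriv_x (q1 := q1) hc (γp t).1 (γp t).2
    rw [Prod.mk.eta] at h2
    exact h.unique h2
  have h01 : L ((0:ℝ), (1:ℝ)) = ∫ s in (γp t).1..q1, Pd c (s, (γp t).2) := by
    have l1 : HasDerivAt (fun y : ℝ => ((γp t).1, (y : ℝ))) ((0:ℝ), (1:ℝ)) (γp t).2 :=
      (hasDerivAt_const _ _).prodMk (hasDerivAt_id _)
    have h := hL'.comp_hasDerivAt (γp t).2 l1
    simp only [Function.comp_def] at h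
    exact h.unique (Fz_deriv_y hc (γp t).1 (γp t).2)
  have hv : L v = v.1 * L ((1:ℝ), (0:ℝ)) + v.2 * L ((0:ℝ), (1:ℝ)) := by
    have e : v = v.1 • ((1:ℝ), (0:ℝ)) + v.2 • ((0:ℝ), (1:ℝ)) := by
      ext <;> simp
    conv_lhs => rw [e]
    rw [map_add, _root_.map_smul, _root_.map_smul]
    simp [smul_eq_mul]
  rw [hv, h10, h01] at hcomp
  exact hcomp

lemma integral_Pd (hc : ContDiff ℝ 1 c) (q1 x y : ℝ) :
    ∫ s in x..q1, Pd c (s, y) =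
      (∫ s in x..q1, Ucurl c (s, y)) + ((c (q1, y)).2 - (c (x, y)).2) := by
  have hQint : ∫ s in x..q1, Qd c (s, y) = (c (q1, y)).2 - (c (x, y)).2 := by
    refine integral_eq_sub_of_hasDerivAt (fun s _ => hasDerivAt_c2_x hc s y) ?_
    exact ((continuous_Qd hc).comp (continuous_id.prodMk continuous_const)).intervalIntegrable x q1
  have hUcont : Continuous fun s => Ucurl c (s, y) :=
    (continuous_Ucurl hc).comp (continuous_id.prodMk continuous_const)
  have hQcont : Continuous fun s => Qd c ((s : ℝ), y) :=
    (continuous_Qd hc).comp (continuous_id.prodMk continuous_const)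
  have he : ∀ s : ℝ, Pd c (s, y) = Ucurl c (s, y) + Qd c (s, y) := fun s => by
    rw [Ucurl_eq_s6 hc]; ring
  calc ∫ s in x..q1, Pd c (s, y) = ∫ s in x..q1, (Ucurl c (s, y) + Qd c (s, y)) := by
        simp_rw [he]
    _ = (∫ s in x..q1, Ucurl c (s, y)) + ∫ s in x..q1, Qd c (s, y) :=
        integral_add (hUcont.intervalIntegrable x q1) (hQcont.intervalIntegrable x q1)
    _ = (∫ s in x..q1, Ucurl c (s, y)) + ((c (q1, y)).2 - (c (x, y)).2) := by rw [hQint]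

end Comp
end FzLemmas
end Aux

/-- point-to-boundary optimal path, horizontal case. -/
theorem horizontal_to_boundary_optimal (p1 q1 p2 q2 : ℝ) (hp1 : p1 ≤ q1) (hp2 : p2 ≤ q2)
    (c : ℝ × ℝ → ℝ × ℝ) (hc : ContDiff ℝ 1 c)
    (x0 : ℝ × ℝ) (hx0 : x0 ∈ Icc p1 q1 ×ˢ Icc p2 q2)
    (hU : ∀ᵐ q ∂(volume.restrict (Icc p1 q1 ×ˢ Icc p2 q2)), 0 < Ucurl c q)
    (hΓ1 : ∀ x ∈ Icc p1 q1, (c (x, q2)).1 ≤ 0)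
    (hΓ2 : ∀ y ∈ Icc p2 q2, 0 ≤ (c (q1, y)).2)
    (γ : MonoPath) (hst : γ.p 0 = x0)
    (hend : γ.p 1 ∈ {z : ℝ × ℝ | z.2 = q2 ∧ p1 ≤ z.1 ∧ z.1 ≤ q1} ∪
                    {z : ℝ × ℝ | z.1 = q1 ∧ p2 ≤ z.2 ∧ z.2 ≤ q2})
    (him : ∀ t ∈ Icc (0:ℝ) 1, γ.p t ∈ Icc p1 q1 ×ˢ Icc p2 q2) :
    (∫ t in x0.1..q1, (c (t, x0.2)).1) ≤ pathCost c γ := by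
  -- U is nonnegative on the rectangle (nondegenerate case)
  have hU0 : p1 < q1 → p2 < q2 → ∀ z ∈ Icc p1 q1 ×ˢ Icc p2 q2, 0 ≤ Ucurl c z := by
    intro h1 h2 z hz
    by_contra hneg
    push_neg at hneg
    have hopen : IsOpen {w : ℝ × ℝ | Ucurl c w < 0} :=
      isOpen_lt (continuous_Ucurl hc) continuous_const
    obtain ⟨δ, hδpos, hδ⟩ := Metric.isOpen_iff.1 hopen z hneg
    set a1 := max p1 (z.1 - δ/2) with ha1
    set b1 := min q1 (z.1 + δ/2) with hb1
    set a2 := max p2 (z.2 - δ/2) with ha2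
    set b2 := min q2 (z.2 + δ/2) with hb2
    have hz1 := hz.1
    have hz2 := hz.2
    have hab1 : a1 < b1 :=
      max_lt (lt_min h1 (by linarith [hz1.1])) (lt_min (by linarith [hz1.2]) (by linarith))
    have hab2 : a2 < b2 :=
      max_lt (lt_min h2 (by linarith [hz2.1])) (lt_min (by linarith [hz2.2]) (by linarith))
    have hsub : Ioo a1 b1 ×ˢ Ioo a2 b2 ⊆ {w : ℝ × ℝ | Ucurl c w < 0} ∩ (Icc p1 q1 ×ˢ Icc p2 q2) := by
      intro w hw
      obtain ⟨hw1, hw2⟩ := hw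
      refine ⟨hδ ?_, ⟨⟨(le_max_left _ _).trans hw1.1.le, hw1.2.le.trans (min_le_left _ _)⟩,
        ⟨(le_max_left _ _).trans hw2.1.le, hw2.2.le.trans (min_le_left _ _)⟩⟩⟩
      rw [mem_ball_iff_norm, Prod.norm_def]
      have e1 : |w.1 - z.1| < δ := by
        rw [abs_lt]
        constructor
        · have := (le_max_right p1 (z.1 - δ/2)).trans hw1.1.le
          linarith
        · have := hw1.2.le.trans (min_le_right q1 (z.1 + δ/2))
          linarith
      have e2 : |w.2 - z.2| < δ := by
        rw [abs_lt]
        constructor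
        · have := (le_max_right p2 (z.2 - δ/2)).trans hw2.1.le
          linarith
        · have := hw2.2.le.trans (min_le_right q2 (z.2 + δ/2))
          linarith
      exact max_lt (by simpa using e1) (by simpa using e2)
    have hnull : volume ({w : ℝ × ℝ | Ucurl c w < 0} ∩ (Icc p1 q1 ×ˢ Icc p2 q2)) = 0 := by
      have hmeas : MeasurableSet {w : ℝ × ℝ | Ucurl c w < 0} := hopen.measurableSet
      have h := ae_iff.1 hU
      rw [Measure.restrict_apply₀'] at h
      · refine le_antisymm (le_trans (measure_mono ?_) h.le) zero_le
        intro w hw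
        exact ⟨not_lt.2 hw.1.le, hw.2⟩
      · exact (measurableSet_Icc.prod measurableSet_Icc).nullMeasurableSet
    have hpos : 0 < volume (Ioo a1 b1 ×ˢ Ioo a2 b2) := by
      rw [MeasureTheory.Measure.volume_eq_prod, Measure.prod_prod, Real.volume_Ioo,
        Real.volume_Ioo]
      exact ENNReal.mul_pos (ENNReal.ofReal_pos.2 (sub_pos.2 hab1)).ne'
        (ENNReal.ofReal_pos.2 (sub_pos.2 hab2)).ne' 
    exact absurd (le_antisymm ((measure_mono hsub).trans_eq hnull) zero_le) hpos.ne'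
  -- path derivative
  have hγd : ∀ t ∈ Ioo (0:ℝ) 1 \ γ.exc, HasDerivAt γ.p (γ.d t) t := by
    intro t ht
    have h1 := γ.deriv_fst t ⟨Ioo_subset_Icc_self ht.1, ht.2⟩
    have h2 := γ.deriv_snd t ⟨Ioo_subset_Icc_self ht.1, ht.2⟩
    have h3 := h1.prodMk h2
    simpa using h3
  set g : ℝ → ℝ := fun t => -(Fz c q1 (γ.p t)) with hgdef
  set g' : ℝ → ℝ := fun t =>
    (γ.d t).1 * (c (γ.p t)).1 - (γ.d t).2 * (∫ s in (γ.p t).1..q1, Pd c (s, (γ.p t).2)) with hg'def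
  set φ : ℝ → ℝ := fun t => (c (γ.p t)).1 * (γ.d t).1 + (c (γ.p t)).2 * (γ.d t).2 with hφdef
  have hgderiv : ∀ t ∈ Ioo (0:ℝ) 1 \ γ.exc, HasDerivAt g (g' t) t := by
    intro t ht
    have h : HasDerivAt g (-((γ.d t).1 * -(c (γ.p t)).1 +
        (γ.d t).2 * ∫ s in (γ.p t).1..q1, Pd c (s, (γ.p t).2))) t :=
      (Fz_comp_hasDerivAt hc q1 (hγd t ht)).neg
    convert h using 1
    simp only [hg'def]
    ring
  have hFzcont : Continuous (Fz c q1) := by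
    refine continuous_iff_continuousAt.2 fun z => ?_
    obtain ⟨L, hL⟩ := Fz_hasFDerivAt q1 hc z
    exact hL.differentiableAt.continuousAt
  have hgcont : ContinuousOn g (Icc 0 1) := (hFzcont.comp_continuousOn γ.cont).neg
  -- integrability of the integrand
  have hd1int : IntegrableOn (fun t => (γ.d t).1) (Icc (0:ℝ) 1) := by
    rw [integrableOn_Icc_iff_integrableOn_Ioc]
    exact integrableOn_deriv_finexc γ.exc_finite 0 1
      (continuous_fst.comp_continuousOn γ.cont)
      (fun t ht => γ.deriv_fst t ⟨Ioo_subset_Icc_self ht.1, ht.2⟩)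
      (fun t ht => γ.d_fst_nonneg t (Ioo_subset_Icc_self ht.1))
  have hd2int : IntegrableOn (fun t => (γ.d t).2) (Icc (0:ℝ) 1) := by
    rw [integrableOn_Icc_iff_integrableOn_Ioc]
    exact integrableOn_deriv_finexc γ.exc_finite 0 1
      (continuous_snd.comp_continuousOn γ.cont)
      (fun t ht => γ.deriv_snd t ⟨Ioo_subset_Icc_self ht.1, ht.2⟩)
      (fun t ht => γ.d_snd_nonneg t (Ioo_subset_Icc_self ht.1))
  have hcγ : ContinuousOn (fun t => c (γ.p t)) (Icc (0:ℝ) 1) :=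
    hc.continuous.comp_continuousOn γ.cont
  obtain ⟨C, hC⟩ := isCompact_Icc.exists_bound_of_continuousOn hcγ
  have hC0 : 0 ≤ C := le_trans (norm_nonneg _) (hC 0 ⟨le_refl 0, zero_le_one⟩)
  have hφint : IntegrableOn φ (Icc (0:ℝ) 1) := by
    have hmaj : IntegrableOn (fun t => C * ((γ.d t).1 + (γ.d t).2)) (Icc (0:ℝ) 1) :=
      (hd1int.add hd2int).const_mul C
    have hmeas : AEStronglyMeasurable φ (volume.restrict (Icc (0:ℝ) 1)) := by
      have m1 : AEStronglyMeasurable (fun t => c (γ.p t)) (volume.restrict (Icc (0:ℝ) 1)) :=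
        hcγ.aestronglyMeasurable measurableSet_Icc
      exact ((continuous_fst.comp_aestronglyMeasurable m1).mul
        hd1int.aestronglyMeasurable).add
        ((continuous_snd.comp_aestronglyMeasurable m1).mul hd2int.aestronglyMeasurable)
    refine Integrable.mono hmaj hmeas ?_
    rw [ae_restrict_iff' measurableSet_Icc]
    filter_upwards with t ht
    have h1 : |(c (γ.p t)).1| ≤ C := by
      have := (norm_fst_le (c (γ.p t))).trans (hC t ht)
      simpa using this
    have h2 : |(c (γ.p t)).2| ≤ C := by
      have := (norm_snd_le (c (γ.p t))).trans (hC t ht)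
      simpa using this
    have hd1 : 0 ≤ (γ.d t).1 := γ.d_fst_nonneg t ht
    have hd2 : 0 ≤ (γ.d t).2 := γ.d_snd_nonneg t ht
    rw [Real.norm_eq_abs, Real.norm_eq_abs]
    have e1 : |(c (γ.p t)).1 * (γ.d t).1 + (c (γ.p t)).2 * (γ.d t).2|
        ≤ C * (γ.d t).1 + C * (γ.d t).2 := by
      refine (abs_add_le _ _).trans ?_
      rw [abs_mul, abs_mul, abs_of_nonneg hd1, abs_of_nonneg hd2]
      have := abs_nonneg (c (γ.p t)).1
      have := abs_nonneg (c (γ.p t)).2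
      nlinarith
    have e2 : C * (γ.d t).1 + C * (γ.d t).2 ≤ |C * ((γ.d t).1 + (γ.d t).2)| := by
      rw [abs_of_nonneg (by nlinarith)]
      ring_nf
      exact le_refl _
    calc |φ t| ≤ C * (γ.d t).1 + C * (γ.d t).2 := e1
      _ ≤ |C * ((γ.d t).1 + (γ.d t).2)| := e2
  -- pointwise inequality g' ≤ φ
  have hkey : ∀ t ∈ Ioo (0:ℝ) 1 \ γ.exc, g' t ≤ φ t := by
    intro t ht
    have hxy := him t (Ioo_subset_Icc_self ht.1)
    set x := (γ.p t).1 with hx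
    set y := (γ.p t).2 with hy
    have hiP : ∫ s in x..q1, Pd c (s, y) =
        (∫ s in x..q1, Ucurl c (s, y)) + ((c (q1, y)).2 - (c (x, y)).2) := integral_Pd hc q1 x y
    have hcxy : c (x, y) = c (γ.p t) := by rw [hx, hy, Prod.mk.eta]
    have hbracket : 0 ≤ (γ.d t).2 * ((c (γ.p t)).2 + ∫ s in x..q1, Pd c (s, y)) := by
      by_cases hq : p2 = q2
      · -- vertical degenerate: d₂ = 0
        have hd2 : (γ.d t).2 = 0 := by
          have hnhds : Icc (0:ℝ) 1 ∈ nhds t := Icc_mem_nhds ht.1.1 ht.1.2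
          have hconst : (fun u => (γ.p u).2) =ᶠ[nhds t] fun _ => q2 := by
            filter_upwards [hnhds] with u hu
            have h2 := (him u hu).2
            rw [← hq] at h2 ⊢
            exact le_antisymm (by exact_mod_cast h2.2) (by rw [hq] at h2 ⊢; exact hq ▸ h2.1)
          have h0 : HasDerivAt (fun u => (γ.p u).2) 0 t :=
            (hasDerivAt_const t q2).congr_of_eventuallyEq hconst
          exact (γ.deriv_snd t ⟨Ioo_subset_Icc_self ht.1, ht.2⟩).unique h0
        rw [hd2, zero_mul]
      · have hq2 : p2 < q2 := lt_of_le_of_ne hp2 hq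
        have hbr : 0 ≤ (c (q1, y)).2 + ∫ s in x..q1, Ucurl c (s, y) := by
          have hΓ2y : 0 ≤ (c (q1, y)).2 := hΓ2 y hxy.2
          have hIU : 0 ≤ ∫ s in x..q1, Ucurl c (s, y) := by
            by_cases hp : p1 = q1
            · have : x = q1 := le_antisymm hxy.1.2 (hp ▸ hxy.1.1)
              rw [this, integral_same]
            · have hq1' : p1 < q1 := lt_of_le_of_ne hp1 hp
              refine intervalIntegral.integral_nonneg hxy.1.2 fun u hu => ?_
              exact hU0 hq1' hq2 (u, y) ⟨⟨hxy.1.1.trans hu.1, hu.2⟩, hxy.2⟩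
          linarith
        have e : (c (γ.p t)).2 + ∫ s in x..q1, Pd c (s, y) =
            (c (q1, y)).2 + ∫ s in x..q1, Ucurl c (s, y) := by
          rw [hiP, ← hcxy]
          ring
        rw [e]
        exact mul_nonneg (γ.d_snd_nonneg t (Ioo_subset_Icc_self ht.1)) hbr
    simp only [hg'def, hφdef]
    nlinarith [hbracket]
  -- apply the FTC inequality
  have hmain := sub_le_integral_finexc γ.exc_finite 0 1 zero_le_one hgcont hgderiv hφint hkey
  have hpc : pathCost c γ = ∫ t in (0:ℝ)..1, φ t := rfl
  have hg1 : Fz c q1 (γ.p 1) ≤ 0 := by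
    rcases hend with h | h
    · have e : Fz c q1 (γ.p 1) = ∫ s in (γ.p 1).1..q1, (c (s, q2)).1 := by
        rw [Fz, h.1]
      rw [e, ← neg_nonneg, ← intervalIntegral.integral_neg]
      refine intervalIntegral.integral_nonneg h.2.2 fun u hu => ?_
      have := hΓ1 u ⟨h.2.1.trans hu.1, hu.2⟩
      linarith
    · rw [Fz, h.1, integral_same]
  have hg0 : g 0 = -(Fz c q1 x0) := by rw [hgdef]; simp [hst]
  have hgoal : Fz c q1 x0 = ∫ t in x0.1..q1, (c (t, x0.2)).1 := rfl
  have : g 1 - g 0 = Fz c q1 x0 - Fz c q1 (γ.p 1) := by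
    simp only [hgdef, hg0]
    ring_nf
    rw [hst]
  rw [← hgoal, hpc]
  linarith [hmain, hg1, this ▸ hmain]
end
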